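/- arXiv:1609.07401 — 4 statements merged into one kernel-verified Lean document; each statement's English description precedes it below -/
import Mathlib

section
/- There exists a constant C, depending only on n, ρ, c₁, c₂, with the following property. Let f ∈ L²(μ) be supported in the ball B(o,R). If either R ≤ 1 and ∫_X f dμ = 0, or R ≥ 1, then ∥f∥_{h¹} ≤ C · μ(B(o,R))^{1/2} ∥f∥_{L²(μ)} (in particular the infimum defining ∥f∥_{h¹} is finite, i.e. f admits an atomic decomposition). -/
open Metric MeasureTheory Filter ENNReal

variable {X : Type*} [MetricSpace X] [MeasurableSpace X]

/-- A function in `L²(μ)` supported in the closed ball of centre `c` and radius `r`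
with `‖a‖_{L²} ≤ μ(B(c,r))^{-1/2}`. -/
def IsAtomOfBall (μ : Measure X) (c : X) (r : ℝ) (a : X → ℝ) : Prop :=
  MemLp a 2 μ ∧ Function.support a ⊆ closedBall c r ∧
    eLpNorm a 2 μ ≤ μ (closedBall c r) ^ (-(1 / 2 : ℝ))

/-- A standard `h¹`-atom: supported in a ball of radius at most 1, with the size
condition and vanishing integral. -/
def IsStandardAtom (μ : Measure X) (a : X → ℝ) : Prop :=
  ∃ (c : X) (r : ℝ), 0 < r ∧ r ≤ 1 ∧ IsAtomOfBall μ c r a ∧ ∫ x, a x ∂μ = 0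

/-- A global `h¹`-atom: supported in a ball of radius 1, with the size condition. -/
def IsGlobalAtom (μ : Measure X) (a : X → ℝ) : Prop :=
  ∃ c : X, IsAtomOfBall μ c 1 a

/-- Admissible atoms are the standard and global `h¹`-atoms. -/
def IsAdmissibleAtom (μ : Measure X) (a : X → ℝ) : Prop :=
  IsStandardAtom μ a ∨ IsGlobalAtom μ a

/-- The local Hardy norm `‖f‖_{h¹}`: the infimum (in `ℝ≥0∞`, hence `∞` if no
decomposition exists) of `Σ_j |c_j|` over all decompositions `f = Σ_j c_j a_j`
converging in `L¹(μ)`, with `a_j` admissible atoms and `Σ_j |c_j| < ∞`. -/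
noncomputable def h1Norm (μ : Measure X) (f : X → ℝ) : ℝ≥0∞ :=
  ⨅ (c : ℕ → ℝ) (a : ℕ → X → ℝ) (_ : ∀ j, IsAdmissibleAtom μ (a j))
    (_ : Summable fun j => |c j|)
    (_ : Tendsto (fun N => eLpNorm (fun x => f x - ∑ j ∈ Finset.range N, c j * a j x) 1 μ)
      atTop (nhds 0)),
    ENNReal.ofReal (∑' j, |c j|)

lemma zero_isAtomOfBall (μ : Measure X) (c : X) (r : ℝ) :
    IsAtomOfBall μ c r (fun _ => (0:ℝ)) := by
  refine ⟨MemLp.zero', ?_, ?_⟩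
  · simp [Function.support]
  · simp [eLpNorm_zero']

lemma zero_admissible (μ : Measure X) (o : X) : IsAdmissibleAtom μ (fun _ => (0:ℝ)) :=
  Or.inr ⟨o, zero_isAtomOfBall μ o 1⟩

lemma h1Norm_le_finite (μ : Measure X) (f : X → ℝ) (M : ℕ) (c : ℕ → ℝ) (a : ℕ → X → ℝ)
    (hatom : ∀ j, IsAdmissibleAtom μ (a j)) (hc : ∀ j, M ≤ j → c j = 0)
    (hf : f =ᶠ[ae μ] fun x => ∑ j ∈ Finset.range M, c j * a j x) :
    h1Norm μ f ≤ ENNReal.ofReal (∑ j ∈ Finset.range M, |c j|) := by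
  have hz : ∀ j ∉ Finset.range M, |c j| = 0 := by
    intro j hj
    rw [Finset.mem_range, not_lt] at hj
    simp [hc j hj]
  have hsum : Summable fun j => |c j| := summable_of_ne_finset_zero hz
  have htend : Tendsto
      (fun N => eLpNorm (fun x => f x - ∑ j ∈ Finset.range N, c j * a j x) 1 μ)
      atTop (nhds 0) := by
    have hkey : ∀ N, M ≤ N →
        eLpNorm (fun x => f x - ∑ j ∈ Finset.range N, c j * a j x) 1 μ = 0 := by
      intro N hN
      have h1 : ∀ x, ∑ j ∈ Finset.range N, c j * a j x = ∑ j ∈ Finset.range M, c j * a j x := by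
        intro x
        refine (Finset.sum_subset (Finset.range_subset_range.2 hN) ?_).symm
        intro j _ hj
        rw [Finset.mem_range, not_lt] at hj
        simp [hc j hj]
      have h2 : (fun x => f x - ∑ j ∈ Finset.range N, c j * a j x) =ᶠ[ae μ] (fun _ => 0) := by
        filter_upwards [hf] with x hx
        simp [h1 x, hx]
      rw [eLpNorm_congr_ae h2, eLpNorm_zero']
    refine Tendsto.congr' ?_ tendsto_const_nhds
    filter_upwards [eventually_ge_atTop M] with N hN
    exact (hkey N hN).symm
  refine le_trans (iInf_le_of_le c (iInf_le_of_le a (iInf_le_of_le hatom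
    (iInf_le_of_le hsum (iInf_le_of_le htend le_rfl))))) ?_
  rw [tsum_eq_sum hz]

lemma exists_atom_scaling (μ : Measure X) (c0 : X) (r : ℝ) (g : X → ℝ)
    (hμ0 : μ (closedBall c0 r) ≠ 0) (hμt : μ (closedBall c0 r) ≠ ⊤)
    (hg : MemLp g 2 μ) (hsupp : Function.support g ⊆ closedBall c0 r) :
    ∃ (l : ℝ) (a : X → ℝ), 0 ≤ l ∧ IsAtomOfBall μ c0 r a ∧
      (∫ x, g x ∂μ = 0 → ∫ x, a x ∂μ = 0) ∧
      g =ᶠ[ae μ] (fun x => l * a x) ∧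
      ENNReal.ofReal l = μ (closedBall c0 r) ^ (1/2 : ℝ) * eLpNorm g 2 μ := by
  set ν := μ (closedBall c0 r) with hν
  set s := eLpNorm g 2 μ with hs
  have hst : s ≠ ⊤ := hg.eLpNorm_lt_top.ne
  by_cases hs0 : s = 0
  · refine ⟨0, fun _ => 0, le_rfl, zero_isAtomOfBall μ c0 r, by simp, ?_, by simp [hs0]⟩
    have : g =ᶠ[ae μ] 0 := (eLpNorm_eq_zero_iff hg.aestronglyMeasurable two_ne_zero).1 hs0
    filter_upwards [this] with x hx
    simp [hx]
  · have hν12_0 : ν ^ (1/2:ℝ) ≠ 0 := by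
      simp only [ne_eq, ENNReal.rpow_eq_zero_iff, not_or]
      constructor
      · rintro ⟨h, -⟩; exact hμ0 h
      · rintro ⟨h, -⟩; exact hμt h
    have hν12_t : ν ^ (1/2:ℝ) ≠ ⊤ := by
      simp only [ne_eq, ENNReal.rpow_eq_top_iff, not_or]
      constructor
      · rintro ⟨h, -⟩; exact hμ0 h
      · rintro ⟨h, -⟩; exact hμt h
    set L := ν ^ (1/2:ℝ) * s with hL
    have hL0 : L ≠ 0 := mul_ne_zero hν12_0 hs0
    have hLt : L ≠ ⊤ := ENNReal.mul_ne_top hν12_t hst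
    set l := L.toReal with hl
    have hlpos : 0 < l := ENNReal.toReal_pos hL0 hLt
    refine ⟨l, fun x => l⁻¹ * g x, hlpos.le, ⟨hg.const_mul l⁻¹, ?_, ?_⟩, ?_, ?_, ?_⟩
    · intro x hx
      apply hsupp
      simp only [Function.mem_support] at hx ⊢
      intro h0; exact hx (by simp [h0])
    · have heq : (fun x => l⁻¹ * g x) = l⁻¹ • g := rfl
      rw [heq, eLpNorm_const_smul]
      have h1 : (‖l⁻¹‖ₑ : ℝ≥0∞) = ENNReal.ofReal l⁻¹ :=
        Real.enorm_eq_ofReal (inv_nonneg.2 hlpos.le)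
      rw [h1, ENNReal.ofReal_inv_of_pos hlpos, ENNReal.ofReal_toReal hLt, hL,
        ENNReal.mul_inv (Or.inl hν12_0) (Or.inl hν12_t), mul_assoc,
        ENNReal.inv_mul_cancel hs0 hst, mul_one, ← ENNReal.rpow_neg]
    · intro h0
      have : (fun x => l⁻¹ * g x) = fun x => l⁻¹ • g x := rfl
      rw [this, integral_smul, h0, smul_zero]
    · refine Filter.EventuallyEq.of_eq (funext fun x => ?_)
      rw [← mul_assoc, mul_inv_cancel₀ hlpos.ne', one_mul]
    · rw [hl, ENNReal.ofReal_toReal hLt]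


lemma exists_finset_cover [OpensMeasurableSpace X] (μ : Measure X) (o : X) (R : ℝ) (v : ℝ) (hv : 0 < v)
    (hlow : ∀ x : X, ENNReal.ofReal v ≤ μ (closedBall x (1/2)))
    (K : ℝ) (hK : 0 ≤ K) (hup : μ (closedBall o (R + 1)) ≤ ENNReal.ofReal K) :
    ∃ s : Finset X, ↑s ⊆ closedBall o R ∧ closedBall o R ⊆ ⋃ x ∈ s, closedBall x 1 ∧
      (s.card : ℝ) * v ≤ K := by
  -- any 1-separated subset of the ball has card * v ≤ K
  have key : ∀ s : Finset X, ↑s ⊆ closedBall o R →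
      (∀ x ∈ s, ∀ y ∈ s, x ≠ y → 1 < dist x y) → (s.card : ℝ) * v ≤ K := by
    classical
    intro s hs hsep
    have hdisj : (↑s : Set X).PairwiseDisjoint (fun x => closedBall x (1/2)) := by
      intro x hx y hy hxy
      exact closedBall_disjoint_closedBall (by linarith [hsep x hx y hy hxy])
    have hmeas := measure_biUnion_finset (μ := μ) hdisj (fun b _ => measurableSet_closedBall)
    have hsub : (⋃ x ∈ s, closedBall x (1/2)) ⊆ closedBall o (R + 1) := by
      intro z hz
      simp only [Set.mem_iUnion] at hz
      obtain ⟨x, hx, hzx⟩ := hz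
      have h1 : dist x o ≤ R := hs hx
      have h2 : dist z x ≤ 1/2 := hzx
      calc dist z o ≤ dist z x + dist x o := dist_triangle _ _ _
        _ ≤ R + 1 := by linarith
    have h1 : (s.card : ℝ≥0∞) * ENNReal.ofReal v ≤ ENNReal.ofReal K := by
      calc (s.card : ℝ≥0∞) * ENNReal.ofReal v = ∑ _x ∈ s, ENNReal.ofReal v := by
            rw [Finset.sum_const, nsmul_eq_mul]
        _ ≤ ∑ x ∈ s, μ (closedBall x (1/2)) := Finset.sum_le_sum fun x _ => hlow x
        _ = μ (⋃ x ∈ s, closedBall x (1/2)) := hmeas.symm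
        _ ≤ μ (closedBall o (R + 1)) := measure_mono hsub
        _ ≤ ENNReal.ofReal K := hup
    have h2 := ENNReal.toReal_mono (by simp) h1
    rw [ENNReal.toReal_mul, ENNReal.toReal_ofReal hv.le, ENNReal.toReal_ofReal hK] at h2
    simpa using h2
  -- cards are bounded
  have hbdd : ∀ s : Finset X, ↑s ⊆ closedBall o R →
      (∀ x ∈ s, ∀ y ∈ s, x ≠ y → 1 < dist x y) → s.card ≤ ⌊K / v⌋₊ := by
    intro s hs hsep
    refine Nat.le_floor ?_
    rw [le_div_iff₀ hv]
    exact key s hs hsep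
  set SS : Set ℕ := {k | ∃ s : Finset X, ↑s ⊆ closedBall o R ∧
      (∀ x ∈ s, ∀ y ∈ s, x ≠ y → 1 < dist x y) ∧ s.card = k} with hSS
  have hne : SS.Nonempty := ⟨0, ∅, by simp, by simp⟩
  have hbd : BddAbove SS := by
    refine ⟨⌊K / v⌋₊, ?_⟩
    rintro k ⟨s, hs1, hs2, rfl⟩
    exact hbdd s hs1 hs2
  obtain ⟨s, hs1, hs2, hcard⟩ := Nat.sSup_mem hne hbd
  refine ⟨s, hs1, ?_, key s hs1 hs2⟩
  intro y hy
  by_contra hyn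
  simp only [Set.mem_iUnion] at hyn
  push_neg at hyn
  have hdy : ∀ x ∈ s, 1 < dist y x := by
    intro x hx
    by_contra h
    push_neg at h
    exact hyn x hx h
  classical
  have hys : y ∉ s := fun h => absurd (hdy y h) (by simp)
  have hmem : s.card + 1 ∈ SS := by
    refine ⟨insert y s, ?_, ?_, ?_⟩
    · intro z hz
      simp only [Finset.coe_insert, Set.mem_insert_iff] at hz
      rcases hz with rfl | hz
      · exact hy
      · exact hs1 hz
    · intro a ha b hb hab
      simp only [Finset.mem_insert] at ha hb
      rcases ha with rfl | ha
      · rcases hb with rfl | hb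
        · exact absurd rfl hab
        · exact hdy b hb
      · rcases hb with rfl | hb
        · rw [dist_comm]; exact hdy a ha
        · exact hs2 a ha b hb hab
    · rw [Finset.card_insert_of_notMem hys]
  have := le_csSup hbd hmem
  rw [hcard] at this
  omega


lemma big_case [BorelSpace X] (n : ℕ) (ρ c₁ c₂ : ℝ) (hρ : 0 < ρ) (hc₁ : 0 < c₁)
    (hc₁₂ : c₁ ≤ c₂) (μ : Measure X) (o : X)
    (hsmall : ∀ (x : X) (r : ℝ), 0 < r → r ≤ 1 →
      ENNReal.ofReal (c₁ * r ^ n) ≤ μ (closedBall x r) ∧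
        μ (closedBall x r) ≤ ENNReal.ofReal (c₂ * r ^ n))
    (hbig : ∀ (x : X) (r : ℝ), 1 < r →
      ENNReal.ofReal (c₁ * Real.exp (2 * ρ * r)) ≤ μ (closedBall x r) ∧
        μ (closedBall x r) ≤ ENNReal.ofReal (c₂ * Real.exp (2 * ρ * r)))
    (R : ℝ) (f : X → ℝ) (hR : 1 ≤ R) (hf : MemLp f 2 μ)
    (hsupp : Function.support f ⊆ closedBall o R) :
    h1Norm μ f ≤
      ENNReal.ofReal (Real.sqrt (c₂^2 * Real.exp (4*ρ) / (c₁ * (1/2:ℝ)^n * c₁))) *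
        μ (closedBall o R) ^ ((1:ℝ)/2) * eLpNorm f 2 μ := by
  classical
  have hc₂ : 0 < c₂ := lt_of_lt_of_le hc₁ hc₁₂
  set v : ℝ := c₁ * (1/2:ℝ)^n with hv
  have hv0 : 0 < v := by positivity
  set C₂ : ℝ := Real.sqrt (c₂^2 * Real.exp (4*ρ) / (v * c₁)) with hC₂
  have hlow : ∀ x : X, ENNReal.ofReal v ≤ μ (closedBall x (1/2)) := fun x =>
    (hsmall x (1/2) (by norm_num) (by norm_num)).1
  set K : ℝ := c₂ * Real.exp (2*ρ*(R+1)) with hKdef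
  have hK0 : 0 ≤ K := by positivity
  have hup : μ (closedBall o (R+1)) ≤ ENNReal.ofReal K := (hbig o (R+1) (by linarith)).2
  obtain ⟨s, hs_sub, hs_cov, hs_card⟩ := exists_finset_cover μ o R v hv0 hlow K hK0 hup
  set M := s.card with hM
  -- enumeration of s
  set x : ℕ → X := fun j => if h : j < M then ((s.equivFin.symm ⟨j, h⟩ : {z // z ∈ s}) : X) else o
    with hxdef
  have hx_surj : ∀ z ∈ s, ∃ j, j < M ∧ x j = z := by
    intro z hz
    have hlt : ((s.equivFin ⟨z, hz⟩ : Fin M) : ℕ) < M := (s.equivFin ⟨z, hz⟩).isLt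
    refine ⟨_, hlt, ?_⟩
    rw [hxdef]
    simp only [hlt, dif_pos, Fin.eta, Equiv.symm_apply_apply]
  have hcov : closedBall o R ⊆ ⋃ j ∈ Finset.range M, closedBall (x j) 1 := by
    intro y hy
    obtain ⟨z, hz, hyz⟩ := Set.mem_iUnion₂.1 (hs_cov hy)
    obtain ⟨j, hj, rfl⟩ := hx_surj z hz
    exact Set.mem_iUnion₂.2 ⟨j, Finset.mem_range.2 hj, hyz⟩
  -- disjointification
  set D : ℕ → Set X := fun j =>
    closedBall (x j) 1 \ ⋃ (k : ℕ) (_ : k < j), closedBall (x k) 1 with hDdef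
  have hDmeas : ∀ j, MeasurableSet (D j) := fun j =>
    measurableSet_closedBall.diff
      (MeasurableSet.biUnion (Set.to_countable _) fun k _ => measurableSet_closedBall)
  have hDsub : ∀ j, D j ⊆ closedBall (x j) 1 := fun j => Set.diff_subset
  have hDdisj : ∀ i j, i ≠ j → Disjoint (D i) (D j) := by
    have key : ∀ i j, i < j → Disjoint (D i) (D j) := by
      intro i j hij
      rw [Set.disjoint_left]
      intro z hzi hzj
      exact hzj.2 (Set.mem_iUnion₂.2 ⟨i, hij, hDsub i hzi⟩)
    intro i j hij
    rcases lt_or_gt_of_ne hij with h | h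
    · exact key i j h
    · exact (key j i h).symm
  have hDcov : closedBall o R ⊆ ⋃ j ∈ Finset.range M, D j := by
    intro y hy
    have h1 : ∃ k, y ∈ closedBall (x k) 1 := by
      obtain ⟨j, _, hyj⟩ := Set.mem_iUnion₂.1 (hcov hy)
      exact ⟨j, hyj⟩
    obtain ⟨k0, hk0, hyk0⟩ := Set.mem_iUnion₂.1 (hcov hy)
    have hjM : Nat.find h1 < M :=
      lt_of_le_of_lt (Nat.find_min' h1 hyk0) (Finset.mem_range.1 hk0)
    refine Set.mem_iUnion₂.2 ⟨Nat.find h1, Finset.mem_range.2 hjM, Nat.find_spec h1, ?_⟩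
    intro hmem
    obtain ⟨k, hk, hyk⟩ := Set.mem_iUnion₂.1 hmem
    exact Nat.find_min h1 hk hyk
  -- the pieces
  set g : ℕ → X → ℝ := fun j => (D j).indicator f with hgdef
  have hg_sum : ∀ z, f z = ∑ j ∈ Finset.range M, g j z := by
    intro z
    by_cases hz : f z = 0
    · rw [hz]
      exact (Finset.sum_eq_zero fun j _ => by
        simp [hgdef, Set.indicator_apply, hz]).symm
    · have hzb : z ∈ closedBall o R := hsupp (Function.mem_support.2 hz)
      obtain ⟨j0, hj0, hzD⟩ := Set.mem_iUnion₂.1 (hDcov hzb)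
      rw [Finset.sum_eq_single_of_mem j0 hj0]
      · simp [hgdef, Set.indicator_of_mem hzD]
      · intro j _ hne
        have hnd : z ∉ D j := fun hmem => Set.disjoint_left.1 (hDdisj j j0 hne) hmem hzD
        simp [hgdef, Set.indicator_of_notMem hnd]
  have hball1 : ∀ j, μ (closedBall (x j) 1) ≠ 0 ∧ μ (closedBall (x j) 1) ≠ ⊤ := by
    intro j
    have h1 := (hsmall (x j) 1 one_pos le_rfl).1
    have h2 := (hsmall (x j) 1 one_pos le_rfl).2
    constructor
    · intro h0
      rw [h0, le_zero_iff, ENNReal.ofReal_eq_zero] at h1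
      simp only [one_pow, mul_one] at h1
      linarith
    · exact ne_top_of_le_ne_top ofReal_ne_top h2
  have Hj : ∀ j : ℕ, ∃ (l : ℝ) (a : X → ℝ), 0 ≤ l ∧ IsAdmissibleAtom μ a ∧
      (g j) =ᶠ[ae μ] (fun z => l * a z) ∧
      ENNReal.ofReal l = μ (closedBall (x j) 1) ^ (1/2:ℝ) * eLpNorm (g j) 2 μ := by
    intro j
    have hsupp' : Function.support (g j) ⊆ closedBall (x j) 1 :=
      (Set.support_indicator_subset).trans (hDsub j)
    obtain ⟨l, a, hl, hatom, _, heq, hofr⟩ := exists_atom_scaling μ (x j) 1 (g j)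
      (hball1 j).1 (hball1 j).2 (hf.indicator (hDmeas j)) hsupp'
    exact ⟨l, a, hl, Or.inr ⟨x j, hatom⟩, heq, hofr⟩
  choose l a hl ha heq hofr using Hj
  -- apply the finite decomposition bound
  have hfae : f =ᶠ[ae μ] fun z => ∑ j ∈ Finset.range M,
      (if j < M then l j else 0) * a j z := by
    have hall : ∀ᶠ z in ae μ, ∀ j ∈ Finset.range M, g j z = l j * a j z :=
      (eventually_all_finset _).2 fun j _ => heq j
    filter_upwards [hall] with z hz
    rw [hg_sum z]
    refine Finset.sum_congr rfl fun j hj => ?_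
    rw [hz j hj, if_pos (Finset.mem_range.1 hj)]
  have hmain := h1Norm_le_finite μ f M (fun j => if j < M then l j else 0) a ha
    (fun j hj => by simp [Nat.not_lt.2 hj]) hfae
  have hsum_eq : ∑ j ∈ Finset.range M, |if j < M then l j else 0| =
      ∑ j ∈ Finset.range M, l j := by
    refine Finset.sum_congr rfl fun j hj => ?_
    rw [if_pos (Finset.mem_range.1 hj), abs_of_nonneg (hl j)]
  rw [hsum_eq] at hmain
  -- numeric estimates
  set m : ℕ → ℝ := fun j => (μ (closedBall (x j) 1)).toReal with hmdef
  set u : ℕ → ℝ := fun j => (eLpNorm (g j) 2 μ).toReal with hudef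
  have hlj : ∀ j, l j = Real.sqrt (m j) * u j := by
    intro j
    calc l j = (ENNReal.ofReal (l j)).toReal := (ENNReal.toReal_ofReal (hl j)).symm
      _ = ((μ (closedBall (x j) 1)) ^ (1/2:ℝ)).toReal * u j := by
          rw [hofr j, ENNReal.toReal_mul]
      _ = Real.sqrt (m j) * u j := by
          rw [← ENNReal.toReal_rpow, Real.sqrt_eq_rpow]
  set S : ℝ := ∑ j ∈ Finset.range M, l j with hSdef
  have hS0 : 0 ≤ S := Finset.sum_nonneg fun j _ => hl j
  have hm_le : ∀ j, m j ≤ c₂ := by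
    intro j
    have h2 := (hsmall (x j) 1 one_pos le_rfl).2
    have := ENNReal.toReal_mono ofReal_ne_top h2
    rw [ENNReal.toReal_ofReal (by positivity)] at this
    simpa using this
  -- L² mass estimate
  set T : ℝ≥0∞ := ∫⁻ z, (‖f z‖₊ : ℝ≥0∞) ^ (2:ℝ) ∂μ with hTdef
  have hp2 : ((2:ℝ≥0∞)).toReal = (2:ℝ) := by simp
  have hsnorm_f : eLpNorm f 2 μ = T ^ ((1:ℝ)/2) := by
    rw [eLpNorm_eq_lintegral_rpow_enorm_toReal two_ne_zero ENNReal.ofNat_ne_top, hp2, hTdef]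
    simp_rw [enorm_eq_nnnorm]
  have hT_top : T ≠ ⊤ := by
    intro htop
    have h := hf.eLpNorm_lt_top
    rw [hsnorm_f, htop] at h
    simp [ENNReal.top_rpow_of_pos (by norm_num : (0:ℝ) < 1/2)] at h
  set J : ℕ → ℝ≥0∞ := fun j => ∫⁻ z in D j, (‖f z‖₊ : ℝ≥0∞) ^ (2:ℝ) ∂μ with hJdef
  have hsnorm_g : ∀ j, eLpNorm (g j) 2 μ = (J j) ^ ((1:ℝ)/2) := by
    intro j
    rw [eLpNorm_eq_lintegral_rpow_enorm_toReal two_ne_zero ENNReal.ofNat_ne_top, hp2]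
    congr 1
    simp only [hJdef]
    rw [← lintegral_indicator (hDmeas j)]
    congr 1
    funext z
    by_cases hz : z ∈ D j
    · simp [hgdef, Set.indicator_of_mem hz, enorm_eq_nnnorm]
    · simp [hgdef, Set.indicator_of_notMem hz,
        ENNReal.zero_rpow_of_pos (by norm_num : (0:ℝ) < 2)]
  have hJsum : ∑ j ∈ Finset.range M, J j ≤ T := by
    rw [← lintegral_biUnion_finset
      (fun i _ j _ hij => hDdisj i j hij) (fun b _ => hDmeas b)]
    exact lintegral_mono' Measure.restrict_le_self le_rfl
  have hJ_top : ∀ j ∈ Finset.range M, J j ≠ ⊤ := by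
    intro j hj
    refine ne_top_of_le_ne_top hT_top ?_
    exact le_trans (Finset.single_le_sum (f := J) (fun k _ => zero_le) hj) hJsum
  have hu2 : ∀ j, (u j)^2 = (J j).toReal := by
    intro j
    rw [hudef]
    simp only
    rw [hsnorm_g j, ← ENNReal.toReal_rpow, ← Real.sqrt_eq_rpow,
      Real.sq_sqrt ENNReal.toReal_nonneg]
  set U : ℝ := (eLpNorm f 2 μ).toReal with hUdef
  have hU0 : 0 ≤ U := ENNReal.toReal_nonneg
  have hU2 : U^2 = T.toReal := by
    rw [hUdef, hsnorm_f, ← ENNReal.toReal_rpow, ← Real.sqrt_eq_rpow,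
      Real.sq_sqrt ENNReal.toReal_nonneg]
  have husum : ∑ j ∈ Finset.range M, (u j)^2 ≤ U^2 := by
    rw [hU2]
    calc ∑ j ∈ Finset.range M, (u j)^2 = ∑ j ∈ Finset.range M, (J j).toReal := by
          exact Finset.sum_congr rfl fun j _ => hu2 j
      _ = (∑ j ∈ Finset.range M, J j).toReal := (ENNReal.toReal_sum hJ_top).symm
      _ ≤ T.toReal := ENNReal.toReal_mono hT_top hJsum
  -- Cauchy–Schwarz
  have hCS : S^2 ≤ ((K/v) * c₂) * U^2 := by
    have h1 := Finset.sum_mul_sq_le_sq_mul_sq (Finset.range M)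
      (fun j => Real.sqrt (m j)) u
    have h2 : S^2 ≤ (∑ j ∈ Finset.range M, m j) * (∑ j ∈ Finset.range M, (u j)^2) := by
      calc S^2 = (∑ j ∈ Finset.range M, Real.sqrt (m j) * u j)^2 := by
            rw [hSdef]; congr 1; exact Finset.sum_congr rfl fun j _ => hlj j
        _ ≤ (∑ j ∈ Finset.range M, Real.sqrt (m j)^2) * (∑ j ∈ Finset.range M, (u j)^2) := h1
        _ = (∑ j ∈ Finset.range M, m j) * (∑ j ∈ Finset.range M, (u j)^2) := by
            congr 1
            exact Finset.sum_congr rfl fun j _ => Real.sq_sqrt ENNReal.toReal_nonneg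
    have h3 : ∑ j ∈ Finset.range M, m j ≤ (M:ℝ) * c₂ := by
      calc ∑ j ∈ Finset.range M, m j ≤ ∑ _j ∈ Finset.range M, c₂ :=
            Finset.sum_le_sum fun j _ => hm_le j
        _ = (M:ℝ) * c₂ := by rw [Finset.sum_const, Finset.card_range, nsmul_eq_mul]
    have h4 : (M:ℝ) ≤ K / v := by
      rw [le_div_iff₀ hv0]
      exact hs_card
    have h5 : ∑ j ∈ Finset.range M, m j ≤ (K/v) * c₂ := by
      refine le_trans h3 (mul_le_mul_of_nonneg_right h4 hc₂.le)
    have hKv0 : 0 ≤ K / v * c₂ := by positivity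
    nlinarith [Finset.sum_nonneg (fun j (_ : j ∈ Finset.range M) => sq_nonneg (u j)),
      Finset.sum_nonneg (fun j (_ : j ∈ Finset.range M) =>
        (show (0:ℝ) ≤ m j from ENNReal.toReal_nonneg)), husum, sq_nonneg U]
  -- lower bound on μ(B(o,R))
  have hμBfin : μ (closedBall o R) ≠ ⊤ := by
    rcases eq_or_lt_of_le hR with h | h
    · exact ne_top_of_le_ne_top ofReal_ne_top (hsmall o R (by linarith) h.ge).2
    · exact ne_top_of_le_ne_top ofReal_ne_top (hbig o R h).2
  have hμBlow : c₁ * (Real.exp (2*ρ*R) * Real.exp (-(2*ρ))) ≤ (μ (closedBall o R)).toReal := by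
    rcases eq_or_lt_of_le hR with h | h
    · subst h
      have h1 := (hsmall o 1 one_pos le_rfl).1
      have h2 := ENNReal.toReal_mono hμBfin h1
      rw [ENNReal.toReal_ofReal (by positivity)] at h2
      have hexp : Real.exp (2*ρ*1) * Real.exp (-(2*ρ)) = 1 := by
        rw [← Real.exp_add]; norm_num
      rw [hexp, mul_one]
      simpa using h2
    · have h1 := (hbig o R h).1
      have h2 := ENNReal.toReal_mono hμBfin h1
      rw [ENNReal.toReal_ofReal (by positivity)] at h2
      have he1 : Real.exp (-(2*ρ)) ≤ 1 := Real.exp_le_one_iff.2 (by linarith)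
      calc c₁ * (Real.exp (2*ρ*R) * Real.exp (-(2*ρ)))
          ≤ c₁ * (Real.exp (2*ρ*R) * 1) :=
            mul_le_mul_of_nonneg_left
              (mul_le_mul_of_nonneg_left he1 (Real.exp_pos _).le) hc₁.le
        _ = c₁ * Real.exp (2*ρ*R) := by ring
        _ ≤ _ := h2
  set t : ℝ := (μ (closedBall o R)).toReal with htdef
  have htpos : 0 < t := lt_of_lt_of_le (by positivity) hμBlow
  have hC2sq : C₂^2 = c₂^2 * Real.exp (4*ρ) / (v * c₁) := Real.sq_sqrt (by positivity)
  have hKC : (K/v) * c₂ ≤ C₂^2 * t := by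
    have hexp : Real.exp (2*ρ*(R+1)) =
        Real.exp (4*ρ) * (Real.exp (2*ρ*R) * Real.exp (-(2*ρ))) := by
      rw [← Real.exp_add, ← Real.exp_add]; ring_nf
    have heq : (K/v) * c₂ = (c₂^2 * Real.exp (4*ρ) / (v * c₁)) *
        (c₁ * (Real.exp (2*ρ*R) * Real.exp (-(2*ρ)))) := by
      rw [hKdef, hexp]; field_simp
    rw [heq, hC2sq]
    exact mul_le_mul_of_nonneg_left hμBlow (by positivity)
  have hC₂0 : 0 ≤ C₂ := Real.sqrt_nonneg _
  have hfinal : S ≤ C₂ * Real.sqrt t * U := by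
    have h6 : S^2 ≤ (C₂ * Real.sqrt t * U)^2 := by
      have hpow : (C₂ * Real.sqrt t * U)^2 = C₂^2 * t * U^2 := by
        rw [mul_pow, mul_pow, Real.sq_sqrt htpos.le]
      rw [hpow]
      calc S^2 ≤ ((K/v) * c₂) * U^2 := hCS
        _ ≤ C₂^2 * t * U^2 := mul_le_mul_of_nonneg_right hKC (sq_nonneg U)
    calc S = Real.sqrt (S^2) := (Real.sqrt_sq hS0).symm
      _ ≤ Real.sqrt ((C₂ * Real.sqrt t * U)^2) := Real.sqrt_le_sqrt h6
      _ = C₂ * Real.sqrt t * U :=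
          Real.sqrt_sq (mul_nonneg (mul_nonneg hC₂0 (Real.sqrt_nonneg _)) hU0)
  refine le_trans hmain ?_
  calc ENNReal.ofReal S ≤ ENNReal.ofReal (C₂ * Real.sqrt t * U) :=
        ENNReal.ofReal_le_ofReal hfinal
    _ = ENNReal.ofReal C₂ * ENNReal.ofReal (Real.sqrt t) * ENNReal.ofReal U := by
        rw [ENNReal.ofReal_mul (mul_nonneg hC₂0 (Real.sqrt_nonneg _)),
          ENNReal.ofReal_mul hC₂0]
    _ = ENNReal.ofReal C₂ * μ (closedBall o R) ^ ((1:ℝ)/2) * eLpNorm f 2 μ := by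
        congr 1
        · congr 1
          rw [Real.sqrt_eq_rpow, ← ENNReal.ofReal_rpow_of_pos htpos,
            ENNReal.ofReal_toReal hμBfin]
        · rw [hUdef, ENNReal.ofReal_toReal hf.eLpNorm_lt_top.ne]


/-- On a complete separable metric measure space with the two-regime
ball volume growth, there is a constant `C = C(n, ρ, c₁, c₂)` such that every `f ∈ L²(μ)`
supported in `B(o,R)`, with either `R ≤ 1` and `∫ f dμ = 0`, or `R ≥ 1`, satisfies
`‖f‖_{h¹} ≤ C μ(B(o,R))^{1/2} ‖f‖_{L²}`. -/
theorem stmt_3 (n : ℕ) (hn : 2 ≤ n) (ρ c₁ c₂ : ℝ) (hρ : 0 < ρ) (hc₁ : 0 < c₁)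
    (hc₁₂ : c₁ ≤ c₂) :
    ∃ C : ℝ, 0 < C ∧
      ∀ (Y : Type) [MetricSpace Y] [CompleteSpace Y] [TopologicalSpace.SeparableSpace Y]
        [MeasurableSpace Y] [BorelSpace Y] (μ : Measure Y) (o : Y),
      (∀ (x : Y) (r : ℝ), 0 < r → r ≤ 1 →
        ENNReal.ofReal (c₁ * r ^ n) ≤ μ (closedBall x r) ∧
          μ (closedBall x r) ≤ ENNReal.ofReal (c₂ * r ^ n)) →
      (∀ (x : Y) (r : ℝ), 1 < r →
        ENNReal.ofReal (c₁ * Real.exp (2 * ρ * r)) ≤ μ (closedBall x r) ∧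
          μ (closedBall x r) ≤ ENNReal.ofReal (c₂ * Real.exp (2 * ρ * r))) →
      ∀ (R : ℝ) (f : Y → ℝ), 0 < R → MemLp f 2 μ →
        Function.support f ⊆ closedBall o R →
        ((R ≤ 1 ∧ ∫ x, f x ∂μ = 0) ∨ 1 ≤ R) →
        h1Norm μ f ≤
          ENNReal.ofReal C * μ (closedBall o R) ^ ((1 : ℝ) / 2) * eLpNorm f 2 μ := by
    classical
  have hc₂ : 0 < c₂ := lt_of_lt_of_le hc₁ hc₁₂
  refine ⟨max 1 (Real.sqrt (c₂^2 * Real.exp (4*ρ) / (c₁ * (1/2:ℝ)^n * c₁))),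
    lt_of_lt_of_le one_pos (le_max_left _ _), ?_⟩
  intro Y _i1 _i2 _i3 _i4 _i5 μ o hsmall hbig R f hR hf hsupp hcases
  have hCle : (1:ℝ≥0∞) ≤ ENNReal.ofReal
      (max 1 (Real.sqrt (c₂^2 * Real.exp (4*ρ) / (c₁ * (1/2:ℝ)^n * c₁)))) :=
    ENNReal.one_le_ofReal.2 (le_max_left _ _)
  rcases hcases with ⟨hR1, hint⟩ | hR1
  · -- R ≤ 1 : a single standard atom
    have hμ0 : μ (closedBall o R) ≠ 0 := by
      intro h0
      have h1 := (hsmall o R hR hR1).1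
      rw [h0, le_zero_iff, ENNReal.ofReal_eq_zero] at h1
      have hpos : 0 < c₁ * R^n := by positivity
      linarith
    have hμt : μ (closedBall o R) ≠ ⊤ :=
      ne_top_of_le_ne_top ofReal_ne_top (hsmall o R hR hR1).2
    obtain ⟨l, a, hl, hatom, hint0, heq, hofr⟩ :=
      exists_atom_scaling μ o R f hμ0 hμt hf hsupp
    have hadm : IsAdmissibleAtom μ a := Or.inl ⟨o, R, hR, hR1, hatom, hint0 hint⟩
    have hmain := h1Norm_le_finite μ f 1 (fun j => if j = 0 then l else 0)
      (fun _ => a) (fun _ => hadm)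
      (fun j hj => by simp [Nat.one_le_iff_ne_zero.1 hj])
      (by filter_upwards [heq] with z hz; simpa using hz)
    refine le_trans hmain ?_
    have hsum : ENNReal.ofReal (∑ j ∈ Finset.range 1, |if j = 0 then l else 0|) =
        μ (closedBall o R) ^ ((1:ℝ)/2) * eLpNorm f 2 μ := by
      rw [Finset.sum_range_one, if_pos rfl, abs_of_nonneg hl, hofr]
    rw [hsum]
    calc μ (closedBall o R) ^ ((1:ℝ)/2) * eLpNorm f 2 μ
        = 1 * (μ (closedBall o R) ^ ((1:ℝ)/2) * eLpNorm f 2 μ) := (one_mul _).symm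
      _ ≤ ENNReal.ofReal (max 1 (Real.sqrt (c₂^2 * Real.exp (4*ρ) / (c₁ * (1/2:ℝ)^n * c₁)))) *
          (μ (closedBall o R) ^ ((1:ℝ)/2) * eLpNorm f 2 μ) := mul_le_mul_left hCle _
      _ = _ := (mul_assoc _ _ _).symm
  · -- R ≥ 1 : the covering argument
    refine le_trans (big_case n ρ c₁ c₂ hρ hc₁ hc₁₂ μ o hsmall hbig R f hR1 hf hsupp) ?_
    exact mul_le_mul_left (mul_le_mul_left
      (ENNReal.ofReal_le_ofReal (le_max_right _ _)) _) _
end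

section
/- There exists a constant C, depending only on n, ρ, c₁, c₂, with the following property. Let r ∈ (0,1], R > r, and let f ∈ L²(μ) be supported in the annulus {x ∈ X : R − r ≤ d(x,o) ≤ R + r} and satisfy ∫_X f dμ = 0. Then ∥f∥_{h¹} ≤ C · (1 + log(1/r)) · e^{ρR} r^{1/2} ∥f∥_{L²(μ)} (in particular f admits an atomic decomposition). -/
open Metric MeasureTheory Filter ENNReal

variable {X : Type*} [MetricSpace X] [MeasurableSpace X]

section Aux

variable {Y : Type*} [MetricSpace Y] [MeasurableSpace Y]

lemma isAdmissibleAtom_zero (μ : Measure Y) (o : Y) :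
    IsAdmissibleAtom μ (fun _ : Y => (0:ℝ)) := by
  refine Or.inr ⟨o, ?_, ?_, ?_⟩
  · exact MemLp.zero'
  · simp [Function.support]
  · simp [eLpNorm_zero']

lemma inv_mul_sqrt (x : ℝ) (hx : 0 < x) : x⁻¹ * Real.sqrt x = (Real.sqrt x)⁻¹ := by
  have h : Real.sqrt x ≠ 0 := (Real.sqrt_pos.mpr hx).ne'
  field_simp
  exact Real.sq_sqrt hx.le

lemma exists_atom_factor (μ : Measure Y) (P : Y → ℝ) (hP : MemLp P 2 μ)
    (x : Y) (t : ℝ) (ht0 : 0 < t) (ht1 : t ≤ 1)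
    (hμ0 : 0 < μ (closedBall x t)) (hμt : μ (closedBall x t) ≠ ⊤)
    (hsupp : Function.support P ⊆ closedBall x t)
    (hz : t = 1 ∨ ∫ y, P y ∂μ = 0) :
    ∃ (lam : ℝ) (g : Y → ℝ), 0 ≤ lam ∧
      ENNReal.ofReal lam = eLpNorm P 2 μ * μ (closedBall x t) ^ (1/2 : ℝ) ∧
      (P =ᵐ[μ] fun y => lam * g y) ∧ IsAdmissibleAtom μ g := by
  set B := μ (closedBall x t) with hB
  have hL : eLpNorm P 2 μ ≠ ⊤ := hP.2.ne
  have hB2top : B ^ (1/2:ℝ) ≠ ⊤ := ENNReal.rpow_ne_top_of_nonneg (by norm_num) hμt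
  have hB20 : B ^ (1/2:ℝ) ≠ 0 := by
    intro h
    rcases ENNReal.rpow_eq_zero_iff.mp h with ⟨h1, _⟩ | ⟨_, h2⟩
    · exact hμ0.ne' h1
    · norm_num at h2
  set lam := (eLpNorm P 2 μ * B ^ (1/2:ℝ)).toReal with hlam
  have hofReal : ENNReal.ofReal lam = eLpNorm P 2 μ * B ^ (1/2:ℝ) :=
    ENNReal.ofReal_toReal (ENNReal.mul_ne_top hL hB2top)
  have hlam0 : 0 ≤ lam := ENNReal.toReal_nonneg
  by_cases hc : lam = 0
  · have h0 : eLpNorm P 2 μ * B ^ (1/2:ℝ) = 0 := by rw [← hofReal, hc, ENNReal.ofReal_zero]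
    have hL0 : eLpNorm P 2 μ = 0 := by
      rcases mul_eq_zero.mp h0 with h | h
      · exact h
      · exact absurd h hB20
    have hP0 : P =ᵐ[μ] 0 := (eLpNorm_eq_zero_iff hP.aestronglyMeasurable two_ne_zero).mp hL0
    refine ⟨lam, fun _ => 0, hlam0, hofReal, ?_, isAdmissibleAtom_zero μ x⟩
    filter_upwards [hP0] with y hy
    simp [hy, hc]
  · have hlampos : 0 < lam := lt_of_le_of_ne hlam0 (Ne.symm hc)
    have hLne : eLpNorm P 2 μ ≠ 0 := by
      intro h0
      apply hc
      rw [hlam, h0, zero_mul, ENNReal.toReal_zero]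
    have hmem : MemLp (fun y => lam⁻¹ * P y) 2 μ := hP.const_mul _
    have hsupp' : Function.support (fun y => lam⁻¹ * P y) ⊆ closedBall x t :=
      subset_trans (Function.support_mul_subset_right _ _) hsupp
    have hnorm : eLpNorm (fun y => lam⁻¹ * P y) 2 μ = ENNReal.ofReal lam⁻¹ * eLpNorm P 2 μ := by
      have h1 := eLpNorm_const_smul (lam⁻¹) P 2 μ
      have h2 : (lam⁻¹ • P) = fun y => lam⁻¹ * P y := rfl
      rw [h2] at h1
      rw [h1, Real.enorm_eq_ofReal (by positivity)]
    have key : ENNReal.ofReal lam⁻¹ * eLpNorm P 2 μ = B ^ (-(1/2:ℝ)) := by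
      rw [ENNReal.ofReal_inv_of_pos hlampos, hofReal, ENNReal.rpow_neg,
        ENNReal.mul_inv (Or.inl hLne) (Or.inl hL), mul_comm, ← mul_assoc,
        ENNReal.mul_inv_cancel hLne hL, one_mul]
    have hatom : IsAtomOfBall μ x t (fun y => lam⁻¹ * P y) :=
      ⟨hmem, hsupp', le_of_eq (hnorm.trans key)⟩
    refine ⟨lam, fun y => lam⁻¹ * P y, hlam0, hofReal, ?_, ?_⟩
    · refine Filter.Eventually.of_forall fun y => ?_
      field_simp
    · rcases hz with ht | hintz
      · exact Or.inr ⟨x, ht ▸ hatom⟩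
      · refine Or.inl ⟨x, t, ht0, ht1, hatom, ?_⟩
        rw [integral_const_mul, hintz, mul_zero]

lemma sum_eLpNorm_restrict_sq_le (μ : Measure Y) (f : Y → ℝ) {ι : Type*} (S : Finset ι)
    (E : ι → Set Y) (hmeas : ∀ i ∈ S, MeasurableSet (E i))
    (hdisj : (↑S : Set ι).PairwiseDisjoint E) :
    ∑ i ∈ S, (eLpNorm f 2 (μ.restrict (E i)))^2 ≤ (eLpNorm f 2 μ)^2 := by
  have h2 : ∀ (ν : Measure Y), eLpNorm f 2 ν ^ 2 = ∫⁻ y, (‖f y‖₊ : ℝ≥0∞) ^ (2:ℝ) ∂ν := by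
    intro ν
    rw [eLpNorm_eq_lintegral_rpow_enorm_toReal two_ne_zero ENNReal.ofNat_ne_top]
    rw [← ENNReal.rpow_natCast _ 2, ← ENNReal.rpow_mul]
    norm_num
    simp only [enorm_eq_nnnorm]
  calc ∑ i ∈ S, (eLpNorm f 2 (μ.restrict (E i)))^2
      = ∑ i ∈ S, ∫⁻ y in E i, (‖f y‖₊ : ℝ≥0∞) ^ (2:ℝ) ∂μ :=
        Finset.sum_congr rfl (fun i _ => h2 (μ.restrict (E i)))
    _ = ∫⁻ y in ⋃ i ∈ S, E i, (‖f y‖₊ : ℝ≥0∞) ^ (2:ℝ) ∂μ :=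
        (lintegral_biUnion_finset hdisj hmeas _).symm
    _ ≤ ∫⁻ y, (‖f y‖₊ : ℝ≥0∞) ^ (2:ℝ) ∂μ := setLIntegral_le_lintegral _ _
    _ = (eLpNorm f 2 μ)^2 := (h2 μ).symm

lemma abs_setIntegral_le (μ : Measure Y) (f : Y → ℝ) (E : Set Y) (hE : MeasurableSet E)
    (hμE : μ E ≠ ⊤) (hf : MemLp f 2 μ) :
    |∫ y in E, f y ∂μ| ≤ (eLpNorm f 2 (μ.restrict E)).toReal * Real.sqrt ((μ E).toReal) := by
  set ν := μ.restrict E with hν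
  haveI hfin : IsFiniteMeasure ν := ⟨by rw [hν, Measure.restrict_apply_univ]; exact hμE.lt_top⟩
  have hfν : MemLp f 2 ν := hf.restrict E
  have hint : Integrable f ν := hfν.integrable one_le_two
  have h1 : |∫ y, f y ∂ν| ≤ ∫ y, |f y| ∂ν := by
    simpa [Real.norm_eq_abs] using norm_integral_le_integral_norm (μ := ν) f
  have h2 : ∫ y, |f y| ∂ν = (eLpNorm f 1 ν).toReal := by
    rw [eLpNorm_one_eq_lintegral_enorm]
    have := integral_norm_eq_lintegral_enorm (μ := ν) hfν.aestronglyMeasurable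
    simpa [Real.norm_eq_abs] using this
  have h3 : eLpNorm f 1 ν ≤ eLpNorm f 2 ν * (ν Set.univ) ^ (1/2 : ℝ) := by
    have := eLpNorm_le_eLpNorm_mul_rpow_measure_univ (μ := ν) (p := 1) (q := 2)
      one_le_two hfν.aestronglyMeasurable
    norm_num at this
    exact this
  have hνuniv : ν Set.univ = μ E := by rw [hν, Measure.restrict_apply_univ]
  have hrtop : eLpNorm f 2 ν * (ν Set.univ) ^ (1/2 : ℝ) ≠ ⊤ := by
    apply ENNReal.mul_ne_top hfν.2.ne
    exact ENNReal.rpow_ne_top_of_nonneg (by norm_num) (by rw [hνuniv]; exact hμE)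
  have h4 : (eLpNorm f 1 ν).toReal ≤ (eLpNorm f 2 ν).toReal * Real.sqrt ((μ E).toReal) := by
    have := ENNReal.toReal_mono hrtop h3
    rwa [ENNReal.toReal_mul, hνuniv, ← ENNReal.toReal_rpow, ← Real.sqrt_eq_rpow] at this
  calc |∫ y in E, f y ∂μ| = |∫ y, f y ∂ν| := rfl
    _ ≤ ∫ y, |f y| ∂ν := h1
    _ = (eLpNorm f 1 ν).toReal := h2
    _ ≤ (eLpNorm f 2 ν).toReal * Real.sqrt ((μ E).toReal) := h4

lemma exists_good_cover [OpensMeasurableSpace Y] (μ : Measure Y) (A A' : Set Y) (r : ℝ)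
    (hr : 0 < r) (v V : ℝ≥0∞) (hv0 : v ≠ 0) (hV : V ≠ ⊤)
    (hball : ∀ x ∈ A, v ≤ μ (closedBall x (r/2)))
    (hsub : ∀ x ∈ A, closedBall x (r/2) ⊆ A')
    (hA' : μ A' ≤ V) :
    ∃ (N : ℕ) (s : Fin N → Y), (∀ i, s i ∈ A) ∧ (∀ x ∈ A, ∃ i, dist x (s i) ≤ r) ∧
      (N : ℝ≥0∞) * v ≤ V := by
  classical
  have hcard : ∀ S : Finset Y, ↑S ⊆ A → (∀ a ∈ S, ∀ b ∈ S, a ≠ b → r < dist a b) →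
      (S.card : ℝ≥0∞) * v ≤ V := by
    intro S hSA hsep
    have hdisj : (↑S : Set Y).PairwiseDisjoint (fun a => closedBall a (r/2)) := by
      intro a ha b hb hab
      refine Set.disjoint_left.mpr fun y hya hyb => ?_
      have h1 : dist a b ≤ r := by
        have t1 : dist a b ≤ dist a y + dist y b := dist_triangle a y b
        have t2 : dist a y = dist y a := dist_comm a y
        have hya' : dist y a ≤ r/2 := hya
        have hyb' : dist y b ≤ r/2 := hyb
        linarith
      exact absurd h1 (not_le.mpr (hsep a ha b hb hab))
    have hmeas : ∀ b ∈ S, MeasurableSet (closedBall b (r/2)) := fun b _ => measurableSet_closedBall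
    calc (S.card : ℝ≥0∞) * v = S.card • v := by rw [nsmul_eq_mul]
      _ ≤ ∑ a ∈ S, μ (closedBall a (r/2)) :=
          Finset.card_nsmul_le_sum S _ v (fun a ha => hball a (hSA ha))
      _ = μ (⋃ a ∈ S, closedBall a (r/2)) := (measure_biUnion_finset hdisj hmeas).symm
      _ ≤ μ A' := measure_mono (Set.iUnion₂_subset fun a ha => hsub a (hSA ha))
      _ ≤ V := hA'
  set B₀ := ⌈(V / v).toReal⌉₊ with hB₀
  have hcardN : ∀ S : Finset Y, ↑S ⊆ A → (∀ a ∈ S, ∀ b ∈ S, a ≠ b → r < dist a b) →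
      S.card ≤ B₀ := by
    intro S hSA hsep
    have h1 : (S.card : ℝ≥0∞) ≤ V / v :=
      ENNReal.le_div_iff_mul_le (Or.inl hv0) (Or.inr hV) |>.mpr (hcard S hSA hsep)
    have h2 : V / v ≠ ⊤ := by
      intro h
      rcases ENNReal.div_eq_top.mp h with ⟨_, h3⟩ | ⟨h3, _⟩
      · exact hv0 h3
      · exact hV h3
    have h3 : (S.card : ℝ) ≤ (V / v).toReal := by
      have := ENNReal.toReal_mono h2 h1
      simpa using this
    exact_mod_cast h3.trans (Nat.le_ceil _)
  set P : ℕ → Prop := fun mm => ∃ S : Finset Y, ↑S ⊆ A ∧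
    (∀ a ∈ S, ∀ b ∈ S, a ≠ b → r < dist a b) ∧ mm ≤ S.card ∧ S.card ≤ B₀ with hPdef
  have hP0 : P 0 := ⟨∅, by simp, by simp, Nat.zero_le _, Nat.zero_le _⟩
  obtain ⟨S, hSA, hsep, hNS, hSB⟩ := Nat.findGreatest_spec (Nat.zero_le B₀) hP0
  have hcover : ∀ x ∈ A, ∃ a ∈ S, dist x a ≤ r := by
    intro x hx
    by_contra hcon
    push_neg at hcon
    have hxS : x ∉ S := by
      intro hxS
      have := hcon x hxS
      simp at this
      linarith
    have hsep' : ∀ a ∈ insert x S, ∀ b ∈ insert x S, a ≠ b → r < dist a b := by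
      intro a ha b hb hab
      rcases Finset.mem_insert.mp ha with rfl | haS
      · rcases Finset.mem_insert.mp hb with rfl | hbS
        · exact absurd rfl hab
        · exact hcon b hbS
      · rcases Finset.mem_insert.mp hb with rfl | hbS
        · rw [dist_comm]; exact hcon a haS
        · exact hsep a haS b hbS hab
    have hsubA : ↑(insert x S) ⊆ A := by
      rw [Finset.coe_insert]
      exact Set.insert_subset hx hSA
    have hcard' : (insert x S).card = S.card + 1 := Finset.card_insert_of_notMem hxS
    have hle : S.card + 1 ≤ B₀ := by
      have := hcardN (insert x S) hsubA hsep'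
      rwa [hcard'] at this
    have hP' : P (S.card + 1) := ⟨insert x S, hsubA, hsep', by rw [hcard'], by rw [hcard']; exact hle⟩
    have hNlt : Nat.findGreatest P B₀ < S.card + 1 := Nat.lt_succ_of_le hNS
    exact Nat.findGreatest_is_greatest hNlt hle hP'
  refine ⟨S.card, fun i => (S.equivFin.symm i : Y), ?_, ?_, hcard S hSA hsep⟩
  · intro i
    exact hSA (S.equivFin.symm i).2
  · intro x hx
    obtain ⟨a, haS, hd⟩ := hcover x hx
    refine ⟨S.equivFin ⟨a, haS⟩, ?_⟩
    simpa using hd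

lemma h1Norm_le_of_fintype_sum {ι : Type*} [Fintype ι] (μ : Measure Y) (o : Y) (f : Y → ℝ)
    (c : ι → ℝ) (a : ι → Y → ℝ) (hadm : ∀ i, IsAdmissibleAtom μ (a i))
    (heq : f =ᵐ[μ] fun x => ∑ i, c i * a i x) :
    h1Norm μ f ≤ ENNReal.ofReal (∑ i, |c i|) := by
  classical
  set M := Fintype.card ι with hM
  let e : ι ≃ Fin M := Fintype.equivFin ι
  set cc : ℕ → ℝ := fun j => if h : j < M then c (e.symm ⟨j, h⟩) else 0 with hcc
  set aa : ℕ → Y → ℝ := fun j => if h : j < M then a (e.symm ⟨j, h⟩) else fun _ => 0 with haa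
  have hadm' : ∀ j, IsAdmissibleAtom μ (aa j) := by
    intro j
    by_cases h : j < M
    · simp only [haa, dif_pos h]; exact hadm _
    · simp only [haa, dif_neg h]; exact isAdmissibleAtom_zero μ o
  have hzero : ∀ j ∉ Finset.range M, |cc j| = 0 := by
    intro j hj
    rw [Finset.mem_range] at hj
    simp [hcc, hj]
  have hsummable : Summable fun j => |cc j| := summable_of_ne_finset_zero hzero
  have hsum_eq : ∀ x, ∑ j ∈ Finset.range M, cc j * aa j x = ∑ i, c i * a i x := by
    intro x
    rw [← Fin.sum_univ_eq_sum_range (fun j => cc j * aa j x) M,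
      ← Equiv.sum_comp e.symm (fun i => c i * a i x)]
    refine Finset.sum_congr rfl fun j _ => ?_
    simp [hcc, haa, j.isLt]
  have htend : Tendsto (fun N => eLpNorm (fun x => f x - ∑ j ∈ Finset.range N, cc j * aa j x) 1 μ)
      atTop (nhds 0) := by
    apply tendsto_atTop_of_eventually_const (i₀ := M)
    intro N hN
    have h1 : ∀ x, ∑ j ∈ Finset.range N, cc j * aa j x = ∑ j ∈ Finset.range M, cc j * aa j x := by
      intro x
      refine (Finset.sum_subset (Finset.range_subset_range.mpr hN) ?_).symm
      intro j _ hj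
      rw [Finset.mem_range] at hj
      simp [hcc, hj]
    have h0 : (fun x => f x - ∑ j ∈ Finset.range N, cc j * aa j x) =ᵐ[μ] 0 := by
      filter_upwards [heq] with x hx
      simp [h1, hx, hsum_eq]
    rw [eLpNorm_congr_ae h0, eLpNorm_zero]
  have hfinal : ENNReal.ofReal (∑' j, |cc j|) = ENNReal.ofReal (∑ i, |c i|) := by
    rw [tsum_eq_sum hzero]
    congr 1
    rw [← Fin.sum_univ_eq_sum_range (fun j => |cc j|) M,
      ← Equiv.sum_comp e.symm (fun i => |c i|)]
    refine Finset.sum_congr rfl fun j _ => ?_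
    simp [hcc, j.isLt]
  refine le_trans ?_ (le_of_eq hfinal)
  unfold h1Norm
  exact le_trans (iInf_le _ cc) (le_trans (iInf_le _ aa) (le_trans (iInf_le _ hadm')
    (le_trans (iInf_le _ hsummable) (iInf_le _ htend))))

end Aux

set_option maxHeartbeats 2000000 in
/-- On a complete separable metric measure space with the two-regime
ball volume growth and the annulus measure bound, there is a constant
`C = C(n, ρ, c₁, c₂)` such that every `f ∈ L²(μ)` with vanishing integral supported in
the annulus `{R − r ≤ d(x,o) ≤ R + r}`, `r ∈ (0,1]`, `R > r`, satisfies
`‖f‖_{h¹} ≤ C (1 + log(1/r)) e^{ρR} r^{1/2} ‖f‖_{L²}`. -/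
theorem stmt_4 (n : ℕ) (hn : 2 ≤ n) (ρ c₁ c₂ : ℝ) (hρ : 0 < ρ) (hc₁ : 0 < c₁)
    (hc₁₂ : c₁ ≤ c₂) :
    ∃ C : ℝ, 0 < C ∧
      ∀ (Y : Type) [MetricSpace Y] [CompleteSpace Y] [TopologicalSpace.SeparableSpace Y]
        [MeasurableSpace Y] [BorelSpace Y] (μ : Measure Y) (o : Y),
      (∀ (x : Y) (r : ℝ), 0 < r → r ≤ 1 →
        ENNReal.ofReal (c₁ * r ^ n) ≤ μ (closedBall x r) ∧
          μ (closedBall x r) ≤ ENNReal.ofReal (c₂ * r ^ n)) →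
      (∀ (x : Y) (r : ℝ), 1 < r →
        ENNReal.ofReal (c₁ * Real.exp (2 * ρ * r)) ≤ μ (closedBall x r) ∧
          μ (closedBall x r) ≤ ENNReal.ofReal (c₂ * Real.exp (2 * ρ * r))) →
      (∀ R u : ℝ, 0 < R → 0 < u → u ≤ 1 →
        μ {x : Y | R - u ≤ dist x o ∧ dist x o ≤ R + u} ≤
          ENNReal.ofReal (c₂ * Real.exp (2 * ρ * R) * u)) →
      ∀ (r R : ℝ) (f : Y → ℝ), 0 < r → r ≤ 1 → r < R → MemLp f 2 μ →
        Function.support f ⊆ {x : Y | R - r ≤ dist x o ∧ dist x o ≤ R + r} →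
        (∫ x, f x ∂μ = 0) →
        h1Norm μ f ≤
          ENNReal.ofReal (C * (1 + Real.log (1 / r)) * Real.exp (ρ * R) * Real.sqrt r) *
            eLpNorm f 2 μ := by
  classical
  have hc₂ : 0 < c₂ := lt_of_lt_of_le hc₁ hc₁₂
  have hlog2 : 0 < Real.log 2 := Real.log_pos one_lt_two
  set Cb := Real.sqrt (c₂ * 2 ^ n / c₁) with hCb
  have hCbnn : 0 ≤ Cb := Real.sqrt_nonneg _
  have hCb1 : 1 ≤ Cb := by
    rw [hCb]
    rw [show (1:ℝ) = Real.sqrt 1 by simp]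
    apply Real.sqrt_le_sqrt
    rw [le_div_iff₀ hc₁]
    have h2n : (1:ℝ) ≤ 2 ^ n := one_le_pow₀ one_le_two
    nlinarith
  set CN := 3 * 2 ^ n * c₂ * Real.exp (4 * ρ) / (2 * c₁) with hCN
  have hCNpos : 0 < CN := by rw [hCN]; positivity
  refine ⟨Real.sqrt (c₂ * CN) + (2 / Real.log 2 + 2) * Cb * Real.sqrt c₂ + 1, by positivity, ?_⟩
  intro Y _ _ _ _ _ μ o hsmall hbig hann r R f hr0 hr1 hrR hf2 hsupp hint
  have hballpos : ∀ (x : Y) (u : ℝ), 0 < u → u ≤ 1 →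
      0 < μ (closedBall x u) ∧ μ (closedBall x u) ≠ ⊤ := by
    intro x u hu0 hu1
    obtain ⟨hlo, hhi⟩ := hsmall x u hu0 hu1
    refine ⟨lt_of_lt_of_le ?_ hlo, ne_top_of_le_ne_top ENNReal.ofReal_ne_top hhi⟩
    rw [show (0:ℝ≥0∞) = ENNReal.ofReal 0 by simp]
    exact ENNReal.ofReal_lt_ofReal_iff_of_nonneg le_rfl |>.mpr (by positivity)
  set A : Set Y := {x : Y | R - r ≤ dist x o ∧ dist x o ≤ R + r} with hA
  have hAmeas : MeasurableSet A := by
    have h1 : A = (fun x => dist x o) ⁻¹' (Set.Icc (R - r) (R + r)) := rfl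
    rw [h1]
    exact (continuous_id.dist continuous_const).measurable measurableSet_Icc
  have hR0 : 0 < R := hr0.trans hrR
  have hμA : μ A ≤ ENNReal.ofReal (c₂ * Real.exp (2*ρ*R) * r) := hann R r hR0 hr0 hr1
  have hμAfin : μ A ≠ ⊤ := ne_top_of_le_ne_top ENNReal.ofReal_ne_top hμA
  set A₃ : Set Y := {x : Y | R - 3/2*r ≤ dist x o ∧ dist x o ≤ R + 3/2*r} with hA₃
  have hexp1 : (1:ℝ) ≤ Real.exp (4*ρ) := by
    rw [show (1:ℝ) = Real.exp 0 by simp]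
    exact Real.exp_le_exp.mpr (by positivity)
  have hμA₃ : μ A₃ ≤ ENNReal.ofReal (c₂ * Real.exp (4*ρ) * Real.exp (2*ρ*R) * (3/2*r)) := by
    by_cases hcase : 3/2*r ≤ 1
    · refine le_trans (hann R (3/2*r) hR0 (by positivity) hcase) ?_
      apply ENNReal.ofReal_le_ofReal
      calc c₂ * Real.exp (2*ρ*R) * (3/2*r) = (c₂ * Real.exp (2*ρ*R) * (3/2*r)) * 1 := by ring
        _ ≤ (c₂ * Real.exp (2*ρ*R) * (3/2*r)) * Real.exp (4*ρ) :=
            mul_le_mul_of_nonneg_left hexp1 (by positivity)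
        _ = c₂ * Real.exp (4*ρ) * Real.exp (2*ρ*R) * (3/2*r) := by ring
    · push_neg at hcase
      have hsub3 : A₃ ⊆ closedBall o (R + 3/2*r) := fun x hx => by
        rw [mem_closedBall]; exact hx.2
      have hrad : 1 < R + 3/2*r := by nlinarith
      refine le_trans (measure_mono hsub3) (le_trans (hbig o _ hrad).2 ?_)
      apply ENNReal.ofReal_le_ofReal
      have hsplit : Real.exp (2*ρ*(R + 3/2*r)) = Real.exp (2*ρ*R) * Real.exp (2*ρ*(3/2*r)) := by
        rw [← Real.exp_add]; ring_nf
      rw [hsplit]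
      have h2 : Real.exp (2*ρ*(3/2*r)) ≤ Real.exp (4*ρ) := Real.exp_le_exp.mpr (by nlinarith)
      have h3 : (1:ℝ) ≤ 3/2*r := hcase.le
      calc c₂ * (Real.exp (2*ρ*R) * Real.exp (2*ρ*(3/2*r)))
          ≤ c₂ * (Real.exp (2*ρ*R) * Real.exp (4*ρ)) := by gcongr
        _ = (c₂ * Real.exp (4*ρ) * Real.exp (2*ρ*R)) * 1 := by ring
        _ ≤ (c₂ * Real.exp (4*ρ) * Real.exp (2*ρ*R)) * (3/2*r) :=
            mul_le_mul_of_nonneg_left h3 (by positivity)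
  obtain ⟨N, s, hsA, hcov, hcount⟩ := exists_good_cover μ A A₃ r hr0
      (ENNReal.ofReal (c₁ * (r/2)^n)) (ENNReal.ofReal (c₂ * Real.exp (4*ρ) * Real.exp (2*ρ*R) * (3/2*r)))
      ((ENNReal.ofReal_pos.mpr (by positivity)).ne')
      ENNReal.ofReal_ne_top
      (fun x _ => (hsmall x (r/2) (by positivity) (by linarith)).1)
      (by
        intro x hx y hy
        rw [mem_closedBall] at hy
        have t1 : dist y o ≤ dist y x + dist x o := dist_triangle y x o
        have t2 : dist x o ≤ dist x y + dist y o := dist_triangle x y o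
        have hxy' : dist x y = dist y x := dist_comm x y
        have hx1 : R - r ≤ dist x o := hx.1
        have hx2 : dist x o ≤ R + r := hx.2
        exact ⟨by linarith, by linarith⟩)
      hμA₃
  have hNrn : (N:ℝ) * r^n ≤ CN * (Real.exp (2*ρ*R) * r) := by
    have h := hcount
    rw [← ENNReal.ofReal_natCast, ← ENNReal.ofReal_mul (by positivity)] at h
    have hNr : (N:ℝ) * (c₁ * (r/2)^n) ≤ c₂ * Real.exp (4*ρ) * Real.exp (2*ρ*R) * (3/2*r) :=
      (ENNReal.ofReal_le_ofReal_iff (by positivity)).mp h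
    have h2n : (0:ℝ) < 2^n := by positivity
    rw [div_pow] at hNr
    have hNr2 : ((N:ℝ) * c₁ * r^n)/2^n ≤ c₂ * Real.exp (4*ρ) * Real.exp (2*ρ*R) * (3/2*r) := by
      rw [show ((N:ℝ) * c₁ * r^n)/2^n = (N:ℝ)*(c₁*(r^n/2^n)) by ring]
      exact hNr
    have hNr3 := (div_le_iff₀ h2n).mp hNr2
    rw [hCN, div_mul_eq_mul_div, le_div_iff₀ (by positivity)]
    nlinarith [hNr3]
  -- partition
  set Ball : Fin N → Set Y := fun i => closedBall (s i) r with hBall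
  set E : Fin N → Set Y := fun i => (A ∩ Ball i) \ (⋃ j : Fin N, ⋃ (_ : j < i), Ball j) with hE
  have hEmeas : ∀ i, MeasurableSet (E i) := by
    intro i
    refine MeasurableSet.diff (hAmeas.inter measurableSet_closedBall) ?_
    exact MeasurableSet.iUnion fun j => MeasurableSet.iUnion fun _ => measurableSet_closedBall
  have hEsubA : ∀ i, E i ⊆ A := fun i y hy => hy.1.1
  have hEsubB : ∀ i, E i ⊆ Ball i := fun i y hy => hy.1.2
  have hEdisj : Pairwise (Function.onFun Disjoint E) := by
    have key : ∀ i j : Fin N, i < j → Disjoint (E i) (E j) := by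
      intro i j h
      refine Set.disjoint_left.mpr fun y hyi hyj => ?_
      exact hyj.2 (Set.mem_iUnion.mpr ⟨i, Set.mem_iUnion.mpr ⟨h, hyi.1.2⟩⟩)
    intro i j hij
    rcases hij.lt_or_gt with h | h
    · exact key i j h
    · exact (key j i h).symm
  have hEex : ∀ x ∈ A, ∃ i, x ∈ E i ∧ ∀ j, j ≠ i → x ∉ E j := by
    intro x hx
    have hne : (Finset.univ.filter (fun i => x ∈ Ball i)).Nonempty := by
      obtain ⟨i, hi⟩ := hcov x hx
      exact ⟨i, by simp [hBall, Metric.mem_closedBall, hi]⟩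
    set i₀ := (Finset.univ.filter (fun i => x ∈ Ball i)).min' hne with hi₀
    have hi₀mem : x ∈ Ball i₀ := by
      have := Finset.min'_mem _ hne
      simpa using this
    have hmin : ∀ j, x ∈ Ball j → i₀ ≤ j := fun j hj => Finset.min'_le _ _ (by simpa using hj)
    refine ⟨i₀, ⟨⟨hx, hi₀mem⟩, ?_⟩, ?_⟩
    · intro hcon
      rw [Set.mem_iUnion] at hcon
      obtain ⟨j, hcon⟩ := hcon
      rw [Set.mem_iUnion] at hcon
      obtain ⟨hji, hj⟩ := hcon
      exact absurd (hmin j hj) (not_le.mpr hji)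
    · intro j hji hyj
      rcases lt_or_gt_of_ne hji with h | h
      · exact absurd (hmin j hyj.1.2) (not_le.mpr h)
      · exact hyj.2 (Set.mem_iUnion.mpr ⟨i₀, Set.mem_iUnion.mpr ⟨h, hi₀mem⟩⟩)
  have hsum_ind : ∀ x, ∑ i, (E i).indicator f x = f x := by
    intro x
    by_cases hx : x ∈ A
    · obtain ⟨i₀, hxi₀, huniq⟩ := hEex x hx
      rw [Finset.sum_eq_single i₀]
      · exact Set.indicator_of_mem hxi₀ f
      · intro j _ hj
        exact Set.indicator_of_notMem (huniq j hj) f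
      · intro h
        exact absurd (Finset.mem_univ i₀) h
    · have hfx : f x = 0 := by
        by_contra h
        exact hx (hsupp (Function.mem_support.mpr h))
      rw [hfx]
      refine Finset.sum_eq_zero fun i _ => ?_
      exact Set.indicator_of_notMem (fun hc => hx (hEsubA i hc)) f
  -- dyadic radii
  set K := ⌊Real.logb 2 (1/r)⌋₊ with hKdef
  set t : ℕ → ℝ := fun k => 2^k * r with htdef
  have ht0' : t 0 = r := by simp [htdef]
  have htpos : ∀ k, 0 < t k := fun k => by simp only [htdef]; positivity
  have hinv1 : (1:ℝ) ≤ 1/r := by rw [le_div_iff₀ hr0]; linarith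
  have hlogb0 : 0 ≤ Real.logb 2 (1/r) := Real.logb_nonneg one_lt_two hinv1
  have h2K : (2:ℝ)^K ≤ 1/r := by
    have h1 : (K:ℝ) ≤ Real.logb 2 (1/r) := Nat.floor_le hlogb0
    calc (2:ℝ)^K = (2:ℝ)^(K:ℝ) := by rw [Real.rpow_natCast]
      _ ≤ (2:ℝ)^(Real.logb 2 (1/r)) := Real.rpow_le_rpow_of_exponent_le one_le_two h1
      _ = 1/r := Real.rpow_logb two_pos (by norm_num) (by positivity)
  have htK1 : ∀ k ≤ K, t k ≤ 1 := by
    intro k hk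
    have h1 : (2:ℝ)^k ≤ 2^K := pow_le_pow_right₀ one_le_two hk
    have h2 : (2:ℝ)^k ≤ 1/r := le_trans h1 h2K
    have h3 : (2:ℝ)^k * r ≤ (1/r) * r := mul_le_mul_of_nonneg_right h2 hr0.le
    rw [htdef]
    simp only []
    rwa [one_div, inv_mul_cancel₀ hr0.ne'] at h3
  have htmono : ∀ k, t k ≤ t (k+1) := by
    intro k
    simp only [htdef, pow_succ]
    nlinarith [pow_pos (two_pos (α := ℝ)) k]
  have htKlow : 1/2 < t K := by
    have h1 : Real.logb 2 (1/r) < (K:ℝ) + 1 := by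
      have := Nat.lt_succ_floor (Real.logb 2 (1/r))
      push_cast at this
      linarith
    have h2 : (1:ℝ)/r < 2^((K:ℝ)+1) := by
      calc 1/r = 2^(Real.logb 2 (1/r)) := (Real.rpow_logb two_pos (by norm_num) (by positivity)).symm
        _ < 2^((K:ℝ)+1) := Real.rpow_lt_rpow_of_exponent_lt one_lt_two h1
    have h3 : (2:ℝ)^((K:ℝ)+1) = 2^(K+1 : ℕ) := by
      rw [← Real.rpow_natCast]
      push_cast
      ring_nf
    rw [h3] at h2
    rw [div_lt_iff₀ hr0] at h2
    have h4 : (2:ℝ)^(K+1:ℕ) = 2 * 2^K := by rw [pow_succ]; ring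
    rw [h4] at h2
    simp only [htdef]
    nlinarith [pow_pos (two_pos (α := ℝ)) K]
  have hKlog : (K:ℝ) ≤ Real.log (1/r) / Real.log 2 := by
    have h1 : (K:ℝ) ≤ Real.logb 2 (1/r) := Nat.floor_le hlogb0
    rwa [Real.logb] at h1
  -- balls and bump functions
  set Bl : Fin N → ℕ → Set Y := fun i k => closedBall (s i) (t k) with hBl
  set b : Fin N → ℕ → ℝ := fun i k => (μ (Bl i k)).toReal with hbdef
  have hμBl : ∀ (i : Fin N), ∀ k ≤ K, ENNReal.ofReal (c₁ * (t k)^n) ≤ μ (Bl i k) ∧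
      μ (Bl i k) ≤ ENNReal.ofReal (c₂ * (t k)^n) :=
    fun i k hk => hsmall (s i) (t k) (htpos k) (htK1 k hk)
  have hμBlfin : ∀ (i : Fin N), ∀ k ≤ K, μ (Bl i k) ≠ ⊤ :=
    fun i k hk => ne_top_of_le_ne_top ENNReal.ofReal_ne_top (hμBl i k hk).2
  have hμBlpos : ∀ (i : Fin N), ∀ k ≤ K, 0 < μ (Bl i k) :=
    fun i k hk => (hballpos (s i) (t k) (htpos k) (htK1 k hk)).1
  have hbbounds : ∀ (i : Fin N), ∀ k ≤ K, c₁ * (t k)^n ≤ b i k ∧ b i k ≤ c₂ * (t k)^n := by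
    intro i k hk
    obtain ⟨hlo, hhi⟩ := hμBl i k hk
    constructor
    · have h1 := ENNReal.toReal_mono (hμBlfin i k hk) hlo
      rwa [ENNReal.toReal_ofReal (by positivity)] at h1
    · have h1 := ENNReal.toReal_mono ENNReal.ofReal_ne_top hhi
      rwa [ENNReal.toReal_ofReal (by positivity)] at h1
  have hbpos : ∀ (i : Fin N), ∀ k ≤ K, 0 < b i k :=
    fun i k hk => lt_of_lt_of_le (by positivity) (hbbounds i k hk).1
  have hμBl_eq : ∀ (i : Fin N), ∀ k ≤ K, μ (Bl i k) = ENNReal.ofReal (b i k) :=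
    fun i k hk => (ENNReal.ofReal_toReal (hμBlfin i k hk)).symm
  set g : Fin N → ℕ → Y → ℝ :=
    fun i k => fun y => (b i k)⁻¹ * Set.indicator (Bl i k) (fun _ => (1:ℝ)) y with hgdef
  have hgmem : ∀ (i : Fin N), ∀ k ≤ K, MemLp (g i k) 2 μ := fun i k hk =>
    (memLp_indicator_const 2 measurableSet_closedBall 1 (Or.inr (hμBlfin i k hk))).const_mul _
  have hgintble : ∀ (i : Fin N), ∀ k ≤ K, Integrable (g i k) μ := by
    intro i k hk
    apply Integrable.const_mul
    rw [integrable_indicator_iff measurableSet_closedBall]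
    exact integrableOn_const (hμBlfin i k hk)
  have hgint : ∀ (i : Fin N), ∀ k ≤ K, ∫ y, g i k y ∂μ = 1 := by
    intro i k hk
    rw [hgdef]
    simp only []
    rw [integral_const_mul, integral_indicator_const (1:ℝ) measurableSet_closedBall]
    simp only [smul_eq_mul, mul_one]
    exact inv_mul_cancel₀ (hbpos i k hk).ne'
  have hgsupp : ∀ (i : Fin N) (k : ℕ), Function.support (g i k) ⊆ Bl i k := by
    intro i k y hy
    simp only [hgdef, Function.mem_support] at hy
    by_contra hcon
    exact hy (by rw [Set.indicator_of_notMem hcon]; ring)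
  have hgnorm : ∀ (i : Fin N), ∀ k ≤ K,
      eLpNorm (g i k) 2 μ = ENNReal.ofReal ((Real.sqrt (b i k))⁻¹) := by
    intro i k hk
    have h1 : g i k = (b i k)⁻¹ • (Set.indicator (Bl i k) (fun _ => (1:ℝ))) := rfl
    rw [h1, eLpNorm_const_smul,
      eLpNorm_indicator_const measurableSet_closedBall two_ne_zero ENNReal.ofNat_ne_top,
      hμBl_eq i k hk]
    have htr : (1 : ℝ) / (2:ℝ≥0∞).toReal = (1/2 : ℝ) := by norm_num
    rw [htr, ENNReal.ofReal_rpow_of_pos (hbpos i k hk)]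
    have hsq : Real.sqrt (b i k) ≠ 0 := (Real.sqrt_pos.mpr (hbpos i k hk)).ne'
    rw [Real.enorm_eq_ofReal (by positivity : (0:ℝ) ≤ (b i k)⁻¹)]
    simp only [enorm_one, one_mul]
    rw [← ENNReal.ofReal_mul (by positivity)]
    congr 1
    rw [← Real.sqrt_eq_rpow]
    exact inv_mul_sqrt _ (hbpos i k hk)
  -- masses and L² norms of the pieces of f
  set m : Fin N → ℝ := fun i => ∫ y in E i, f y ∂μ with hmdef
  set q : Fin N → ℝ := fun i => (eLpNorm f 2 (μ.restrict (E i))).toReal with hqdef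
  have hqnn : ∀ i, 0 ≤ q i := fun i => ENNReal.toReal_nonneg
  have hBl0 : ∀ i : Fin N, Bl i 0 = Ball i := by
    intro i
    simp only [hBl, hBall, ht0']
  have hμE : ∀ i, μ (E i) ≤ μ (Bl i 0) := by
    intro i
    refine measure_mono ?_
    rw [hBl0 i]
    exact hEsubB i
  have hμEfin : ∀ i, μ (E i) ≠ ⊤ :=
    fun i => ne_top_of_le_ne_top (hμBlfin i 0 (Nat.zero_le K)) (hμE i)
  have hsnfin : ∀ i, eLpNorm f 2 (μ.restrict (E i)) ≠ ⊤ := by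
    intro i
    rw [← eLpNorm_indicator_eq_eLpNorm_restrict (hEmeas i)]
    exact ne_top_of_le_ne_top hf2.2.ne (eLpNorm_indicator_le f)
  have hind_eq : ∀ i, eLpNorm ((E i).indicator f) 2 μ = ENNReal.ofReal (q i) := by
    intro i
    rw [eLpNorm_indicator_eq_eLpNorm_restrict (hEmeas i), hqdef]
    exact (ENNReal.ofReal_toReal (hsnfin i)).symm
  set nf := (eLpNorm f 2 μ).toReal with hnfdef
  have hnffin : eLpNorm f 2 μ ≠ ⊤ := hf2.2.ne
  have hnf_eq : eLpNorm f 2 μ = ENNReal.ofReal nf := (ENNReal.ofReal_toReal hnffin).symm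
  have hnfnn : 0 ≤ nf := ENNReal.toReal_nonneg
  have hmq : ∀ i, |m i| ≤ q i * Real.sqrt ((μ (E i)).toReal) :=
    fun i => abs_setIntegral_le μ f (E i) (hEmeas i) (hμEfin i) hf2
  have hq2 : ∑ i, q i ^ 2 ≤ nf ^ 2 := by
    have h := sum_eLpNorm_restrict_sq_le μ f Finset.univ E (fun i _ => hEmeas i)
      (by
        intro i _ j _ hij
        exact hEdisj hij)
    have hfin : ∀ i ∈ Finset.univ, (eLpNorm f 2 (μ.restrict (E i)))^2 ≠ ⊤ :=
      fun i _ => ENNReal.pow_ne_top (hsnfin i)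
    have h2 := ENNReal.toReal_mono (ENNReal.pow_ne_top hnffin) h
    rw [ENNReal.toReal_sum hfin] at h2
    have h3 : ∀ i : Fin N, ((eLpNorm f 2 (μ.restrict (E i)))^2).toReal = q i ^ 2 := fun i => by
      rw [ENNReal.toReal_pow]
    calc ∑ i, q i ^ 2 = ∑ i, ((eLpNorm f 2 (μ.restrict (E i)))^2).toReal :=
          Finset.sum_congr rfl (fun i _ => (h3 i).symm)
      _ ≤ ((eLpNorm f 2 μ)^2).toReal := h2
      _ = nf ^ 2 := by rw [ENNReal.toReal_pow]
  have sqrt_le_of_sq_le : ∀ x y : ℝ, 0 ≤ x → x^2 ≤ y → x ≤ Real.sqrt y := by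
    intro x y hx hxy
    rw [show x = Real.sqrt (x^2) from (Real.sqrt_sq hx).symm]
    exact Real.sqrt_le_sqrt hxy
  have hsumq : ∑ i, q i ≤ Real.sqrt (N : ℝ) * nf := by
    have hCS := Finset.sum_mul_sq_le_sq_mul_sq Finset.univ q (fun _ => (1:ℝ))
    simp only [mul_one, one_pow, Finset.sum_const, Finset.card_univ, Fintype.card_fin,
      nsmul_eq_mul, mul_one] at hCS
    have h2 : (∑ i, q i)^2 ≤ (N:ℝ) * nf^2 := by
      calc (∑ i, q i)^2 ≤ (∑ i, q i ^2) * (N:ℝ) := hCS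
        _ ≤ nf^2 * (N:ℝ) := by
            apply mul_le_mul_of_nonneg_right hq2 (Nat.cast_nonneg N)
        _ = (N:ℝ) * nf^2 := by ring
    have h3 : 0 ≤ ∑ i, q i := Finset.sum_nonneg fun i _ => hqnn i
    calc ∑ i, q i ≤ Real.sqrt ((N:ℝ) * nf^2) := sqrt_le_of_sq_le _ _ h3 h2
      _ = Real.sqrt (N:ℝ) * nf := by
          rw [Real.sqrt_mul (Nat.cast_nonneg N), Real.sqrt_sq hnfnn]
  have hsumE : ∑ i, (μ (E i)).toReal ≤ c₂ * Real.exp (2*ρ*R) * r := by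
    have h1 : ∑ i ∈ Finset.univ, μ (E i) = μ (⋃ i ∈ Finset.univ, E i) := by
      refine (measure_biUnion_finset ?_ (fun i _ => hEmeas i)).symm
      intro i _ j _ hij
      exact hEdisj hij
    have h2 : μ (⋃ i ∈ Finset.univ, E i) ≤ μ A :=
      measure_mono (Set.iUnion₂_subset fun i _ => hEsubA i)
    have h3 : ∑ i ∈ Finset.univ, μ (E i) ≤ ENNReal.ofReal (c₂ * Real.exp (2*ρ*R) * r) :=
      h1 ▸ (h2.trans hμA)
    have h4 := ENNReal.toReal_mono ENNReal.ofReal_ne_top h3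
    rw [ENNReal.toReal_sum (fun i _ => hμEfin i)] at h4
    rwa [ENNReal.toReal_ofReal (by positivity)] at h4
  have hsumm : ∑ i, |m i| ≤ Real.sqrt (c₂ * Real.exp (2*ρ*R) * r) * nf := by
    have hstep : ∑ i, |m i| ≤ ∑ i, q i * Real.sqrt ((μ (E i)).toReal) :=
      Finset.sum_le_sum fun i _ => hmq i
    have hCS := Finset.sum_mul_sq_le_sq_mul_sq Finset.univ q
      (fun i => Real.sqrt ((μ (E i)).toReal))
    have hsq : ∀ i : Fin N, Real.sqrt ((μ (E i)).toReal)^2 = (μ (E i)).toReal :=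
      fun i => Real.sq_sqrt ENNReal.toReal_nonneg
    rw [Finset.sum_congr rfl (fun i _ => hsq i)] at hCS
    have h2 : (∑ i, q i * Real.sqrt ((μ (E i)).toReal))^2 ≤ nf^2 * (c₂ * Real.exp (2*ρ*R) * r) := by
      calc (∑ i, q i * Real.sqrt ((μ (E i)).toReal))^2
          ≤ (∑ i, q i ^2) * (∑ i, (μ (E i)).toReal) := hCS
        _ ≤ nf^2 * (c₂ * Real.exp (2*ρ*R) * r) := by
            apply mul_le_mul hq2 hsumE (Finset.sum_nonneg fun i _ => ENNReal.toReal_nonneg)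
            positivity
    have h3 : 0 ≤ ∑ i, q i * Real.sqrt ((μ (E i)).toReal) :=
      Finset.sum_nonneg fun i _ => mul_nonneg (hqnn i) (Real.sqrt_nonneg _)
    calc ∑ i, |m i| ≤ ∑ i, q i * Real.sqrt ((μ (E i)).toReal) := hstep
      _ ≤ Real.sqrt (nf^2 * (c₂ * Real.exp (2*ρ*R) * r)) := sqrt_le_of_sq_le _ _ h3 h2
      _ = nf * Real.sqrt (c₂ * Real.exp (2*ρ*R) * r) := by
          rw [Real.sqrt_mul (by positivity), Real.sqrt_sq hnfnn]
      _ = Real.sqrt (c₂ * Real.exp (2*ρ*R) * r) * nf := by ring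
  -- the pieces
  set P : Fin N → Y → ℝ := fun i => (E i).indicator f - (m i) • g i 0 with hPdef
  set T : Fin N → ℕ → Y → ℝ := fun i k => (m i) • (g i k - g i (k+1)) with hTdef
  set G : Fin N → Y → ℝ := fun i => (m i) • g i K with hGdef
  set U : Fin N → ℕ → Y → ℝ :=
    fun i k => if k = 0 then P i else if k = K + 1 then G i else T i (k-1) with hUdef
  have hUsum : ∀ (i : Fin N) (x : Y), ∑ k ∈ Finset.range (K+2), U i k x = (E i).indicator f x := by
    intro i x
    rw [Finset.sum_range_succ, Finset.sum_range_succ']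
    have hU0 : U i 0 = P i := by simp only [hUdef, if_pos rfl]
    have hUK : U i (K+1) = G i := by
      simp [hUdef]
    have hmid : ∀ k ∈ Finset.range K, U i (k+1) x = T i k x := by
      intro k hk
      rw [Finset.mem_range] at hk
      have h1 : k + 1 ≠ 0 := Nat.succ_ne_zero k
      have h2 : k + 1 ≠ K + 1 := by omega
      simp only [hUdef, if_neg h1, if_neg h2, Nat.add_sub_cancel]
    rw [Finset.sum_congr rfl hmid, hU0, hUK]
    have htel : ∑ k ∈ Finset.range K, T i k x = m i * (g i 0 x - g i K x) := by
      have h := Finset.sum_range_sub' (fun k => m i * g i k x) K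
      have h2 : ∀ k, T i k x = m i * g i k x - m i * g i (k+1) x := by
        intro k
        simp only [hTdef, Pi.smul_apply, Pi.sub_apply, smul_eq_mul]
        ring
      rw [Finset.sum_congr rfl (fun k _ => h2 k), h]
      ring
    rw [htel]
    simp only [hPdef, hGdef, Pi.sub_apply, Pi.smul_apply, smul_eq_mul]
    ring
  have hfsum : ∀ x, f x = ∑ p : Fin N × Fin (K+2), U p.1 (p.2 : ℕ) x := by
    intro x
    rw [Fintype.sum_prod_type]
    have h1 : ∀ i : Fin N, ∑ k : Fin (K+2), U i (k:ℕ) x = (E i).indicator f x := by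
      intro i
      rw [Fin.sum_univ_eq_sum_range (fun k => U i k x) (K+2)]
      exact hUsum i x
    rw [Finset.sum_congr rfl (fun i _ => h1 i)]
    exact (hsum_ind x).symm
  -- radius of the ball associated with each piece
  set rad : ℕ → ℝ := fun k => if k = K+1 then 1 else t k with hraddef
  have hrad0 : rad 0 = r := by
    simp only [hraddef]
    rw [if_neg (by omega)]
    exact ht0'
  have hradmid : ∀ j, j + 1 ≠ K + 1 → rad (j+1) = t (j+1) := by
    intro j hj
    simp only [hraddef]
    rw [if_neg hj]
  have hradtop : rad (K+1) = 1 := by simp [hraddef]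
  haveI hEfinmeas : ∀ i : Fin N, IsFiniteMeasure (μ.restrict (E i)) := by
    intro i
    exact ⟨by rw [Measure.restrict_apply_univ]; exact (hμEfin i).lt_top⟩
  have hintble_ind : ∀ i : Fin N, Integrable ((E i).indicator f) μ := by
    intro i
    rw [integrable_indicator_iff (hEmeas i)]
    exact (hf2.restrict (E i)).integrable one_le_two
  have hint_ind : ∀ i : Fin N, ∫ y, (E i).indicator f y ∂μ = m i := by
    intro i
    rw [integral_indicator (hEmeas i)]
  have hfact : ∀ p : Fin N × Fin (K+2), ∃ (lam : ℝ) (gg : Y → ℝ), 0 ≤ lam ∧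
      ENNReal.ofReal lam =
        eLpNorm (U p.1 (p.2:ℕ)) 2 μ * μ (closedBall (s p.1) (rad (p.2:ℕ))) ^ (1/2 : ℝ) ∧
      (U p.1 (p.2:ℕ) =ᵐ[μ] fun y => lam * gg y) ∧ IsAdmissibleAtom μ gg := by
    rintro ⟨i, k⟩
    simp only []
    by_cases hk0 : (k:ℕ) = 0
    · -- standard atom at radius r with zero integral
      rw [hk0, hrad0]
      have hU : U i 0 = P i := by simp [hUdef]
      rw [hU]
      have hmem : MemLp (P i) 2 μ := by
        rw [hPdef]
        exact (hf2.indicator (hEmeas i)).sub ((hgmem i 0 (Nat.zero_le K)).const_smul (m i))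
      have hsuppP : Function.support (P i) ⊆ closedBall (s i) r := by
        rw [hPdef]
        refine subset_trans (Function.support_sub _ _) ?_
        apply Set.union_subset
        · refine subset_trans (Set.support_indicator_subset) ?_
          refine subset_trans (hEsubB i) ?_
          rw [hBall]
        · refine subset_trans (Function.support_const_smul_subset _ _) ?_
          refine subset_trans (hgsupp i 0) ?_
          intro y hy
          have hy' : y ∈ closedBall (s i) (t 0) := hy
          rwa [ht0'] at hy'
      have hintP : ∫ y, P i y ∂μ = 0 := by
        rw [hPdef]
        have h1 : ∫ y, ((E i).indicator f - m i • g i 0) y ∂μ =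
            (∫ y, (E i).indicator f y ∂μ) - ∫ y, (m i • g i 0) y ∂μ :=
          integral_sub (hintble_ind i) ((hgintble i 0 (Nat.zero_le K)).smul (m i))
        rw [h1, hint_ind i]
        have h2 : ∫ y, (m i • g i 0) y ∂μ = m i * ∫ y, g i 0 y ∂μ := by
          simp only [Pi.smul_apply, smul_eq_mul]
          exact integral_const_mul _ _
        rw [h2, hgint i 0 (Nat.zero_le K), mul_one, sub_self]
      exact exists_atom_factor μ (P i) hmem (s i) r hr0 hr1
        (hballpos (s i) r hr0 hr1).1 (hballpos (s i) r hr0 hr1).2 hsuppP (Or.inr hintP)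
    · by_cases hktop : (k:ℕ) = K + 1
      · -- global atom at radius 1
        rw [hktop, hradtop]
        have hU : U i (K+1) = G i := by simp [hUdef]
        rw [hU]
        have hmem : MemLp (G i) 2 μ := by
          rw [hGdef]
          exact (hgmem i K le_rfl).const_smul (m i)
        have hsuppG : Function.support (G i) ⊆ closedBall (s i) 1 := by
          rw [hGdef]
          refine subset_trans (Function.support_const_smul_subset _ _) ?_
          refine subset_trans (hgsupp i K) ?_
          rw [hBl]
          exact closedBall_subset_closedBall (htK1 K le_rfl)
        exact exists_atom_factor μ (G i) hmem (s i) 1 one_pos le_rfl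
          (hballpos (s i) 1 one_pos le_rfl).1 (hballpos (s i) 1 one_pos le_rfl).2
          hsuppG (Or.inl rfl)
      · -- middle telescoping atom
        obtain ⟨j, hj⟩ : ∃ j, (k:ℕ) = j + 1 := ⟨(k:ℕ) - 1, by omega⟩
        have hjK : j + 1 ≤ K := by
          have := k.isLt
          omega
        have hjK' : j ≤ K := by omega
        rw [hj, hradmid j (by omega)]
        have hU : U i (j+1) = T i j := by
          simp only [hUdef]
          rw [if_neg (by omega), if_neg (by omega)]
          simp
        rw [hU]
        have hmem : MemLp (T i j) 2 μ := by
          rw [hTdef]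
          exact ((hgmem i j hjK').sub (hgmem i (j+1) hjK)).const_smul (m i)
        have hsuppT : Function.support (T i j) ⊆ closedBall (s i) (t (j+1)) := by
          rw [hTdef]
          refine subset_trans (Function.support_const_smul_subset _ _) ?_
          refine subset_trans (Function.support_sub _ _) ?_
          apply Set.union_subset
          · refine subset_trans (hgsupp i j) ?_
            rw [hBl]
            exact closedBall_subset_closedBall (htmono j)
          · exact hgsupp i (j+1)
        have hintT : ∫ y, T i j y ∂μ = 0 := by
          rw [hTdef]
          have h1 : ∫ y, (m i • (g i j - g i (j+1))) y ∂μ =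
              m i * ∫ y, (g i j - g i (j+1)) y ∂μ := by
            simp only [Pi.smul_apply, smul_eq_mul]
            exact integral_const_mul _ _
          rw [h1]
          have h2 : ∫ y, (g i j - g i (j+1)) y ∂μ =
              (∫ y, g i j y ∂μ) - ∫ y, g i (j+1) y ∂μ :=
            integral_sub (hgintble i j hjK') (hgintble i (j+1) hjK)
          rw [h2, hgint i j hjK', hgint i (j+1) hjK, sub_self, mul_zero]
        exact exists_atom_factor μ (T i j) hmem (s i) (t (j+1)) (htpos (j+1)) (htK1 (j+1) hjK)
          (hballpos (s i) (t (j+1)) (htpos (j+1)) (htK1 (j+1) hjK)).1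
          (hballpos (s i) (t (j+1)) (htpos (j+1)) (htK1 (j+1) hjK)).2
          hsuppT (Or.inr hintT)
  choose lam gg hlam0 hlameq hlamae hlamatom using hfact
  have hae : ∀ᵐ x ∂μ, ∀ p : Fin N × Fin (K+2), U p.1 (p.2:ℕ) x = lam p * gg p x := by
    rw [ae_all_iff]
    intro p
    exact hlamae p
  have heq : f =ᵐ[μ] fun x => ∑ p : Fin N × Fin (K+2), lam p * gg p x := by
    filter_upwards [hae] with x hx
    rw [hfsum x]
    exact Finset.sum_congr rfl fun p _ => hx p
  have hble := h1Norm_le_of_fintype_sum μ o f lam gg hlamatom heq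
  -- express the half powers of ball measures
  have hrpow : ∀ (i : Fin N), ∀ k ≤ K,
      μ (Bl i k) ^ (1/2:ℝ) = ENNReal.ofReal (Real.sqrt (b i k)) := by
    intro i k hk
    rw [hμBl_eq i k hk, ENNReal.ofReal_rpow_of_pos (hbpos i k hk), ← Real.sqrt_eq_rpow]
  set b1 : Fin N → ℝ := fun i => (μ (closedBall (s i) 1)).toReal with hb1def
  have hb1fin : ∀ i : Fin N, μ (closedBall (s i) 1) ≠ ⊤ :=
    fun i => (hballpos (s i) 1 one_pos le_rfl).2
  have hb1pos : ∀ i : Fin N, 0 < b1 i :=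
    fun i => ENNReal.toReal_pos (hballpos (s i) 1 one_pos le_rfl).1.ne' (hb1fin i)
  have hb1le : ∀ i : Fin N, b1 i ≤ c₂ := by
    intro i
    have h := (hsmall (s i) 1 one_pos le_rfl).2
    have h2 := ENNReal.toReal_mono ENNReal.ofReal_ne_top h
    rw [ENNReal.toReal_ofReal (by positivity)] at h2
    simpa using h2
  have hrpow1 : ∀ i : Fin N,
      μ (closedBall (s i) 1) ^ (1/2:ℝ) = ENNReal.ofReal (Real.sqrt (b1 i)) := by
    intro i
    conv_lhs => rw [← ENNReal.ofReal_toReal (hb1fin i)]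
    rw [ENNReal.ofReal_rpow_of_pos (hb1pos i), ← Real.sqrt_eq_rpow]
  have hsmulnorm : ∀ (i : Fin N) (k : ℕ) (c : ℝ), k ≤ K →
      eLpNorm (c • g i k) 2 μ = ENNReal.ofReal (|c| * (Real.sqrt (b i k))⁻¹) := by
    intro i k c hk
    rw [eLpNorm_const_smul, hgnorm i k hk, Real.enorm_eq_ofReal_abs,
      ← ENNReal.ofReal_mul (abs_nonneg c)]
  have hlam_le : ∀ (p : Fin N × Fin (K+2)) (c : ℝ), 0 ≤ c →
      eLpNorm (U p.1 (p.2:ℕ)) 2 μ * μ (closedBall (s p.1) (rad (p.2:ℕ))) ^ (1/2:ℝ) ≤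
        ENNReal.ofReal c →
      lam p ≤ c := by
    intro p c hc hle
    have h1 : ENNReal.ofReal (lam p) ≤ ENNReal.ofReal c := le_trans (le_of_eq (hlameq p)) hle
    exact (ENNReal.ofReal_le_ofReal_iff hc).mp h1
  have hBlr : ∀ i : Fin N, Bl i 0 = closedBall (s i) r := by
    intro i
    rw [hBl0 i]
  have hsqstep : ∀ (i : Fin N) (j : ℕ), j + 1 ≤ K →
      Real.sqrt (b i (j+1)) ≤ Cb * Real.sqrt (b i j) := by
    intro i j hj
    have hCb2 : Cb^2 = c₂ * 2^n / c₁ := Real.sq_sqrt (by positivity)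
    have h1 : b i (j+1) ≤ Cb^2 * b i j := by
      have hb1' := (hbbounds i (j+1) hj).2
      have hb2 := (hbbounds i j (by omega)).1
      have ht2 : t (j+1) = 2 * t j := by
        simp only [htdef, pow_succ]
        ring
      rw [ht2] at hb1'
      have h3 : c₂ * (2 * t j)^n = (c₂ * 2^n / c₁) * (c₁ * (t j)^n) := by
        field_simp
        ring
      rw [hCb2]
      calc b i (j+1) ≤ c₂ * (2 * t j)^n := hb1'
        _ = (c₂ * 2^n / c₁) * (c₁ * (t j)^n) := h3
        _ ≤ (c₂ * 2^n / c₁) * b i j := mul_le_mul_of_nonneg_left hb2 (by positivity)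
    calc Real.sqrt (b i (j+1)) ≤ Real.sqrt (Cb^2 * b i j) := Real.sqrt_le_sqrt h1
      _ = Cb * Real.sqrt (b i j) := by
          rw [Real.sqrt_mul (by positivity), Real.sqrt_sq hCbnn]
  have hsqtop : ∀ i : Fin N, Real.sqrt (b1 i) ≤ Cb * Real.sqrt (b i K) := by
    intro i
    have hCb2 : Cb^2 = c₂ * 2^n / c₁ := Real.sq_sqrt (by positivity)
    have h1 : b1 i ≤ Cb^2 * b i K := by
      have hbK := (hbbounds i K le_rfl).1
      have htKn : (1/2:ℝ)^n ≤ (t K)^n := pow_le_pow_left₀ (by norm_num) htKlow.le n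
      have h2 : (2:ℝ)^n * (1/2)^n = 1 := by
        rw [← mul_pow]
        norm_num
      have h3 : c₂ ≤ (c₂ * 2^n / c₁) * (c₁ * (t K)^n) := by
        rw [show (c₂ * 2^n / c₁) * (c₁ * (t K)^n) = c₂ * (2^n * (t K)^n) by field_simp]
        nlinarith [mul_le_mul_of_nonneg_left htKn (by positivity : (0:ℝ) ≤ 2^n)]
      rw [hCb2]
      calc b1 i ≤ c₂ := hb1le i
        _ ≤ (c₂ * 2^n / c₁) * (c₁ * (t K)^n) := h3
        _ ≤ (c₂ * 2^n / c₁) * b i K := mul_le_mul_of_nonneg_left hbK (by positivity)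
    calc Real.sqrt (b1 i) ≤ Real.sqrt (Cb^2 * b i K) := Real.sqrt_le_sqrt h1
      _ = Cb * Real.sqrt (b i K) := by
          rw [Real.sqrt_mul (by positivity), Real.sqrt_sq hCbnn]
  -- per-piece coefficient bounds
  set lam' : Fin N → ℕ → ℝ :=
    fun i kk => if h : kk < K+2 then lam (i, ⟨kk, h⟩) else 0 with hlam'def
  have hlam'nn : ∀ i kk, 0 ≤ lam' i kk := by
    intro i kk
    simp only [hlam'def]
    split
    · exact hlam0 _
    · exact le_rfl
  have hbound0 : ∀ i : Fin N, lam' i 0 ≤ q i * Real.sqrt (c₂ * r^n) + Cb * |m i| := by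
    intro i
    have h0 : (0:ℕ) < K + 2 := by omega
    have hl : lam' i 0 = lam (i, ⟨0, h0⟩) := by simp [hlam'def]
    rw [hl]
    apply hlam_le _ _ (add_nonneg (mul_nonneg (hqnn i) (Real.sqrt_nonneg _))
      (mul_nonneg hCbnn (abs_nonneg _)))
    show eLpNorm (U i 0) 2 μ * μ (closedBall (s i) (rad 0)) ^ (1/2:ℝ) ≤ _
    have hU0 : U i 0 = P i := by simp [hUdef]
    rw [hU0, hrad0]
    have hPsub : P i = (E i).indicator f - m i • g i 0 := rfl
    have htri : eLpNorm (P i) 2 μ ≤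
        ENNReal.ofReal (q i) + ENNReal.ofReal (|m i| * (Real.sqrt (b i 0))⁻¹) := by
      rw [hPsub]
      refine le_trans (eLpNorm_sub_le (hf2.indicator (hEmeas i)).aestronglyMeasurable
        (((hgmem i 0 (Nat.zero_le K)).const_smul (m i)).aestronglyMeasurable) one_le_two) ?_
      rw [hind_eq i, hsmulnorm i 0 (m i) (Nat.zero_le K)]
    calc eLpNorm (P i) 2 μ * μ (closedBall (s i) r) ^ (1/2:ℝ)
        = eLpNorm (P i) 2 μ * ENNReal.ofReal (Real.sqrt (b i 0)) := by
          rw [← hBlr i, hrpow i 0 (Nat.zero_le K)]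
      _ ≤ (ENNReal.ofReal (q i) + ENNReal.ofReal (|m i| * (Real.sqrt (b i 0))⁻¹)) *
            ENNReal.ofReal (Real.sqrt (b i 0)) := mul_le_mul_left htri _
      _ = ENNReal.ofReal ((q i + |m i| * (Real.sqrt (b i 0))⁻¹) * Real.sqrt (b i 0)) := by
          rw [← ENNReal.ofReal_add (hqnn i) (by positivity),
            ← ENNReal.ofReal_mul (by positivity)]
      _ ≤ ENNReal.ofReal (q i * Real.sqrt (c₂ * r^n) + Cb * |m i|) := by
          apply ENNReal.ofReal_le_ofReal
          have hs0 : Real.sqrt (b i 0) ≤ Real.sqrt (c₂ * r^n) := by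
            apply Real.sqrt_le_sqrt
            have h := (hbbounds i 0 (Nat.zero_le K)).2
            rwa [ht0'] at h
          have hsne : Real.sqrt (b i 0) ≠ 0 :=
            (Real.sqrt_pos.mpr (hbpos i 0 (Nat.zero_le K))).ne'
          have hexpand : (q i + |m i| * (Real.sqrt (b i 0))⁻¹) * Real.sqrt (b i 0)
              = q i * Real.sqrt (b i 0) + |m i| := by
            field_simp
          rw [hexpand]
          have h1 : q i * Real.sqrt (b i 0) ≤ q i * Real.sqrt (c₂ * r^n) :=
            mul_le_mul_of_nonneg_left hs0 (hqnn i)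
          nlinarith [mul_nonneg (sub_nonneg.mpr hCb1) (abs_nonneg (m i))]
  have hboundmid : ∀ (i : Fin N) (j : ℕ), j < K → lam' i (j+1) ≤ 2 * Cb * |m i| := by
    intro i j hjK
    have hjK1 : j + 1 ≤ K := by omega
    have hjK' : j ≤ K := by omega
    have hlt : j + 1 < K + 2 := by omega
    have hl : lam' i (j+1) = lam (i, ⟨j+1, hlt⟩) := by
      simp only [hlam'def]
      rw [dif_pos hlt]
    rw [hl]
    apply hlam_le _ _ (by positivity)
    show eLpNorm (U i (j+1)) 2 μ * μ (closedBall (s i) (rad (j+1))) ^ (1/2:ℝ) ≤ _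
    have hU' : U i (j+1) = T i j := by
      simp only [hUdef]
      rw [if_neg (by omega), if_neg (by omega)]
      simp
    rw [hU', hradmid j (by omega)]
    have hTsub : T i j = m i • (g i j - g i (j+1)) := rfl
    have hsub : eLpNorm (g i j - g i (j+1)) 2 μ ≤
        ENNReal.ofReal ((Real.sqrt (b i j))⁻¹) + ENNReal.ofReal ((Real.sqrt (b i (j+1)))⁻¹) := by
      refine le_trans (eLpNorm_sub_le (hgmem i j hjK').aestronglyMeasurable
        (hgmem i (j+1) hjK1).aestronglyMeasurable one_le_two) ?_
      rw [hgnorm i j hjK', hgnorm i (j+1) hjK1]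
    have htri : eLpNorm (T i j) 2 μ ≤ ENNReal.ofReal |m i| *
        (ENNReal.ofReal ((Real.sqrt (b i j))⁻¹) + ENNReal.ofReal ((Real.sqrt (b i (j+1)))⁻¹)) := by
      rw [hTsub, eLpNorm_const_smul, Real.enorm_eq_ofReal_abs]
      exact mul_le_mul_right hsub _
    calc eLpNorm (T i j) 2 μ * μ (closedBall (s i) (t (j+1))) ^ (1/2:ℝ)
        = eLpNorm (T i j) 2 μ * ENNReal.ofReal (Real.sqrt (b i (j+1))) := by
          rw [show closedBall (s i) (t (j+1)) = Bl i (j+1) from rfl, hrpow i (j+1) hjK1]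
      _ ≤ (ENNReal.ofReal |m i| *
            (ENNReal.ofReal ((Real.sqrt (b i j))⁻¹) + ENNReal.ofReal ((Real.sqrt (b i (j+1)))⁻¹))) *
            ENNReal.ofReal (Real.sqrt (b i (j+1))) := mul_le_mul_left htri _
      _ = ENNReal.ofReal (|m i| * (((Real.sqrt (b i j))⁻¹ + (Real.sqrt (b i (j+1)))⁻¹) *
            Real.sqrt (b i (j+1)))) := by
          rw [← ENNReal.ofReal_add (by positivity) (by positivity),
            ← ENNReal.ofReal_mul (abs_nonneg _), ← ENNReal.ofReal_mul (by positivity)]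
          congr 1
          ring
      _ ≤ ENNReal.ofReal (2 * Cb * |m i|) := by
          apply ENNReal.ofReal_le_ofReal
          have hsj : 0 < Real.sqrt (b i j) := Real.sqrt_pos.mpr (hbpos i j hjK')
          have hsj1 : 0 < Real.sqrt (b i (j+1)) := Real.sqrt_pos.mpr (hbpos i (j+1) hjK1)
          have h1 : (Real.sqrt (b i j))⁻¹ * Real.sqrt (b i (j+1)) ≤ Cb := by
            rw [inv_mul_le_iff₀ hsj]
            rw [mul_comm]
            exact hsqstep i j hjK1
          have h2 : (Real.sqrt (b i (j+1)))⁻¹ * Real.sqrt (b i (j+1)) = 1 :=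
            inv_mul_cancel₀ hsj1.ne'
          have h3 : ((Real.sqrt (b i j))⁻¹ + (Real.sqrt (b i (j+1)))⁻¹) * Real.sqrt (b i (j+1))
              ≤ 2 * Cb := by
            rw [add_mul, h2]
            linarith [hCb1, h1]
          calc |m i| * (((Real.sqrt (b i j))⁻¹ + (Real.sqrt (b i (j+1)))⁻¹) *
                Real.sqrt (b i (j+1))) ≤ |m i| * (2 * Cb) :=
                mul_le_mul_of_nonneg_left h3 (abs_nonneg _)
            _ = 2 * Cb * |m i| := by ring
  have hboundtop : ∀ i : Fin N, lam' i (K+1) ≤ Cb * |m i| := by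
    intro i
    have hlt : K + 1 < K + 2 := by omega
    have hl : lam' i (K+1) = lam (i, ⟨K+1, hlt⟩) := by
      simp only [hlam'def]
      rw [dif_pos hlt]
    rw [hl]
    apply hlam_le _ _ (by positivity)
    show eLpNorm (U i (K+1)) 2 μ * μ (closedBall (s i) (rad (K+1))) ^ (1/2:ℝ) ≤ _
    have hU' : U i (K+1) = G i := by simp [hUdef]
    rw [hU', hradtop]
    have hGsub : G i = m i • g i K := rfl
    calc eLpNorm (G i) 2 μ * μ (closedBall (s i) 1) ^ (1/2:ℝ)
        = ENNReal.ofReal (|m i| * (Real.sqrt (b i K))⁻¹) * ENNReal.ofReal (Real.sqrt (b1 i)) := by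
          rw [hGsub, hsmulnorm i K (m i) le_rfl, hrpow1 i]
      _ = ENNReal.ofReal (|m i| * ((Real.sqrt (b i K))⁻¹ * Real.sqrt (b1 i))) := by
          rw [← ENNReal.ofReal_mul (by positivity)]
          congr 1
          ring
      _ ≤ ENNReal.ofReal (Cb * |m i|) := by
          apply ENNReal.ofReal_le_ofReal
          have hsK : 0 < Real.sqrt (b i K) := Real.sqrt_pos.mpr (hbpos i K le_rfl)
          have h1 : (Real.sqrt (b i K))⁻¹ * Real.sqrt (b1 i) ≤ Cb := by
            rw [inv_mul_le_iff₀ hsK, mul_comm]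
            exact hsqtop i
          calc |m i| * ((Real.sqrt (b i K))⁻¹ * Real.sqrt (b1 i)) ≤ |m i| * Cb :=
              mul_le_mul_of_nonneg_left h1 (abs_nonneg _)
            _ = Cb * |m i| := by ring
  -- sum everything up
  have hrlog : 0 ≤ Real.log (1/r) := Real.log_nonneg hinv1
  have hconv : ∀ i : Fin N, ∑ k : Fin (K+2), lam (i, k) = ∑ kk ∈ Finset.range (K+2), lam' i kk := by
    intro i
    rw [← Fin.sum_univ_eq_sum_range (fun kk => lam' i kk) (K+2)]
    refine Finset.sum_congr rfl fun k _ => ?_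
    simp only [hlam'def]
    rw [dif_pos k.isLt]
  have hper : ∀ i : Fin N, ∑ k : Fin (K+2), lam (i, k) ≤
      q i * Real.sqrt (c₂ * r^n) + (2*(K:ℝ)+2) * Cb * |m i| := by
    intro i
    rw [hconv i, Finset.sum_range_succ, Finset.sum_range_succ']
    have hmid : ∑ j ∈ Finset.range K, lam' i (j+1) ≤ (K:ℝ) * (2 * Cb * |m i|) := by
      refine le_trans (Finset.sum_le_sum fun j hj => hboundmid i j (Finset.mem_range.mp hj)) ?_
      rw [Finset.sum_const, Finset.card_range, nsmul_eq_mul]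
    nlinarith [hbound0 i, hboundtop i, hmid]
  have habs : ∑ p : Fin N × Fin (K+2), |lam p| = ∑ p : Fin N × Fin (K+2), lam p :=
    Finset.sum_congr rfl fun p _ => abs_of_nonneg (hlam0 p)
  have htotal : ∑ p : Fin N × Fin (K+2), lam p ≤
      Real.sqrt (c₂ * r^n) * (∑ i, q i) + (2*(K:ℝ)+2) * Cb * (∑ i, |m i|) := by
    rw [Fintype.sum_prod_type]
    refine le_trans (Finset.sum_le_sum fun i _ => hper i) ?_
    apply le_of_eq
    rw [Finset.sum_add_distrib, ← Finset.sum_mul, ← Finset.mul_sum]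
    ring
  have hT1 : Real.sqrt (c₂ * r^n) * (∑ i, q i) ≤
      Real.sqrt (c₂ * CN) * Real.exp (ρ*R) * Real.sqrt r * nf := by
    have h1 : Real.sqrt (c₂*r^n) * (∑ i, q i) ≤ Real.sqrt (c₂*r^n) * (Real.sqrt (N:ℝ) * nf) :=
      mul_le_mul_of_nonneg_left hsumq (Real.sqrt_nonneg _)
    have h2 : Real.sqrt (c₂*r^n) * Real.sqrt (N:ℝ) = Real.sqrt (c₂ * ((N:ℝ) * r^n)) := by
      rw [← Real.sqrt_mul (by positivity)]
      congr 1
      ring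
    have h3 : Real.sqrt (c₂ * ((N:ℝ) * r^n)) ≤
        Real.sqrt (c₂ * (CN * (Real.exp (2*ρ*R) * r))) :=
      Real.sqrt_le_sqrt (mul_le_mul_of_nonneg_left hNrn hc₂.le)
    have h4 : Real.sqrt (c₂ * (CN * (Real.exp (2*ρ*R) * r))) =
        Real.sqrt (c₂*CN) * Real.exp (ρ*R) * Real.sqrt r := by
      have hE : Real.exp (2*ρ*R) = Real.exp (ρ*R)^2 := by
        rw [sq, ← Real.exp_add]
        ring_nf
      rw [hE, show c₂ * (CN * (Real.exp (ρ*R)^2 * r)) = (c₂*CN) * Real.exp (ρ*R)^2 * r by ring,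
        Real.sqrt_mul (by positivity), Real.sqrt_mul (by positivity),
        Real.sqrt_sq (Real.exp_pos _).le]
    calc Real.sqrt (c₂*r^n) * (∑ i, q i) ≤ Real.sqrt (c₂*r^n) * (Real.sqrt (N:ℝ) * nf) := h1
      _ = (Real.sqrt (c₂*r^n) * Real.sqrt (N:ℝ)) * nf := by ring
      _ ≤ Real.sqrt (c₂ * (CN * (Real.exp (2*ρ*R) * r))) * nf :=
          mul_le_mul_of_nonneg_right (le_trans (le_of_eq h2) h3) hnfnn
      _ = Real.sqrt (c₂*CN) * Real.exp (ρ*R) * Real.sqrt r * nf := by rw [h4]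
  have hexfact : Real.sqrt (c₂ * Real.exp (2*ρ*R) * r) =
      Real.sqrt c₂ * Real.exp (ρ*R) * Real.sqrt r := by
    have hE : Real.exp (2*ρ*R) = Real.exp (ρ*R)^2 := by
      rw [sq, ← Real.exp_add]
      ring_nf
    rw [hE, show c₂ * Real.exp (ρ*R)^2 * r = (c₂ * Real.exp (ρ*R)^2) * r by ring,
      Real.sqrt_mul (by positivity), Real.sqrt_mul hc₂.le, Real.sqrt_sq (Real.exp_pos _).le]
  have hK2 : 2*(K:ℝ)+2 ≤ (2/Real.log 2 + 2) * (1 + Real.log (1/r)) := by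
    have h1 : (2/Real.log 2 + 2) * (1 + Real.log (1/r)) =
        2/Real.log 2 + 2 * (Real.log (1/r) / Real.log 2) + 2 + 2 * Real.log (1/r) := by
      field_simp
      ring
    rw [h1]
    have h2 : 0 ≤ 2/Real.log 2 := by positivity
    linarith [hKlog, hrlog]
  have hT2 : (2*(K:ℝ)+2) * Cb * (∑ i, |m i|) ≤
      ((2/Real.log 2 + 2) * (1 + Real.log (1/r))) * Cb *
        (Real.sqrt c₂ * (Real.exp (ρ*R) * Real.sqrt r * nf)) := by
    have hm2 : ∑ i, |m i| ≤ Real.sqrt c₂ * (Real.exp (ρ*R) * Real.sqrt r * nf) := by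
      refine le_trans hsumm (le_of_eq ?_)
      rw [hexfact]
      ring
    have hsm_nn : 0 ≤ ∑ i, |m i| := Finset.sum_nonneg fun i _ => abs_nonneg _
    calc (2*(K:ℝ)+2) * Cb * (∑ i, |m i|) ≤
        (2*(K:ℝ)+2) * Cb * (Real.sqrt c₂ * (Real.exp (ρ*R) * Real.sqrt r * nf)) :=
          mul_le_mul_of_nonneg_left hm2 (by positivity)
      _ ≤ ((2/Real.log 2 + 2) * (1 + Real.log (1/r))) * Cb *
            (Real.sqrt c₂ * (Real.exp (ρ*R) * Real.sqrt r * nf)) := by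
          apply mul_le_mul_of_nonneg_right (mul_le_mul_of_nonneg_right hK2 hCbnn)
          have hEx : 0 ≤ Real.exp (ρ*R) * Real.sqrt r * nf := by
            apply mul_nonneg (mul_nonneg (Real.exp_pos _).le (Real.sqrt_nonneg _)) hnfnn
          exact mul_nonneg (Real.sqrt_nonneg _) hEx
  have hfinal : ∑ p : Fin N × Fin (K+2), lam p ≤
      (Real.sqrt (c₂*CN) + (2/Real.log 2 + 2) * Cb * Real.sqrt c₂ + 1) *
        (1 + Real.log (1/r)) * Real.exp (ρ*R) * Real.sqrt r * nf := by
    have hL1 : 1 ≤ 1 + Real.log (1/r) := by linarith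
    have hEx : 0 ≤ Real.exp (ρ*R) * Real.sqrt r * nf :=
      mul_nonneg (mul_nonneg (Real.exp_pos _).le (Real.sqrt_nonneg _)) hnfnn
    refine le_trans (le_trans htotal (add_le_add hT1 hT2)) ?_
    nlinarith [mul_nonneg (mul_nonneg (Real.sqrt_nonneg (c₂*CN)) hrlog) hEx,
      mul_nonneg (mul_nonneg (by linarith : (0:ℝ) ≤ 1 + Real.log (1/r)) hEx) hrlog, hEx,
      mul_nonneg (by linarith : (0:ℝ) ≤ 1 + Real.log (1/r)) hEx]
  have hCnn : 0 ≤ Real.sqrt (c₂*CN) + (2/Real.log 2 + 2) * Cb * Real.sqrt c₂ + 1 := by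
    positivity
  have hfacnn : 0 ≤ (Real.sqrt (c₂*CN) + (2/Real.log 2 + 2) * Cb * Real.sqrt c₂ + 1) *
      (1 + Real.log (1/r)) * Real.exp (ρ*R) * Real.sqrt r := by
    apply mul_nonneg
    apply mul_nonneg
    apply mul_nonneg hCnn
    · linarith
    · exact (Real.exp_pos _).le
    · exact Real.sqrt_nonneg _
  rw [hnf_eq, ← ENNReal.ofReal_mul hfacnn]
  refine le_trans hble (ENNReal.ofReal_le_ofReal ?_)
  rw [habs]
  exact hfinal
end

section
/- There exists an absolute constant C with the following property. Let ρ > 0, c₂ > 0, t ≥ 1/2, and let μ be a Borel measure on a metric space (X,d) with a distinguished point o such that μ({x ∈ X : |d(x,o) − t| ≤ u}) ≤ c₂ e^{2ρt} u for every 0 < u ≤ 1. Then for every r ∈ (0, 1/45], ∫_{{x ∈ X : 10r ≤ |d(x,o)−t| ≤ r + 1/5}} |d(x,o) − t|^{−2} dμ(x) ≤ C c₂ e^{2ρt} r^{−1}. -/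
open Metric MeasureTheory ENNReal

/-- Auxiliary: a set lintegral is at most `c * ν s` if `f ≤ c` on `s`
(no measurability assumptions needed). -/
lemma setLIntegral_le_of_forall_le' {X : Type*} [MeasurableSpace X] (ν : Measure X)
    (f : X → ℝ≥0∞) (s : Set X) (c : ℝ≥0∞) (h : ∀ x ∈ s, f x ≤ c) :
    ∫⁻ x in s, f x ∂ν ≤ c * ν s := by
  rw [lintegral_def]
  refine iSup₂_le fun φ hφ => ?_
  have key : ∀ y ∈ φ.range, y * (ν.restrict s) (φ ⁻¹' {y}) ≤ c * (ν.restrict s) (φ ⁻¹' {y}) := by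
    intro y hy
    rcases eq_or_ne ((ν.restrict s) (φ ⁻¹' {y})) 0 with h0 | h0
    · simp [h0]
    · rw [Measure.restrict_apply (φ.measurableSet_preimage _)] at h0
      obtain ⟨x, hx1, hx2⟩ := nonempty_of_measure_ne_zero h0
      have hx1' : φ x = y := hx1
      have hyc : y ≤ c := by
        calc y = φ x := hx1'.symm
          _ ≤ f x := hφ x
          _ ≤ c := h x hx2
      exact mul_le_mul_left hyc _
  calc φ.lintegral (ν.restrict s) = ∑ y ∈ φ.range, y * (ν.restrict s) (φ ⁻¹' {y}) := rfl
    _ ≤ ∑ y ∈ φ.range, c * (ν.restrict s) (φ ⁻¹' {y}) := Finset.sum_le_sum key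
    _ = c * ∑ y ∈ φ.range, (ν.restrict s) (φ ⁻¹' {y}) := (Finset.mul_sum _ _ _).symm
    _ = c * (ν.restrict s) Set.univ := by rw [φ.sum_range_measure_preimage_singleton]
    _ = c * ν s := by rw [Measure.restrict_apply_univ]

/-- There is an absolute constant `C` such that: for every `ρ > 0`,
`c₂ > 0`, `t ≥ 1/2`, and every Borel measure `μ` on a metric space `(X,d)` with a
distinguished point `o` satisfying `μ({|d(x,o) − t| ≤ u}) ≤ c₂ e^{2ρt} u` for all
`0 < u ≤ 1`, one has, for every `r ∈ (0, 1/45]`,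
`∫_{10r ≤ |d(x,o)−t| ≤ r+1/5} |d(x,o)−t|^{−2} dμ ≤ C c₂ e^{2ρt} r^{−1}`. -/
theorem stmt_9 :
    ∃ C : ℝ, 0 < C ∧
      ∀ (X : Type) [MetricSpace X] [MeasurableSpace X] (μ : Measure X) (o : X)
        (ρ c₂ t : ℝ), 0 < ρ → 0 < c₂ → 1 / 2 ≤ t →
      (∀ u : ℝ, 0 < u → u ≤ 1 →
        μ {x : X | |dist x o - t| ≤ u} ≤ ENNReal.ofReal (c₂ * Real.exp (2 * ρ * t) * u)) →
      ∀ r : ℝ, 0 < r → r ≤ 1 / 45 →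
        ∫⁻ x in {x : X | 10 * r ≤ |dist x o - t| ∧ |dist x o - t| ≤ r + 1 / 5},
            ENNReal.ofReal ((|dist x o - t| ^ 2)⁻¹) ∂μ ≤
          ENNReal.ofReal (C * c₂ * Real.exp (2 * ρ * t) / r) := by
  refine ⟨1, one_pos, ?_⟩
  intro X _ _ μ o ρ c₂ t hρ hc₂ ht hμ r hr hr45
  set E : ℝ := Real.exp (2 * ρ * t) with hE
  have hEpos : 0 < E := Real.exp_pos _
  set S : Set X := {x : X | 10 * r ≤ |dist x o - t| ∧ |dist x o - t| ≤ r + 1 / 5} with hS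
  set A : ℕ → Set X :=
    fun k => {x : X | 10 * r * 2 ^ k ≤ |dist x o - t| ∧ |dist x o - t| ≤ 10 * r * 2 ^ (k + 1)}
    with hA
  set f : X → ℝ≥0∞ := fun x => ENNReal.ofReal ((|dist x o - t| ^ 2)⁻¹) with hf
  have hcover : S ⊆ ⋃ k, S ∩ A k := by
    intro x hx
    obtain ⟨h1, h2⟩ := hx
    have h10r : (0:ℝ) < 10 * r := by linarith
    have hw : (1:ℝ) ≤ |dist x o - t| / (10 * r) := (one_le_div h10r).2 h1
    obtain ⟨n, hn1, hn2⟩ := exists_nat_pow_near hw one_lt_two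
    refine Set.mem_iUnion.2 ⟨n, ⟨h1, h2⟩, ?_, ?_⟩
    · have := (le_div_iff₀ h10r).1 hn1
      linarith [this]
    · have := (div_lt_iff₀ h10r).1 hn2
      nlinarith [this]
  -- termwise bound
  have hterm : ∀ k : ℕ, ∫⁻ x in S ∩ A k, f x ∂μ ≤
      ENNReal.ofReal (c₂ * E / (5 * r) * (1 / 2) ^ k) := by
    intro k
    have h2k : (0:ℝ) < 2 ^ k := by positivity
    have hak : (0:ℝ) < 10 * r * 2 ^ k := by positivity
    set u : ℝ := min (10 * r * 2 ^ (k + 1)) (2 / 9) with hu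
    have hu0 : 0 < u := lt_min (by positivity) (by norm_num)
    have hu1 : u ≤ 1 := le_trans (min_le_right _ _) (by norm_num)
    have hsub : S ∩ A k ⊆ {x : X | |dist x o - t| ≤ u} := by
      rintro x ⟨⟨_, hS2⟩, _, hA2⟩
      exact le_min hA2 (by linarith)
    have hmeas : μ (S ∩ A k) ≤ ENNReal.ofReal (c₂ * E * u) :=
      (measure_mono hsub).trans (hμ u hu0 hu1)
    have hpt : ∀ x ∈ S ∩ A k, f x ≤ ENNReal.ofReal (((10 * r * 2 ^ k) ^ 2)⁻¹) := by
      rintro x ⟨_, hA1, _⟩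
      apply ENNReal.ofReal_le_ofReal
      have hsq : (10 * r * 2 ^ k) ^ 2 ≤ |dist x o - t| ^ 2 := by
        apply pow_le_pow_left₀ hak.le hA1
      exact inv_anti₀ (by positivity) hsq
    calc ∫⁻ x in S ∩ A k, f x ∂μ
        ≤ ENNReal.ofReal (((10 * r * 2 ^ k) ^ 2)⁻¹) * μ (S ∩ A k) :=
          setLIntegral_le_of_forall_le' μ f _ _ hpt
      _ ≤ ENNReal.ofReal (((10 * r * 2 ^ k) ^ 2)⁻¹) * ENNReal.ofReal (c₂ * E * u) :=
          mul_le_mul_right hmeas _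
      _ = ENNReal.ofReal (((10 * r * 2 ^ k) ^ 2)⁻¹ * (c₂ * E * u)) :=
          (ENNReal.ofReal_mul (by positivity)).symm
      _ ≤ ENNReal.ofReal (c₂ * E / (5 * r) * (1 / 2) ^ k) := by
          apply ENNReal.ofReal_le_ofReal
          have humin : u ≤ 10 * r * 2 ^ (k + 1) := min_le_left _ _
          have h1 : ((10 * r * 2 ^ k) ^ 2)⁻¹ * (c₂ * E * u) ≤
              ((10 * r * 2 ^ k) ^ 2)⁻¹ * (c₂ * E * (10 * r * 2 ^ (k + 1))) := by
            apply mul_le_mul_of_nonneg_left _ (by positivity)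
            apply mul_le_mul_of_nonneg_left humin (by positivity)
          refine h1.trans (le_of_eq ?_)
          rw [pow_succ, one_div_pow]
          field_simp
          ring
  -- geometric series
  have hgeom : ∑' k : ℕ, (ENNReal.ofReal ((1:ℝ) / 2)) ^ k = 2 := by
    have h12 : (ENNReal.ofReal ((1:ℝ) / 2)) = 2⁻¹ := by
      rw [show (1/2 : ℝ) = 2⁻¹ by norm_num, ENNReal.ofReal_inv_of_pos two_pos,
        ENNReal.ofReal_ofNat]
    rw [h12, ENNReal.tsum_geometric, ENNReal.one_sub_inv_two, inv_inv]
  calc ∫⁻ x in S, f x ∂μ ≤ ∫⁻ x in ⋃ k, S ∩ A k, f x ∂μ := lintegral_mono_set hcover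
    _ ≤ ∑' k : ℕ, ∫⁻ x in S ∩ A k, f x ∂μ := lintegral_iUnion_le _ _
    _ ≤ ∑' k : ℕ, ENNReal.ofReal (c₂ * E / (5 * r) * (1 / 2) ^ k) :=
        ENNReal.tsum_le_tsum hterm
    _ = ∑' k : ℕ, ENNReal.ofReal (c₂ * E / (5 * r)) * (ENNReal.ofReal ((1:ℝ)/2)) ^ k := by
        congr 1; funext k
        rw [ENNReal.ofReal_mul (by positivity), ENNReal.ofReal_pow (by norm_num)]
    _ = ENNReal.ofReal (c₂ * E / (5 * r)) * 2 := by rw [ENNReal.tsum_mul_left, hgeom]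
    _ ≤ ENNReal.ofReal (1 * c₂ * E / r) := by
        rw [show (2:ℝ≥0∞) = ENNReal.ofReal 2 by norm_num,
          ← ENNReal.ofReal_mul (by positivity)]
        apply ENNReal.ofReal_le_ofReal
        rw [one_mul, div_mul_eq_mul_div, div_le_div_iff₀ (by positivity) hr]
        nlinarith [mul_pos (mul_pos hc₂ hEpos) hr]
end

section
/- For every 0 < t < 1/2 and every s > 0 with s ≠ t the limit defining K_t(s) exists, and there is a constant C > 0, depending only on ε and on finitely many of the constants C_α, such that |K_t(s)| ≤ C e^{−2s}(s−t)^{−2} for s ≥ 1, and |K_t(s)| ≤ C ( s^{−2+ε} + s^{−1}|t−s|^{−1+ε} ) for 0 < s ≤ 1. -/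
open Filter MeasureTheory ENNReal

/-- The truncated oscillatory integral `∫_{−L}^{L} m(λ) λ sin(λs) cos(λt) dλ`, whose
limit as `L → ∞`, divided by `sinh s`, defines the wave kernel `K_t(s)` on
3-dimensional real hyperbolic space. -/
noncomputable def waveIntegral (m : ℂ → ℂ) (t s L : ℝ) : ℂ :=
  ∫ lam in (-L)..L,
    m lam * lam * Complex.sin (lam * s) * Complex.cos (lam * t)

namespace Stmt12

open Set Topology

lemma isOpen_strip : IsOpen {z : ℂ | |z.im| < 1} :=
  (continuous_abs.comp Complex.continuous_im).isOpen_preimage (Iio 1) isOpen_Iio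

variable {ε : ℝ} {m : ℂ → ℂ} {Cm : ℕ → ℝ}

lemma diffAt (hholo : DifferentiableOn ℂ m {z : ℂ | |z.im| < 1}) {z : ℂ} (hz : |z.im| < 1) :
    DifferentiableAt ℂ m z := hholo.differentiableAt (isOpen_strip.mem_nhds hz)

lemma cont_m_real (hholo : DifferentiableOn ℂ m {z : ℂ | |z.im| < 1}) :
    Continuous fun x : ℝ => m x := by
  rw [continuous_iff_continuousAt]
  intro x
  exact (diffAt hholo (by simp)).continuousAt.comp Complex.continuous_ofReal.continuousAt

lemma cont_deriv_m_real (hholo : DifferentiableOn ℂ m {z : ℂ | |z.im| < 1}) :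
    Continuous fun x : ℝ => deriv m x := by
  rw [continuous_iff_continuousAt]
  intro x
  exact (((((hholo.analyticOnNhd isOpen_strip).deriv) _ (by simp)).differentiableAt).continuousAt).comp
    Complex.continuous_ofReal.continuousAt

lemma rpow_mul_self {x p : ℝ} (hx : 0 < x) : x ^ p * x = x ^ (p + 1) := by
  rw [Real.rpow_add hx, Real.rpow_one]

lemma inv_rpow' {a p : ℝ} (ha : 0 < a) : (a⁻¹) ^ p = a ^ (-p) := by
  rw [Real.inv_rpow ha.le, ← Real.rpow_neg ha.le]

lemma hasDerivAt_g (hholo : DifferentiableOn ℂ m {z : ℂ | |z.im| < 1}) (x : ℝ) :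
    HasDerivAt (fun y : ℝ => m y * y) (deriv m x * x + m x) x := by
  have h1 : HasDerivAt (fun z : ℂ => m z * z) (deriv m x * x + m x * 1) x :=
    ((diffAt hholo (by simp)).hasDerivAt.mul (hasDerivAt_id _))
  simpa using h1.comp_ofReal

lemma hasDerivAt_v {a : ℝ} (ha : a ≠ 0) (x : ℝ) :
    HasDerivAt (fun y : ℝ => -Complex.cos (y * a) / a) (Complex.sin (x * a)) x := by
  have ha' : (a : ℂ) ≠ 0 := Complex.ofReal_ne_zero.mpr ha
  have h2 : HasDerivAt (fun z : ℂ => Complex.cos (z * a)) (-Complex.sin (x * a) * a) x := by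
    have := (Complex.hasDerivAt_cos ((x : ℂ) * a)).comp (x : ℂ)
      ((hasDerivAt_id (x : ℂ)).mul_const (a : ℂ))
    simpa [Function.comp_def] using this
  have h3 := (h2.neg).div_const (a : ℂ)
  have : --Complex.sin (x*a)
      - (-Complex.sin ((x:ℂ) * a) * a) / a = Complex.sin ((x:ℂ) * a) := by
    field_simp
  rw [this] at h3
  exact h3.comp_ofReal

lemma bound0 (hsymb : ∀ (α : ℕ) (z : ℂ), |z.im| ≤ 1 →
      ‖iteratedDeriv α m z‖ ≤ Cm α * (1 + |z.re|) ^ (-1 - ε - (α : ℝ)))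
    {z : ℂ} (hz : |z.im| ≤ 1) : ‖m z‖ ≤ Cm 0 * (1 + |z.re|) ^ (-1 - ε) := by
  have := hsymb 0 z hz
  simpa [iteratedDeriv_zero] using this

lemma bound1 (hsymb : ∀ (α : ℕ) (z : ℂ), |z.im| ≤ 1 →
      ‖iteratedDeriv α m z‖ ≤ Cm α * (1 + |z.re|) ^ (-1 - ε - (α : ℝ)))
    {z : ℂ} (hz : |z.im| ≤ 1) : ‖deriv m z‖ ≤ Cm 1 * (1 + |z.re|) ^ (-2 - ε) := by
  have := hsymb 1 z hz
  rw [iteratedDeriv_one] at this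
  convert this using 2
  push_cast; ring

lemma bound2 (hsymb : ∀ (α : ℕ) (z : ℂ), |z.im| ≤ 1 →
      ‖iteratedDeriv α m z‖ ≤ Cm α * (1 + |z.re|) ^ (-1 - ε - (α : ℝ)))
    {z : ℂ} (hz : |z.im| ≤ 1) : ‖deriv (deriv m) z‖ ≤ Cm 2 * (1 + |z.re|) ^ (-3 - ε) := by
  have := hsymb 2 z hz
  rw [show (2:ℕ) = 1 + 1 from rfl, iteratedDeriv_succ, iteratedDeriv_one] at this
  convert this using 2
  push_cast; ring

lemma rpow_shrink {x p : ℝ} (hx : 0 < x) (hp : p ≤ 0) : (1 + x) ^ p ≤ x ^ p :=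
  Real.rpow_le_rpow_of_nonpos hx (by linarith) hp

lemma norm_sin_le {x b : ℝ} (hx : 0 ≤ x) (hb : 0 ≤ b) :
    ‖Complex.sin ((x : ℂ) * b)‖ ≤ x * b := by
  rw [← Complex.ofReal_mul, ← Complex.ofReal_sin, Complex.norm_real, Real.norm_eq_abs]
  exact Real.abs_sin_le_abs.trans (le_of_eq (abs_of_nonneg (by positivity)))

lemma norm_cos_le (y : ℂ) (hy : y.im = 0) : ‖Complex.cos y‖ ≤ 1 := by
  have : y = ((y.re : ℝ) : ℂ) := (Complex.ext (by simp) (by simp [hy])).symm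
  rw [this, ← Complex.ofReal_cos, Complex.norm_real, Real.norm_eq_abs]
  exact Real.abs_cos_le_one _

namespace A

variable (m a) in
/-- the integrand -/
noncomputable def f : ℝ → ℂ := fun x => m x * x * Complex.sin (x * a)

variable (m) in
/-- derivative of `x ↦ m x * x` -/
noncomputable def gd : ℝ → ℂ := fun x => deriv m x * x + m x

variable (m a) in
/-- integrand after integration by parts -/
noncomputable def gc : ℝ → ℂ := fun x => gd m x * (Complex.cos (x * a) / a)

variable {a : ℝ}

lemma cont_f (hholo : DifferentiableOn ℂ m {z : ℂ | |z.im| < 1}) :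
    Continuous (f m a) :=
  (((cont_m_real hholo).mul Complex.continuous_ofReal).mul
    (Complex.continuous_sin.comp (Complex.continuous_ofReal.mul continuous_const)))

lemma cont_gd (hholo : DifferentiableOn ℂ m {z : ℂ | |z.im| < 1}) :
    Continuous (gd m) :=
  (((cont_deriv_m_real hholo).mul Complex.continuous_ofReal).add (cont_m_real hholo))

lemma cont_gc (hholo : DifferentiableOn ℂ m {z : ℂ | |z.im| < 1}) :
    Continuous (gc m a) :=
  (cont_gd hholo).mul
    ((Complex.continuous_cos.comp (Complex.continuous_ofReal.mul continuous_const)).div_const _)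

lemma even_fold (hholo : DifferentiableOn ℂ m {z : ℂ | |z.im| < 1})
    (heven : ∀ z : ℂ, m (-z) = m z) (L : ℝ) :
    (∫ x in (-L)..L, f m a x) = 2 * ∫ x in (0:ℝ)..L, f m a x := by
  have hfc := cont_f (a := a) hholo
  have h2 : (∫ x in (-L)..(0:ℝ), f m a x) = ∫ x in (0:ℝ)..L, f m a x := by
    have h3 := intervalIntegral.integral_comp_neg (a := 0) (b := L) (f m a)
    rw [neg_zero] at h3
    rw [← h3]
    apply intervalIntegral.integral_congr
    intro x _
    show m ↑(-x) * ↑(-x) * Complex.sin (↑(-x) * ↑a) = _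
    rw [Complex.ofReal_neg, heven, neg_mul, Complex.sin_neg]
    show m ↑x * -↑x * -Complex.sin (↑x * ↑a) = m ↑x * ↑x * Complex.sin (↑x * ↑a)
    ring
  rw [← intervalIntegral.integral_add_adjacent_intervals
    (hfc.intervalIntegrable (-L) 0) (hfc.intervalIntegrable 0 L), h2]
  ring

lemma norm_mx_le (hε0 : 0 < ε)
    (hsymb : ∀ (α : ℕ) (z : ℂ), |z.im| ≤ 1 →
      ‖iteratedDeriv α m z‖ ≤ Cm α * (1 + |z.re|) ^ (-1 - ε - (α : ℝ)))
    (hCm : ∀ α, 0 < Cm α) {x : ℝ} (hx : 0 < x) :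
    ‖m x * x‖ ≤ Cm 0 * x ^ (-ε) := by
  have h0 := bound0 hsymb (z := (x : ℂ)) (by simp)
  simp only [Complex.ofReal_re] at h0
  rw [abs_of_pos hx] at h0
  calc ‖m x * (x : ℂ)‖ = ‖m x‖ * x := by
        rw [norm_mul, Complex.norm_real, Real.norm_eq_abs, abs_of_pos hx]
    _ ≤ (Cm 0 * x ^ (-1 - ε)) * x := by
        refine mul_le_mul_of_nonneg_right (h0.trans ?_) hx.le
        exact mul_le_mul_of_nonneg_left (rpow_shrink hx (by linarith)) (hCm 0).le
    _ = Cm 0 * x ^ (-ε) := by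
        rw [mul_assoc, rpow_mul_self hx, show -1 - ε + 1 = -ε by ring]

lemma norm_gd_le (hε0 : 0 < ε)
    (hsymb : ∀ (α : ℕ) (z : ℂ), |z.im| ≤ 1 →
      ‖iteratedDeriv α m z‖ ≤ Cm α * (1 + |z.re|) ^ (-1 - ε - (α : ℝ)))
    (hCm : ∀ α, 0 < Cm α) {x : ℝ} (hx : 0 < x) :
    ‖gd m x‖ ≤ (Cm 0 + Cm 1) * x ^ (-1 - ε) := by
  have h0 := bound0 hsymb (z := (x : ℂ)) (by simp)
  have h1 := bound1 hsymb (z := (x : ℂ)) (by simp)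
  simp only [Complex.ofReal_re] at h0 h1
  rw [abs_of_pos hx] at h0 h1
  have hA : ‖deriv m x * (x : ℂ)‖ ≤ Cm 1 * x ^ (-1 - ε) := by
    calc ‖deriv m x * (x : ℂ)‖ = ‖deriv m x‖ * x := by
          rw [norm_mul, Complex.norm_real, Real.norm_eq_abs, abs_of_pos hx]
      _ ≤ (Cm 1 * x ^ (-2 - ε)) * x := by
          refine mul_le_mul_of_nonneg_right (h1.trans ?_) hx.le
          exact mul_le_mul_of_nonneg_left (rpow_shrink hx (by linarith)) (hCm 1).le
      _ = Cm 1 * x ^ (-1 - ε) := by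
          rw [mul_assoc, rpow_mul_self hx, show -2 - ε + 1 = -1 - ε by ring]
  have hB : ‖m (x : ℂ)‖ ≤ Cm 0 * x ^ (-1 - ε) :=
    h0.trans (mul_le_mul_of_nonneg_left (rpow_shrink hx (by linarith)) (hCm 0).le)
  calc ‖gd m x‖ ≤ ‖deriv m x * (x : ℂ)‖ + ‖m (x : ℂ)‖ := norm_add_le _ _
    _ ≤ Cm 1 * x ^ (-1 - ε) + Cm 0 * x ^ (-1 - ε) := add_le_add hA hB
    _ = (Cm 0 + Cm 1) * x ^ (-1 - ε) := by ring

lemma lemA (hε0 : 0 < ε) (hε1 : ε < 1)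
    (hholo : DifferentiableOn ℂ m {z : ℂ | |z.im| < 1})
    (heven : ∀ z : ℂ, m (-z) = m z)
    (hsymb : ∀ (α : ℕ) (z : ℂ), |z.im| ≤ 1 →
      ‖iteratedDeriv α m z‖ ≤ Cm α * (1 + |z.re|) ^ (-1 - ε - (α : ℝ)))
    (hCm : ∀ α, 0 < Cm α)
    (ha : 0 < a) :
    ∃ G : ℂ,
      Tendsto (fun L : ℝ => ∫ x in (-L)..L, f m a x) atTop (𝓝 G) ∧
      ‖G‖ ≤ 2 * (2 * Cm 0 + (Cm 0 + Cm 1) / ε) * a ^ (ε - 1) := by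
  have ha' : (a : ℂ) ≠ 0 := Complex.ofReal_ne_zero.mpr ha.ne'
  set r : ℝ := a⁻¹ with hr_def
  have hr : 0 < r := inv_pos.mpr ha
  -- integration by parts on [r, L]
  have h_ibp : ∀ L : ℝ, (∫ x in r..L, f m a x) =
      m r * r * (Complex.cos (r * a) / a) - m L * L * (Complex.cos (L * a) / a)
        + ∫ x in r..L, gc m a x := by
    intro L
    have h1 := intervalIntegral.integral_mul_deriv_eq_deriv_mul
      (a := r) (b := L)
      (u := fun x : ℝ => m x * x) (u' := gd m)
      (v := fun x : ℝ => -Complex.cos (x * a) / a) (v' := fun x : ℝ => Complex.sin (x * a))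
      (fun x _ => hasDerivAt_g hholo x) (fun x _ => hasDerivAt_v ha.ne' x)
      ((cont_gd hholo).intervalIntegrable _ _)
      ((Complex.continuous_sin.comp
        (Complex.continuous_ofReal.mul continuous_const)).intervalIntegrable _ _)
    have h2 : (∫ x in r..L, gd m x * (-Complex.cos (x * a) / a)) =
        -∫ x in r..L, gc m a x := by
      rw [← intervalIntegral.integral_neg]
      apply intervalIntegral.integral_congr
      intro x _
      show gd m x * (-Complex.cos (x * a) / a) = -(gd m x * (Complex.cos (x * a) / a))
      ring
    rw [h2] at h1
    show (∫ x in r..L, (m x * x) * Complex.sin (x * a)) = _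
    rw [h1]
    ring
  -- integrability of gc on (r, ∞)
  have h_gc_bound : ∀ x : ℝ, x ∈ Ioi r → ‖gc m a x‖ ≤ ((Cm 0 + Cm 1) / a) * x ^ (-1 - ε) := by
    intro x hx
    have hx0 : 0 < x := hr.trans hx
    have hcos : ‖Complex.cos ((x : ℂ) * a) / a‖ ≤ 1 / a := by
      rw [norm_div, Complex.norm_real, Real.norm_eq_abs, abs_of_pos ha]
      gcongr
      exact norm_cos_le _ (by simp)
    calc ‖gc m a x‖ = ‖gd m x‖ * ‖Complex.cos ((x : ℂ) * a) / a‖ := norm_mul _ _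
      _ ≤ ((Cm 0 + Cm 1) * x ^ (-1 - ε)) * (1 / a) := by
          exact mul_le_mul (norm_gd_le hε0 hsymb hCm hx0) hcos (norm_nonneg _)
            (mul_nonneg (by linarith [hCm 0, hCm 1]) (Real.rpow_nonneg hx0.le _))
      _ = ((Cm 0 + Cm 1) / a) * x ^ (-1 - ε) := by ring
  have h_int : IntegrableOn (gc m a) (Ioi r) := by
    refine Integrable.mono' (g := fun x => ((Cm 0 + Cm 1) / a) * x ^ (-1 - ε)) ?_ ?_ ?_
    · exact ((integrableOn_Ioi_rpow_of_lt (by linarith) hr).const_mul _)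
    · exact ((cont_gc hholo).aestronglyMeasurable).restrict
    · rw [ae_restrict_iff' measurableSet_Ioi]
      exact ae_of_all _ h_gc_bound
  -- the three pieces of the limit
  set c1 : ℂ := ∫ x in (0:ℝ)..r, f m a x with hc1
  set c2 : ℂ := m r * r * (Complex.cos (r * a) / a) with hc2
  set cI : ℂ := ∫ x in Ioi r, gc m a x with hcI
  refine ⟨2 * (c1 + c2 + cI), ?_, ?_⟩
  · -- the limit
    have hB0 : Tendsto (fun L : ℝ => m L * L * (Complex.cos (L * a) / a)) atTop (𝓝 0) := by
      have hgt : Tendsto (fun L : ℝ => (Cm 0 / a) * L ^ (-ε)) atTop (𝓝 0) := by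
        have := (tendsto_rpow_neg_atTop hε0).const_mul (Cm 0 / a)
        simpa using this
      refine squeeze_zero_norm' ?_ hgt
      · filter_upwards [eventually_gt_atTop 0] with L hL
        have hcos : ‖Complex.cos ((L : ℂ) * a) / a‖ ≤ 1 / a := by
          rw [norm_div, Complex.norm_real, Real.norm_eq_abs, abs_of_pos ha]
          gcongr
          exact norm_cos_le _ (by simp)
        calc ‖m L * L * (Complex.cos ((L : ℂ) * a) / a)‖
            = ‖m L * (L : ℂ)‖ * ‖Complex.cos ((L : ℂ) * a) / a‖ := norm_mul _ _
          _ ≤ (Cm 0 * L ^ (-ε)) * (1 / a) := by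
              exact mul_le_mul (norm_mx_le hε0 hsymb hCm hL) hcos (norm_nonneg _)
                (mul_nonneg (hCm 0).le (Real.rpow_nonneg hL.le _))
          _ = (Cm 0 / a) * L ^ (-ε) := by ring
    have hT : Tendsto (fun L : ℝ => ∫ x in r..L, gc m a x) atTop (𝓝 cI) :=
      intervalIntegral_tendsto_integral_Ioi r h_int tendsto_id
    have hmain : Tendsto (fun L : ℝ =>
        2 * (c1 + (c2 - m L * L * (Complex.cos (L * a) / a) + ∫ x in r..L, gc m a x)))
        atTop (𝓝 (2 * (c1 + (c2 - 0 + cI)))) := by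
      exact (((tendsto_const_nhds.sub hB0).add hT).const_add c1).const_mul 2
    have heq : (2 : ℂ) * (c1 + (c2 - 0 + cI)) = 2 * (c1 + c2 + cI) := by ring
    rw [heq] at hmain
    refine hmain.congr' ?_
    filter_upwards [eventually_ge_atTop r] with L hL
    rw [even_fold hholo heven L]
    have hsplit : (∫ x in (0:ℝ)..L, f m a x) = c1 + ∫ x in r..L, f m a x := by
      rw [hc1, intervalIntegral.integral_add_adjacent_intervals
        ((cont_f hholo).intervalIntegrable _ _) ((cont_f hholo).intervalIntegrable _ _)]
    rw [hsplit, h_ibp L]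
  · -- the norm bound
    have hb1 : ‖c1‖ ≤ Cm 0 * a ^ (ε - 1) := by
      have hbound : ∀ x ∈ Set.uIoc (0:ℝ) r, ‖f m a x‖ ≤ Cm 0 * a * r ^ (1 - ε) := by
        intro x hx
        rw [uIoc_of_le hr.le] at hx
        have hx0 : 0 < x := hx.1
        calc ‖f m a x‖ = ‖m x * (x : ℂ)‖ * ‖Complex.sin ((x : ℂ) * a)‖ := norm_mul _ _
          _ ≤ (Cm 0 * x ^ (-ε)) * (x * a) := by
              exact mul_le_mul (norm_mx_le hε0 hsymb hCm hx0)
                (norm_sin_le hx0.le ha.le) (norm_nonneg _)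
                (mul_nonneg (hCm 0).le (Real.rpow_nonneg hx0.le _))
          _ = Cm 0 * a * (x ^ (-ε) * x) := by ring
          _ = Cm 0 * a * x ^ (1 - ε) := by
              rw [rpow_mul_self hx0, show -ε + 1 = 1 - ε by ring]
          _ ≤ Cm 0 * a * r ^ (1 - ε) := by
              exact mul_le_mul_of_nonneg_left
                (Real.rpow_le_rpow hx0.le hx.2 (by linarith))
                (mul_nonneg (hCm 0).le ha.le)
      have h := intervalIntegral.norm_integral_le_of_norm_le_const hbound
      rw [sub_zero, abs_of_pos hr] at h
      refine h.trans (le_of_eq ?_)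
      rw [hr_def, inv_rpow' ha, show -(1 - ε) = ε - 1 by ring]
      have : a * a ^ (ε - 1) * a⁻¹ = a ^ (ε - 1) := by
        field_simp
      calc Cm 0 * a * a ^ (ε - 1) * a⁻¹ = Cm 0 * (a * a ^ (ε - 1) * a⁻¹) := by ring
        _ = Cm 0 * a ^ (ε - 1) := by rw [this]
    have hb2 : ‖c2‖ ≤ Cm 0 * a ^ (ε - 1) := by
      have hcos : ‖Complex.cos ((r : ℂ) * a) / a‖ ≤ 1 / a := by
        rw [norm_div, Complex.norm_real, Real.norm_eq_abs, abs_of_pos ha]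
        gcongr
        exact norm_cos_le _ (by simp)
      calc ‖c2‖ = ‖m r * (r : ℂ)‖ * ‖Complex.cos ((r : ℂ) * a) / a‖ := norm_mul _ _
        _ ≤ (Cm 0 * r ^ (-ε)) * (1 / a) := by
            exact mul_le_mul (norm_mx_le hε0 hsymb hCm hr) hcos (norm_nonneg _)
              (mul_nonneg (hCm 0).le (Real.rpow_nonneg hr.le _))
        _ = Cm 0 * a ^ (ε - 1) := by
            rw [hr_def, inv_rpow' ha, neg_neg, Real.rpow_sub ha, Real.rpow_one]
            ring
    have hb3 : ‖cI‖ ≤ ((Cm 0 + Cm 1) / ε) * a ^ (ε - 1) := by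
      have h := norm_integral_le_of_norm_le
        (((integrableOn_Ioi_rpow_of_lt (show -1 - ε < -1 by linarith) hr).const_mul
          ((Cm 0 + Cm 1) / a)))
        ((ae_restrict_iff' measurableSet_Ioi).mpr (ae_of_all _ h_gc_bound))
      refine h.trans (le_of_eq ?_)
      rw [MeasureTheory.integral_const_mul, integral_Ioi_rpow_of_lt (by linarith) hr]
      rw [show -1 - ε + 1 = -ε by ring, neg_div_neg_eq]
      rw [hr_def, inv_rpow' ha, neg_neg, Real.rpow_sub ha, Real.rpow_one]
      ring
    have hnorm : ‖(2 : ℂ) * (c1 + c2 + cI)‖ = 2 * ‖c1 + c2 + cI‖ := by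
      rw [norm_mul]
      norm_num
    rw [hnorm]
    calc 2 * ‖c1 + c2 + cI‖ ≤ 2 * (‖c1‖ + ‖c2‖ + ‖cI‖) := by
          refine mul_le_mul_of_nonneg_left ?_ (by norm_num)
          exact (norm_add_le _ _).trans (add_le_add (norm_add_le _ _) le_rfl)
      _ ≤ 2 * ((Cm 0 * a ^ (ε - 1)) + (Cm 0 * a ^ (ε - 1)) + ((Cm 0 + Cm 1) / ε) * a ^ (ε - 1)) := by
          refine mul_le_mul_of_nonneg_left ?_ (by norm_num)
          exact add_le_add (add_le_add hb1 hb2) hb3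
      _ = 2 * (2 * Cm 0 + (Cm 0 + Cm 1) / ε) * a ^ (ε - 1) := by ring

end A

namespace B

variable (m) in
noncomputable def fu (a : ℝ) : ℂ → ℂ := fun z => m z * z * Complex.exp (Complex.I * z * a)

variable (m) in
noncomputable def u2 (c : ℝ) : ℝ → ℂ :=
  fun x => m (x + c * Complex.I) * (x + c * Complex.I)

variable (m) in
noncomputable def hd (c : ℝ) : ℝ → ℂ :=
  fun x => deriv m (x + c * Complex.I) * (x + c * Complex.I) + m (x + c * Complex.I)

variable (m) in
noncomputable def hdd (c : ℝ) : ℝ → ℂ :=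
  fun x => deriv (deriv m) (x + c * Complex.I) * (x + c * Complex.I)
    + 2 * deriv m (x + c * Complex.I)

noncomputable def ev (a c : ℝ) : ℝ → ℂ :=
  fun x => Complex.exp (Complex.I * (x + c * Complex.I) * a)

lemma im_line (x c : ℝ) : ((x : ℂ) + c * Complex.I).im = c := by simp

lemma re_line (x c : ℝ) : ((x : ℂ) + c * Complex.I).re = x := by simp

lemma norm_line_le (x c : ℝ) (hc : |c| ≤ 1) : ‖(x : ℂ) + c * Complex.I‖ ≤ 1 + |x| := by
  refine (norm_add_le _ _).trans ?_
  rw [Complex.norm_real, Real.norm_eq_abs, norm_mul, Complex.norm_real, Real.norm_eq_abs,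
    Complex.norm_I, mul_one]
  linarith

lemma norm_ev (a c x : ℝ) : ‖ev a c x‖ = Real.exp (-(c * a)) := by
  rw [ev, Complex.norm_exp]
  congr 1
  simp [mul_comm]

lemma norm_u2_le (hε0 : 0 < ε)
    (hsymb : ∀ (α : ℕ) (z : ℂ), |z.im| ≤ 1 →
      ‖iteratedDeriv α m z‖ ≤ Cm α * (1 + |z.re|) ^ (-1 - ε - (α : ℝ)))
    (hCm : ∀ α, 0 < Cm α) {c : ℝ} (hc : |c| ≤ 1) (x : ℝ) :
    ‖u2 m c x‖ ≤ Cm 0 * (1 + |x|) ^ (-ε) := by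
  have h1x : (0:ℝ) < 1 + |x| := by positivity
  have h0 := bound0 hsymb (z := (x : ℂ) + c * Complex.I) (by rw [im_line]; exact hc)
  rw [re_line] at h0
  calc ‖u2 m c x‖ ≤ (Cm 0 * (1 + |x|) ^ (-1 - ε)) * (1 + |x|) := by
        rw [u2, norm_mul]
        exact mul_le_mul h0 (norm_line_le x c hc) (norm_nonneg _)
          (mul_nonneg (hCm 0).le (Real.rpow_nonneg h1x.le _))
    _ = Cm 0 * (1 + |x|) ^ (-ε) := by
        rw [mul_assoc, rpow_mul_self h1x, show -1 - ε + 1 = -ε by ring]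

lemma norm_hd_le (hε0 : 0 < ε)
    (hsymb : ∀ (α : ℕ) (z : ℂ), |z.im| ≤ 1 →
      ‖iteratedDeriv α m z‖ ≤ Cm α * (1 + |z.re|) ^ (-1 - ε - (α : ℝ)))
    (hCm : ∀ α, 0 < Cm α) {c : ℝ} (hc : |c| ≤ 1) (x : ℝ) :
    ‖hd m c x‖ ≤ (Cm 0 + Cm 1) * (1 + |x|) ^ (-1 - ε) := by
  have h1x : (0:ℝ) < 1 + |x| := by positivity
  have h0 := bound0 hsymb (z := (x : ℂ) + c * Complex.I) (by rw [im_line]; exact hc)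
  have h1 := bound1 hsymb (z := (x : ℂ) + c * Complex.I) (by rw [im_line]; exact hc)
  rw [re_line] at h0 h1
  have hA : ‖deriv m ((x:ℂ) + c * Complex.I) * ((x:ℂ) + c * Complex.I)‖
      ≤ Cm 1 * (1 + |x|) ^ (-1 - ε) := by
    calc ‖deriv m ((x:ℂ) + c * Complex.I) * ((x:ℂ) + c * Complex.I)‖
        ≤ (Cm 1 * (1 + |x|) ^ (-2 - ε)) * (1 + |x|) := by
          rw [norm_mul]
          exact mul_le_mul h1 (norm_line_le x c hc) (norm_nonneg _)
            (mul_nonneg (hCm 1).le (Real.rpow_nonneg h1x.le _))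
      _ = Cm 1 * (1 + |x|) ^ (-1 - ε) := by
          rw [mul_assoc, rpow_mul_self h1x, show -2 - ε + 1 = -1 - ε by ring]
  have hB : ‖m ((x:ℂ) + c * Complex.I)‖ ≤ Cm 0 * (1 + |x|) ^ (-1 - ε) := by
    refine h0.trans (mul_le_mul_of_nonneg_left ?_ (hCm 0).le)
    exact Real.rpow_le_rpow_of_exponent_le (by linarith [abs_nonneg x]) (by linarith)
  calc ‖hd m c x‖ ≤ _ + _ := norm_add_le _ _
    _ ≤ Cm 1 * (1 + |x|) ^ (-1 - ε) + Cm 0 * (1 + |x|) ^ (-1 - ε) := add_le_add hA hB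
    _ = (Cm 0 + Cm 1) * (1 + |x|) ^ (-1 - ε) := by ring

lemma norm_hdd_le (hε0 : 0 < ε)
    (hsymb : ∀ (α : ℕ) (z : ℂ), |z.im| ≤ 1 →
      ‖iteratedDeriv α m z‖ ≤ Cm α * (1 + |z.re|) ^ (-1 - ε - (α : ℝ)))
    (hCm : ∀ α, 0 < Cm α) {c : ℝ} (hc : |c| ≤ 1) (x : ℝ) :
    ‖hdd m c x‖ ≤ (2 * Cm 1 + Cm 2) * (1 + |x|) ^ (-2 - ε) := by
  have h1x : (0:ℝ) < 1 + |x| := by positivity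
  have h1 := bound1 hsymb (z := (x : ℂ) + c * Complex.I) (by rw [im_line]; exact hc)
  have h2 := bound2 hsymb (z := (x : ℂ) + c * Complex.I) (by rw [im_line]; exact hc)
  rw [re_line] at h1 h2
  have hA : ‖deriv (deriv m) ((x:ℂ) + c * Complex.I) * ((x:ℂ) + c * Complex.I)‖
      ≤ Cm 2 * (1 + |x|) ^ (-2 - ε) := by
    calc ‖deriv (deriv m) ((x:ℂ) + c * Complex.I) * ((x:ℂ) + c * Complex.I)‖
        ≤ (Cm 2 * (1 + |x|) ^ (-3 - ε)) * (1 + |x|) := by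
          rw [norm_mul]
          exact mul_le_mul h2 (norm_line_le x c hc) (norm_nonneg _)
            (mul_nonneg (hCm 2).le (Real.rpow_nonneg h1x.le _))
      _ = Cm 2 * (1 + |x|) ^ (-2 - ε) := by
          rw [mul_assoc, rpow_mul_self h1x, show -3 - ε + 1 = -2 - ε by ring]
  have hB : ‖(2:ℂ) * deriv m ((x:ℂ) + c * Complex.I)‖ ≤ 2 * (Cm 1 * (1 + |x|) ^ (-2 - ε)) := by
    rw [norm_mul]
    have : ‖(2:ℂ)‖ = 2 := by norm_num
    rw [this]
    exact mul_le_mul_of_nonneg_left h1 (by norm_num)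
  calc ‖hdd m c x‖ ≤ _ + _ := norm_add_le _ _
    _ ≤ Cm 2 * (1 + |x|) ^ (-2 - ε) + 2 * (Cm 1 * (1 + |x|) ^ (-2 - ε)) := add_le_add hA hB
    _ = (2 * Cm 1 + Cm 2) * (1 + |x|) ^ (-2 - ε) := by ring

lemma mem_strip {x c : ℝ} (hc : |c| < 1) : |((x : ℂ) + c * Complex.I).im| < 1 := by
  rw [im_line]; exact hc

lemma diffAt_deriv (hholo : DifferentiableOn ℂ m {z : ℂ | |z.im| < 1}) {z : ℂ}
    (hz : |z.im| < 1) : DifferentiableAt ℂ (deriv m) z :=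
  (((hholo.analyticOnNhd isOpen_strip).deriv) z hz).differentiableAt

lemma diffAt_deriv2 (hholo : DifferentiableOn ℂ m {z : ℂ | |z.im| < 1}) {z : ℂ}
    (hz : |z.im| < 1) : DifferentiableAt ℂ (deriv (deriv m)) z :=
  ((((hholo.analyticOnNhd isOpen_strip).deriv).deriv) z hz).differentiableAt

lemma cont_line_id (c : ℝ) : Continuous fun x : ℝ => (x : ℂ) + c * Complex.I :=
  Complex.continuous_ofReal.add continuous_const

lemma cont_line {c : ℝ} (hc : |c| < 1) {F : ℂ → ℂ}
    (hF : ∀ z : ℂ, |z.im| < 1 → DifferentiableAt ℂ F z) :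
    Continuous fun x : ℝ => F ((x : ℂ) + c * Complex.I) := by
  have heq : (fun x : ℝ => F ((x : ℂ) + c * Complex.I))
      = F ∘ (fun x : ℝ => (x : ℂ) + c * Complex.I) := rfl
  rw [heq, continuous_iff_continuousAt]
  intro x
  refine ContinuousAt.comp (g := F) (f := fun x : ℝ => (x : ℂ) + c * Complex.I)
    ?_ ((cont_line_id c).continuousAt)
  exact (hF _ (mem_strip hc)).continuousAt

lemma cont_u2 (hholo : DifferentiableOn ℂ m {z : ℂ | |z.im| < 1}) {c : ℝ} (hc : |c| < 1) :
    Continuous (u2 m c) :=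
  (cont_line hc fun _ hz => diffAt hholo hz).mul (cont_line_id c)

lemma cont_hd (hholo : DifferentiableOn ℂ m {z : ℂ | |z.im| < 1}) {c : ℝ} (hc : |c| < 1) :
    Continuous (hd m c) :=
  ((cont_line hc fun _ hz => diffAt_deriv hholo hz).mul (cont_line_id c)).add
    (cont_line hc fun _ hz => diffAt hholo hz)

lemma cont_hdd (hholo : DifferentiableOn ℂ m {z : ℂ | |z.im| < 1}) {c : ℝ} (hc : |c| < 1) :
    Continuous (hdd m c) :=
  ((cont_line hc fun _ hz => diffAt_deriv2 hholo hz).mul (cont_line_id c)).add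
    (continuous_const.mul (cont_line hc fun _ hz => diffAt_deriv hholo hz))

lemma cont_ev (a c : ℝ) : Continuous (ev a c) :=
  Complex.continuous_exp.comp ((continuous_const.mul (cont_line_id c)).mul continuous_const)

lemma hasDerivAt_inner (c : ℝ) (x : ℝ) :
    HasDerivAt (fun w : ℂ => w + c * Complex.I) 1 x :=
  (hasDerivAt_id _).add_const _

lemma hasDerivAt_u2 (hholo : DifferentiableOn ℂ m {z : ℂ | |z.im| < 1}) {c : ℝ}
    (hc : |c| < 1) (x : ℝ) : HasDerivAt (u2 m c) (hd m c x) x := by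
  have h1 : HasDerivAt (fun w : ℂ => m (w + c * Complex.I))
      (deriv m ((x : ℂ) + c * Complex.I)) x := by
    have := ((diffAt hholo (mem_strip (x := x) hc)).hasDerivAt).comp (x : ℂ)
      (hasDerivAt_inner c x)
    simpa [Function.comp_def] using this
  have h2 := h1.mul (hasDerivAt_inner c x)
  have h3 := h2.comp_ofReal
  rw [show u2 m c = fun y : ℝ => m (↑y + ↑c * Complex.I) * (↑y + ↑c * Complex.I) from rfl]
  simpa [hd] using h3

lemma hasDerivAt_hd (hholo : DifferentiableOn ℂ m {z : ℂ | |z.im| < 1}) {c : ℝ}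
    (hc : |c| < 1) (x : ℝ) : HasDerivAt (hd m c) (hdd m c x) x := by
  have h1 : HasDerivAt (fun w : ℂ => deriv m (w + c * Complex.I))
      (deriv (deriv m) ((x : ℂ) + c * Complex.I)) x := by
    have := ((diffAt_deriv hholo (mem_strip (x := x) hc)).hasDerivAt).comp (x : ℂ)
      (hasDerivAt_inner c x)
    simpa [Function.comp_def] using this
  have h1' : HasDerivAt (fun w : ℂ => m (w + c * Complex.I))
      (deriv m ((x : ℂ) + c * Complex.I)) x := by
    have := ((diffAt hholo (mem_strip (x := x) hc)).hasDerivAt).comp (x : ℂ)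
      (hasDerivAt_inner c x)
    simpa [Function.comp_def] using this
  have h2 := (h1.mul (hasDerivAt_inner c x)).add h1'
  have h3 := h2.comp_ofReal
  have heq : deriv (deriv m) ((x : ℂ) + c * Complex.I) * ((x : ℂ) + c * Complex.I)
      + deriv m ((x : ℂ) + c * Complex.I) * 1 + deriv m ((x : ℂ) + c * Complex.I)
      = hdd m c x := by
    rw [hdd]; ring
  rw [heq] at h3
  exact h3

lemma hasDerivAt_ev {a : ℝ} (ha : 0 < a) (c : ℝ) (x : ℝ) :
    HasDerivAt (fun y : ℝ => ev a c y / (Complex.I * a)) (ev a c x) x := by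
  have hIa : Complex.I * (a : ℂ) ≠ 0 :=
    mul_ne_zero Complex.I_ne_zero (Complex.ofReal_ne_zero.mpr ha.ne')
  have hinner : HasDerivAt (fun w : ℂ => Complex.I * (w + c * Complex.I) * a)
      (Complex.I * 1 * a) x :=
    ((hasDerivAt_inner c x).const_mul Complex.I).mul_const _
  have h1 := ((Complex.hasDerivAt_exp _).comp (x : ℂ) hinner).div_const (Complex.I * a)
  have heq : Complex.exp (Complex.I * ((x : ℂ) + c * Complex.I) * a) * (Complex.I * 1 * a)
      / (Complex.I * a) = Complex.exp (Complex.I * ((x : ℂ) + c * Complex.I) * a) := by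
    field_simp [Complex.ofReal_ne_zero.mpr ha.ne']
  rw [heq] at h1
  have h2 := h1.comp_ofReal
  simpa [ev, Function.comp] using h2

lemma cont_fu (hholo : DifferentiableOn ℂ m {z : ℂ | |z.im| < 1}) (a : ℝ) :
    Continuous fun x : ℝ => fu m a ((x : ℂ) + (0:ℝ) * Complex.I) := by
  simp only [fu, Complex.ofReal_zero, zero_mul, add_zero]
  exact ((cont_m_real hholo).mul Complex.continuous_ofReal).mul
    (Complex.continuous_exp.comp
      ((continuous_const.mul Complex.continuous_ofReal).mul continuous_const))

lemma odd_cos_zero (hholo : DifferentiableOn ℂ m {z : ℂ | |z.im| < 1})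
    (heven : ∀ z : ℂ, m (-z) = m z) (a L : ℝ) :
    (∫ x in (-L)..L, m x * x * Complex.cos (x * a)) = 0 := by
  set fc : ℝ → ℂ := fun x => m x * x * Complex.cos (x * a) with hfc
  have hcont : Continuous fc :=
    ((cont_m_real hholo).mul Complex.continuous_ofReal).mul
      (Complex.continuous_cos.comp (Complex.continuous_ofReal.mul continuous_const))
  have h2 : (∫ x in (-L)..(0:ℝ), fc x) = -∫ x in (0:ℝ)..L, fc x := by
    have h3 := intervalIntegral.integral_comp_neg (a := 0) (b := L) fc
    rw [neg_zero] at h3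
    rw [← h3, ← intervalIntegral.integral_neg]
    apply intervalIntegral.integral_congr
    intro x _
    show m ↑(-x) * ↑(-x) * Complex.cos (↑(-x) * ↑a) = -(m ↑x * ↑x * Complex.cos (↑x * ↑a))
    rw [Complex.ofReal_neg, heven, neg_mul, Complex.cos_neg]
    ring
  rw [← intervalIntegral.integral_add_adjacent_intervals
    (hcont.intervalIntegrable (-L) 0) (hcont.intervalIntegrable 0 L), h2]
  ring

lemma horiz_eq (hholo : DifferentiableOn ℂ m {z : ℂ | |z.im| < 1})
    (heven : ∀ z : ℂ, m (-z) = m z) (a L : ℝ) :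
    (∫ x in (-L)..L, fu m a ((x : ℂ) + (0:ℝ) * Complex.I))
      = (∫ x in (-L)..L, A.f m a x) * Complex.I := by
  have hcos : Continuous fun x : ℝ => m x * x * Complex.cos (x * a) :=
    ((cont_m_real hholo).mul Complex.continuous_ofReal).mul
      (Complex.continuous_cos.comp (Complex.continuous_ofReal.mul continuous_const))
  have hsin : Continuous fun x : ℝ => m x * x * Complex.sin (x * a) :=
    ((cont_m_real hholo).mul Complex.continuous_ofReal).mul
      (Complex.continuous_sin.comp (Complex.continuous_ofReal.mul continuous_const))
  have hpt : ∀ x : ℝ, fu m a ((x : ℂ) + (0:ℝ) * Complex.I)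
      = m x * x * Complex.cos (x * a) + (m x * x * Complex.sin (x * a)) * Complex.I := by
    intro x
    rw [fu]
    simp only [Complex.ofReal_zero, zero_mul, add_zero]
    rw [show Complex.I * (x : ℂ) * (a : ℝ) = ((x : ℂ) * (a : ℝ)) * Complex.I by ring,
      Complex.exp_mul_I]
    ring
  rw [intervalIntegral.integral_congr (g :=
      fun x : ℝ => m x * x * Complex.cos (x * a) + (m x * x * Complex.sin (x * a)) * Complex.I)
      (fun x _ => hpt x)]
  rw [intervalIntegral.integral_add (g := fun x : ℝ => m x * x * Complex.sin (x * a) * Complex.I)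
    (hcos.intervalIntegrable _ _) ((hsin.mul continuous_const).intervalIntegrable _ _)]
  rw [odd_cos_zero hholo heven a L, intervalIntegral.integral_mul_const]
  show (0 : ℂ) + _ = _
  rw [zero_add]
  rfl

lemma diffAt_fu (hholo : DifferentiableOn ℂ m {z : ℂ | |z.im| < 1}) (a : ℝ) {z : ℂ}
    (hz : |z.im| < 1) : DifferentiableAt ℂ (fu m a) z := by
  refine ((diffAt hholo hz).mul differentiableAt_id).mul ?_
  exact (Complex.differentiable_exp _).comp z
    ((differentiableAt_id.const_mul _).mul_const _)

lemma contOn_fu (hcont : ContinuousOn m {z : ℂ | |z.im| ≤ 1}) (a : ℝ) :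
    ContinuousOn (fu m a) {z : ℂ | |z.im| ≤ 1} := by
  refine (hcont.mul continuousOn_id).mul ?_
  exact (Complex.continuous_exp.comp
    ((continuous_const.mul continuous_id).mul continuous_const)).continuousOn

lemma rect_eq (hcont : ContinuousOn m {z : ℂ | |z.im| ≤ 1})
    (hholo : DifferentiableOn ℂ m {z : ℂ | |z.im| < 1})
    {a c : ℝ} (hc0 : 0 ≤ c) (hc1 : c < 1) (L : ℝ) :
    (∫ x in (-L)..L, fu m a ((x : ℂ) + (0:ℝ) * Complex.I))
      = (∫ x in (-L)..L, fu m a ((x : ℂ) + (c : ℝ) * Complex.I))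
        + Complex.I • (∫ y in (0:ℝ)..c, fu m a ((-L : ℝ) + (y : ℂ) * Complex.I))
        - Complex.I • (∫ y in (0:ℝ)..c, fu m a ((L : ℝ) + (y : ℂ) * Complex.I)) := by
  have key := Complex.integral_boundary_rect_eq_zero_of_continuousOn_of_differentiableOn
    (fu m a) (((-L : ℝ) : ℂ)) ((L : ℂ) + (c : ℝ) * Complex.I) ?_ ?_
  · have hre1 : (((-L : ℝ) : ℂ)).re = -L := Complex.ofReal_re _
    have him1 : (((-L : ℝ) : ℂ)).im = 0 := Complex.ofReal_im _
    have hre2 : ((L : ℂ) + (c : ℝ) * Complex.I).re = L := re_line L c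
    have him2 : ((L : ℂ) + (c : ℝ) * Complex.I).im = c := im_line L c
    rw [hre1, him1, hre2, him2] at key
    simp only [smul_eq_mul] at key ⊢
    linear_combination key
  · refine (contOn_fu hcont a).mono ?_
    intro z' hz'
    rw [Complex.mem_reProdIm] at hz'
    have h2 := hz'.2
    rw [Complex.ofReal_im, im_line, uIcc_of_le hc0] at h2
    show |z'.im| ≤ 1
    rw [abs_le]
    exact ⟨by linarith [h2.1], by linarith [h2.2, hc1.le]⟩
  · intro z' hz'
    rw [Complex.mem_reProdIm] at hz'
    have h2 := hz'.2
    rw [Complex.ofReal_im, im_line, min_eq_left hc0, max_eq_right hc0] at h2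
    refine (diffAt_fu hholo a ?_).differentiableWithinAt
    rw [abs_lt]
    exact ⟨by linarith [h2.1], by linarith [h2.2, hc1]⟩

lemma vert_norm (hε0 : 0 < ε)
    (hsymb : ∀ (α : ℕ) (z : ℂ), |z.im| ≤ 1 →
      ‖iteratedDeriv α m z‖ ≤ Cm α * (1 + |z.re|) ^ (-1 - ε - (α : ℝ)))
    (hCm : ∀ α, 0 < Cm α) {a c : ℝ} (ha : 0 < a) (hc0 : 0 ≤ c) (hc1 : c ≤ 1) (E : ℝ) :
    ‖∫ y in (0:ℝ)..c, fu m a ((E : ℝ) + (y : ℂ) * Complex.I)‖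
      ≤ Cm 0 * (1 + |E|) ^ (-ε) := by
  have hC : (0:ℝ) ≤ Cm 0 * (1 + |E|) ^ (-ε) :=
    mul_nonneg (hCm 0).le (Real.rpow_nonneg (by positivity) _)
  have hbd : ∀ y ∈ Set.uIoc (0:ℝ) c, ‖fu m a ((E : ℝ) + (y : ℂ) * Complex.I)‖
      ≤ Cm 0 * (1 + |E|) ^ (-ε) := by
    intro y hy
    rw [uIoc_of_le hc0] at hy
    have hy1 : |y| ≤ 1 := by rw [abs_of_pos hy.1]; exact hy.2.trans hc1
    have hsplit : fu m a ((E : ℝ) + (y : ℂ) * Complex.I) = u2 m y E * ev a y E := rfl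
    rw [hsplit, norm_mul, norm_ev]
    calc ‖u2 m y E‖ * Real.exp (-(y * a))
        ≤ (Cm 0 * (1 + |E|) ^ (-ε)) * 1 := by
          refine mul_le_mul (norm_u2_le hε0 hsymb hCm hy1 E) ?_ (Real.exp_nonneg _) hC
          rw [Real.exp_le_one_iff]
          nlinarith [hy.1.le, ha.le]
      _ = Cm 0 * (1 + |E|) ^ (-ε) := mul_one _
  have h := intervalIntegral.norm_integral_le_of_norm_le_const hbd
  rw [sub_zero, abs_of_nonneg hc0] at h
  refine h.trans ?_
  nlinarith [hC]

lemma bound_to_zero (hε0 : 0 < ε) (K : ℝ) {p : ℝ} (hp : 0 < p) :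
    Tendsto (fun L : ℝ => K * (1 + L) ^ (-p)) atTop (𝓝 0) := by
  have h1 : Tendsto (fun L : ℝ => (1 + L)) atTop atTop :=
    tendsto_atTop_add_const_left _ 1 tendsto_id
  have h2 := (tendsto_rpow_neg_atTop hp).comp h1
  have h3 := h2.const_mul K
  simpa using h3

lemma vert_tendsto (hε0 : 0 < ε)
    (hsymb : ∀ (α : ℕ) (z : ℂ), |z.im| ≤ 1 →
      ‖iteratedDeriv α m z‖ ≤ Cm α * (1 + |z.re|) ^ (-1 - ε - (α : ℝ)))
    (hCm : ∀ α, 0 < Cm α) {a c : ℝ} (ha : 0 < a) (hc0 : 0 ≤ c) (hc1 : c ≤ 1) :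
    Tendsto (fun L : ℝ => ∫ y in (0:ℝ)..c, fu m a ((L : ℝ) + (y : ℂ) * Complex.I))
      atTop (𝓝 0) ∧
    Tendsto (fun L : ℝ => ∫ y in (0:ℝ)..c, fu m a ((-L : ℝ) + (y : ℂ) * Complex.I))
      atTop (𝓝 0) := by
  constructor
  · refine squeeze_zero_norm' ?_ (bound_to_zero hε0 (Cm 0) hε0)
    filter_upwards [eventually_ge_atTop (0:ℝ)] with L hL
    have := vert_norm hε0 hsymb hCm ha hc0 hc1 L
    rwa [abs_of_nonneg hL] at this
  · refine squeeze_zero_norm' ?_ (bound_to_zero hε0 (Cm 0) hε0)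
    filter_upwards [eventually_ge_atTop (0:ℝ)] with L hL
    have := vert_norm hε0 hsymb hCm ha hc0 hc1 (-L)
    rwa [abs_neg, abs_of_nonneg hL] at this

lemma lemBc (hε0 : 0 < ε) (hε1 : ε < 1)
    (hcont : ContinuousOn m {z : ℂ | |z.im| ≤ 1})
    (hholo : DifferentiableOn ℂ m {z : ℂ | |z.im| < 1})
    (heven : ∀ z : ℂ, m (-z) = m z)
    (hsymb : ∀ (α : ℕ) (z : ℂ), |z.im| ≤ 1 →
      ‖iteratedDeriv α m z‖ ≤ Cm α * (1 + |z.re|) ^ (-1 - ε - (α : ℝ)))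
    (hCm : ∀ α, 0 < Cm α)
    {a : ℝ} (ha : 0 < a) {c : ℝ} (hc0 : 0 < c) (hc1 : c < 1) {G : ℂ}
    (hG : Tendsto (fun L : ℝ => ∫ x in (-L)..L, A.f m a x) atTop (𝓝 G)) :
    ‖G‖ ≤ Real.pi * (2 * Cm 1 + Cm 2) * Real.exp (-(c * a)) / a ^ 2 := by
  have hIa : Complex.I * (a : ℂ) ≠ 0 :=
    mul_ne_zero Complex.I_ne_zero (Complex.ofReal_ne_zero.mpr ha.ne')
  have hnIa : ‖Complex.I * (a : ℂ)‖ = a := by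
    rw [norm_mul, Complex.norm_I, one_mul, Complex.norm_real, Real.norm_eq_abs, abs_of_pos ha]
  have hc1' : |c| < 1 := by rw [abs_of_pos hc0]; exact hc1
  have hK : (0:ℝ) ≤ 2 * Cm 1 + Cm 2 := by linarith [hCm 1, hCm 2]
  -- integrable majorant for hdd * ev
  have hmaj : Integrable
      (fun x : ℝ => ((2 * Cm 1 + Cm 2) * Real.exp (-(c * a))) * (1 + x ^ 2)⁻¹) volume :=
    integrable_inv_one_add_sq.const_mul _
  have hptw : ∀ x : ℝ, ‖hdd m c x * ev a c x‖
      ≤ ((2 * Cm 1 + Cm 2) * Real.exp (-(c * a))) * (1 + x ^ 2)⁻¹ := by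
    intro x
    have h1x : (0:ℝ) < 1 + |x| := by positivity
    rw [norm_mul, norm_ev]
    have h1 : ‖hdd m c x‖ ≤ (2 * Cm 1 + Cm 2) * (1 + x ^ 2)⁻¹ := by
      refine (norm_hdd_le hε0 hsymb hCm hc1'.le x).trans ?_
      refine mul_le_mul_of_nonneg_left ?_ hK
      calc (1 + |x|) ^ (-2 - ε) ≤ (1 + |x|) ^ (-2 : ℝ) :=
            Real.rpow_le_rpow_of_exponent_le (by linarith [abs_nonneg x]) (by linarith)
        _ = ((1 + |x|) ^ (2:ℕ))⁻¹ := by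
            rw [show (-2:ℝ) = -((2:ℕ):ℝ) by norm_num, Real.rpow_neg h1x.le, Real.rpow_natCast]
        _ ≤ (1 + x ^ 2)⁻¹ := by
            refine inv_anti₀ (by positivity) ?_
            nlinarith [abs_nonneg x, sq_abs x]
    calc ‖hdd m c x‖ * Real.exp (-(c * a))
        ≤ ((2 * Cm 1 + Cm 2) * (1 + x ^ 2)⁻¹) * Real.exp (-(c * a)) :=
          mul_le_mul_of_nonneg_right h1 (Real.exp_nonneg _)
      _ = ((2 * Cm 1 + Cm 2) * Real.exp (-(c * a))) * (1 + x ^ 2)⁻¹ := by ring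
  have hInt2 : Integrable (fun x : ℝ => hdd m c x * ev a c x) volume := by
    refine hmaj.mono' ?_ (ae_of_all _ hptw)
    exact ((cont_hdd hholo hc1').mul (cont_ev a c)).aestronglyMeasurable
  set W2 : ℂ := ∫ x : ℝ, hdd m c x * ev a c x with hW2def
  have hW2 : ‖W2‖ ≤ (2 * Cm 1 + Cm 2) * Real.exp (-(c * a)) * Real.pi := by
    refine (norm_integral_le_of_norm_le hmaj (ae_of_all _ hptw)).trans ?_
    rw [integral_const_mul, integral_univ_inv_one_add_sq]
  -- boundary decay
  have hev_div : ∀ x : ℝ, ‖ev a c x / (Complex.I * a)‖ ≤ 1 / a := by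
    intro x
    rw [norm_div, norm_ev, hnIa]
    gcongr
    rw [Real.exp_le_one_iff]
    nlinarith [hc0.le, ha.le]
  have bd_u2 : ∀ s : ℝ, s = 1 ∨ s = -1 →
      Tendsto (fun L : ℝ => u2 m c (s * L) * (ev a c (s * L) / (Complex.I * a)))
        atTop (𝓝 0) := by
    intro s hs
    refine squeeze_zero_norm' ?_ (bound_to_zero hε0 (Cm 0 * (1 / a)) hε0)
    filter_upwards [eventually_ge_atTop (0:ℝ)] with L hL
    have habs : |s * L| = L := by
      rcases hs with h | h <;> rw [h] <;> simp [abs_of_nonneg hL]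
    calc ‖u2 m c (s * L) * (ev a c (s * L) / (Complex.I * a))‖
        ≤ (Cm 0 * (1 + |s * L|) ^ (-ε)) * (1 / a) := by
          rw [norm_mul]
          exact mul_le_mul (norm_u2_le hε0 hsymb hCm hc1'.le _) (hev_div _) (norm_nonneg _)
            (mul_nonneg (hCm 0).le (Real.rpow_nonneg (by positivity) _))
      _ = Cm 0 * (1 / a) * (1 + L) ^ (-ε) := by rw [habs]; ring
  have bd_hd : ∀ s : ℝ, s = 1 ∨ s = -1 →
      Tendsto (fun L : ℝ => hd m c (s * L) * (ev a c (s * L) / (Complex.I * a)))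
        atTop (𝓝 0) := by
    intro s hs
    refine squeeze_zero_norm' ?_
      (bound_to_zero hε0 ((Cm 0 + Cm 1) * (1 / a)) (show (0:ℝ) < 1 + ε by linarith))
    filter_upwards [eventually_ge_atTop (0:ℝ)] with L hL
    have habs : |s * L| = L := by
      rcases hs with h | h <;> rw [h] <;> simp [abs_of_nonneg hL]
    calc ‖hd m c (s * L) * (ev a c (s * L) / (Complex.I * a))‖
        ≤ ((Cm 0 + Cm 1) * (1 + |s * L|) ^ (-1 - ε)) * (1 / a) := by
          rw [norm_mul]
          exact mul_le_mul (norm_hd_le hε0 hsymb hCm hc1'.le _) (hev_div _) (norm_nonneg _)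
            (mul_nonneg (by linarith [hCm 0, hCm 1]) (Real.rpow_nonneg (by positivity) _))
      _ = (Cm 0 + Cm 1) * (1 / a) * (1 + L) ^ (-(1 + ε)) := by
          rw [habs, show -1 - ε = -(1 + ε) by ring]; ring
  -- integration by parts identities
  have conv_div : ∀ (F : ℝ → ℂ) (L : ℝ), (∫ x in (-L)..L, F x * (ev a c x / (Complex.I * a)))
      = (∫ x in (-L)..L, F x * ev a c x) / (Complex.I * a) := by
    intro F L
    rw [← intervalIntegral.integral_div]
    apply intervalIntegral.integral_congr
    intro x _
    simp [mul_div_assoc]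
  have ibp2 : ∀ L : ℝ, (∫ x in (-L)..L, hd m c x * ev a c x)
      = hd m c L * (ev a c L / (Complex.I * a))
        - hd m c (-L) * (ev a c (-L) / (Complex.I * a))
        - (∫ x in (-L)..L, hdd m c x * ev a c x) / (Complex.I * a) := by
    intro L
    have h1 := intervalIntegral.integral_mul_deriv_eq_deriv_mul (a := -L) (b := L)
      (u := hd m c) (u' := hdd m c)
      (v := fun x => ev a c x / (Complex.I * a)) (v' := ev a c)
      (fun x _ => hasDerivAt_hd hholo hc1' x) (fun x _ => hasDerivAt_ev ha c x)
      ((cont_hdd hholo hc1').intervalIntegrable _ _)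
      ((cont_ev a c).intervalIntegrable _ _)
    rw [h1, conv_div]
  have ibp1 : ∀ L : ℝ, (∫ x in (-L)..L, u2 m c x * ev a c x)
      = u2 m c L * (ev a c L / (Complex.I * a))
        - u2 m c (-L) * (ev a c (-L) / (Complex.I * a))
        - (∫ x in (-L)..L, hd m c x * ev a c x) / (Complex.I * a) := by
    intro L
    have h1 := intervalIntegral.integral_mul_deriv_eq_deriv_mul (a := -L) (b := L)
      (u := u2 m c) (u' := hd m c)
      (v := fun x => ev a c x / (Complex.I * a)) (v' := ev a c)
      (fun x _ => hasDerivAt_u2 hholo hc1' x) (fun x _ => hasDerivAt_ev ha c x)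
      ((cont_hd hholo hc1').intervalIntegrable _ _)
      ((cont_ev a c).intervalIntegrable _ _)
    rw [h1, conv_div]
  -- limits
  have T2 : Tendsto (fun L : ℝ => ∫ x in (-L)..L, hdd m c x * ev a c x) atTop (𝓝 W2) :=
    intervalIntegral_tendsto_integral hInt2 tendsto_neg_atTop_atBot tendsto_id
  have T1 : Tendsto (fun L : ℝ => ∫ x in (-L)..L, hd m c x * ev a c x) atTop
      (𝓝 (0 - 0 - W2 / (Complex.I * a))) := by
    refine Tendsto.congr (fun L => (ibp2 L).symm) ?_
    have h1 := bd_hd 1 (Or.inl rfl)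
    have h2 := bd_hd (-1) (Or.inr rfl)
    simp only [one_mul, neg_one_mul] at h1 h2
    exact (h1.sub h2).sub (T2.div_const _)
  have T0 : Tendsto (fun L : ℝ => ∫ x in (-L)..L, u2 m c x * ev a c x) atTop
      (𝓝 (0 - 0 - (0 - 0 - W2 / (Complex.I * a)) / (Complex.I * a))) := by
    refine Tendsto.congr (fun L => (ibp1 L).symm) ?_
    have h1 := bd_u2 1 (Or.inl rfl)
    have h2 := bd_u2 (-1) (Or.inr rfl)
    simp only [one_mul, neg_one_mul] at h1 h2
    exact (h1.sub h2).sub (T1.div_const _)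
  -- assemble via the rectangle
  have e1 : ∀ L : ℝ, (∫ x in (-L)..L, fu m a ((x : ℂ) + (c : ℝ) * Complex.I))
      = ∫ x in (-L)..L, u2 m c x * ev a c x := by
    intro L
    apply intervalIntegral.integral_congr
    intro x _
    rfl
  obtain ⟨vp, vm⟩ := vert_tendsto hε0 hsymb hCm ha hc0.le hc1.le (a := a) (c := c)
  have T0' : Tendsto (fun L : ℝ => ∫ x in (-L)..L, fu m a ((x : ℂ) + (0:ℝ) * Complex.I))
      atTop (𝓝 ((0 - 0 - (0 - 0 - W2 / (Complex.I * a)) / (Complex.I * a))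
        + Complex.I • 0 - Complex.I • 0)) := by
    refine Tendsto.congr (fun L => (rect_eq hcont hholo hc0.le hc1 L).symm) ?_
    have h3 : Tendsto (fun L : ℝ => ∫ x in (-L)..L, fu m a ((x : ℂ) + (c : ℝ) * Complex.I))
        atTop (𝓝 (0 - 0 - (0 - 0 - W2 / (Complex.I * a)) / (Complex.I * a))) :=
      Tendsto.congr (fun L => (e1 L).symm) T0
    exact (h3.add (vm.const_smul Complex.I)).sub (vp.const_smul Complex.I)
  have T0'' : Tendsto (fun L : ℝ => ∫ x in (-L)..L, fu m a ((x : ℂ) + (0:ℝ) * Complex.I))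
      atTop (𝓝 (G * Complex.I)) := by
    refine Tendsto.congr (fun L => (horiz_eq hholo heven a L).symm) ?_
    exact hG.mul_const _
  have huniq : G * Complex.I = W2 / (Complex.I * a) / (Complex.I * a) := by
    have h := tendsto_nhds_unique T0'' T0'
    rw [h]
    simp only [smul_zero, sub_zero, zero_sub, add_zero]
    ring
  calc ‖G‖ = ‖G * Complex.I‖ := by rw [norm_mul, Complex.norm_I, mul_one]
    _ = ‖W2‖ / a / a := by rw [huniq, norm_div, norm_div, hnIa]
    _ ≤ ((2 * Cm 1 + Cm 2) * Real.exp (-(c * a)) * Real.pi) / a / a := by gcongr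
    _ = Real.pi * (2 * Cm 1 + Cm 2) * Real.exp (-(c * a)) / a ^ 2 := by
        rw [sq]
        field_simp

lemma lemB (hε0 : 0 < ε) (hε1 : ε < 1)
    (hcont : ContinuousOn m {z : ℂ | |z.im| ≤ 1})
    (hholo : DifferentiableOn ℂ m {z : ℂ | |z.im| < 1})
    (heven : ∀ z : ℂ, m (-z) = m z)
    (hsymb : ∀ (α : ℕ) (z : ℂ), |z.im| ≤ 1 →
      ‖iteratedDeriv α m z‖ ≤ Cm α * (1 + |z.re|) ^ (-1 - ε - (α : ℝ)))
    (hCm : ∀ α, 0 < Cm α)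
    {a : ℝ} (ha : 0 < a) {G : ℂ}
    (hG : Tendsto (fun L : ℝ => ∫ x in (-L)..L, A.f m a x) atTop (𝓝 G)) :
    ‖G‖ ≤ Real.pi * (2 * Cm 1 + Cm 2) * Real.exp (-a) / a ^ 2 := by
  set φ : ℝ → ℝ := fun c => Real.pi * (2 * Cm 1 + Cm 2) * Real.exp (-(c * a)) / a ^ 2 with hφ
  have hφc : Continuous φ := by
    apply Continuous.div_const
    exact continuous_const.mul (Real.continuous_exp.comp (continuous_id.mul continuous_const).neg)
  have hc : Tendsto (fun n : ℕ => (1:ℝ) - ((n:ℝ) + 2)⁻¹) atTop (𝓝 1) := by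
    have h1 : Tendsto (fun n : ℕ => ((n:ℝ) + 2)) atTop atTop :=
      tendsto_atTop_add_const_right _ 2 tendsto_natCast_atTop_atTop
    have h2 := tendsto_inv_atTop_zero.comp h1
    have h3 := (tendsto_const_nhds (x := (1:ℝ))).sub h2
    simpa using h3
  have hseq : Tendsto (fun n : ℕ => φ ((1:ℝ) - ((n:ℝ) + 2)⁻¹)) atTop (𝓝 (φ 1)) :=
    (hφc.continuousAt.tendsto).comp hc
  have hev : ∀ n : ℕ, ‖G‖ ≤ φ ((1:ℝ) - ((n:ℝ) + 2)⁻¹) := by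
    intro n
    have hn2 : (0:ℝ) < (n:ℝ) + 2 := by positivity
    have hle : ((n:ℝ) + 2)⁻¹ ≤ 1 / 2 := by
      rw [inv_eq_one_div]
      refine one_div_le_one_div_of_le (by norm_num) ?_
      have := Nat.cast_nonneg (α := ℝ) n
      linarith
    have hpos : (0:ℝ) < ((n:ℝ) + 2)⁻¹ := by positivity
    exact lemBc hε0 hε1 hcont hholo heven hsymb hCm ha
      (by linarith) (by linarith) hG
  have h := ge_of_tendsto hseq (Eventually.of_forall hev)
  simp only [hφ, one_mul] at h
  exact h

end B

lemma lemF (hε0 : 0 < ε) (hε1 : ε < 1)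
    (hcont : ContinuousOn m {z : ℂ | |z.im| ≤ 1})
    (hholo : DifferentiableOn ℂ m {z : ℂ | |z.im| < 1})
    (heven : ∀ z : ℂ, m (-z) = m z)
    (hsymb : ∀ (α : ℕ) (z : ℂ), |z.im| ≤ 1 →
      ‖iteratedDeriv α m z‖ ≤ Cm α * (1 + |z.re|) ^ (-1 - ε - (α : ℝ)))
    (hCm : ∀ α, 0 < Cm α)
    {b : ℝ} (hb : b ≠ 0) :
    ∃ G : ℂ, Tendsto (fun L : ℝ => ∫ x in (-L)..L, A.f m b x) atTop (𝓝 G) ∧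
      ‖G‖ ≤ 2 * (2 * Cm 0 + (Cm 0 + Cm 1) / ε) * |b| ^ (ε - 1) ∧
      ‖G‖ ≤ Real.pi * (2 * Cm 1 + Cm 2) * Real.exp (-|b|) / b ^ 2 := by
  rcases hb.lt_or_gt with hneg | hpos
  · have hpos : 0 < -b := by linarith
    obtain ⟨G, hT, hA⟩ := A.lemA hε0 hε1 hholo heven hsymb hCm hpos
    have hB := B.lemB hε0 hε1 hcont hholo heven hsymb hCm hpos hT
    refine ⟨-G, ?_, ?_, ?_⟩
    · have heqf : ∀ L : ℝ, (∫ x in (-L)..L, A.f m b x)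
          = -(∫ x in (-L)..L, A.f m (((-b : ℝ) : ℂ)) x) := by
        intro L
        rw [← intervalIntegral.integral_neg]
        apply intervalIntegral.integral_congr
        intro x _
        show m x * x * Complex.sin ((x : ℂ) * ((b : ℝ) : ℂ))
          = -(m x * x * Complex.sin ((x : ℂ) * (((-b : ℝ)) : ℂ)))
        push_cast
        rw [show (x : ℂ) * -(b : ℂ) = -((x : ℂ) * b) by ring, Complex.sin_neg]
        ring
      exact Tendsto.congr (fun L => (heqf L).symm) hT.neg
    · rw [norm_neg, abs_of_neg hneg]; exact hA
    · rw [norm_neg, abs_of_neg hneg, show b ^ 2 = (-b) ^ 2 by ring]; exact hB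
  · obtain ⟨G, hT, hA⟩ := A.lemA hε0 hε1 hholo heven hsymb hCm hpos
    have hB := B.lemB hε0 hε1 hcont hholo heven hsymb hCm hpos hT
    exact ⟨G, hT, by rwa [abs_of_pos hpos], by rwa [abs_of_pos hpos]⟩

lemma wave_split (hholo : DifferentiableOn ℂ m {z : ℂ | |z.im| < 1}) (t s L : ℝ) :
    waveIntegral m t s L = (∫ x in (-L)..L, A.f m (((s + t : ℝ)) : ℂ) x) / 2
      + (∫ x in (-L)..L, A.f m (((s - t : ℝ)) : ℂ) x) / 2 := by
  rw [waveIntegral]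
  have h : ∀ lam : ℝ, lam ∈ uIcc (-L) L →
      m lam * lam * Complex.sin (lam * s) * Complex.cos (lam * t)
      = A.f m (((s + t : ℝ)) : ℂ) lam / 2 + A.f m (((s - t : ℝ)) : ℂ) lam / 2 := by
    intro lam _
    show m lam * lam * Complex.sin (lam * s) * Complex.cos (lam * t)
      = (m lam * lam * Complex.sin ((lam : ℂ) * ((s + t : ℝ) : ℂ))) / 2
        + (m lam * lam * Complex.sin ((lam : ℂ) * ((s - t : ℝ) : ℂ))) / 2
    push_cast
    rw [show (lam : ℂ) * ((s : ℂ) + t) = lam * s + lam * t by ring,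
      show (lam : ℂ) * ((s : ℂ) - t) = lam * s - lam * t by ring,
      Complex.sin_add, Complex.sin_sub]
    ring
  rw [intervalIntegral.integral_congr h,
    intervalIntegral.integral_add
      (((A.cont_f hholo).div_const (2:ℂ)).intervalIntegrable _ _)
      (((A.cont_f hholo).div_const (2:ℂ)).intervalIntegrable _ _),
    intervalIntegral.integral_div, intervalIntegral.integral_div]

end Stmt12


set_option maxHeartbeats 1000000 in
/-- Let `0 < ε < 1` and let `m` be an even symbol of order `−1−ε` on
the strip `{|Im λ| ≤ 1}`. For `t > 0`, `s > 0` let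
`K_t(s) = (sinh s)⁻¹ lim_{L→∞} ∫_{−L}^{L} m(λ) λ sin(λs) cos(λt) dλ`. Then for every
`0 < t < 1/2` and every `s > 0` with `s ≠ t` the limit exists, and there is `C > 0`
(depending only on `ε` and finitely many `C_α`) such that
`|K_t(s)| ≤ C e^{−2s}(s−t)^{−2}` for `s ≥ 1` and
`|K_t(s)| ≤ C (s^{−2+ε} + s^{−1}|t−s|^{−1+ε})` for `0 < s ≤ 1`. -/
theorem stmt_12 (ε : ℝ) (hε0 : 0 < ε) (hε1 : ε < 1) (m : ℂ → ℂ)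
    (hcont : ContinuousOn m {z : ℂ | |z.im| ≤ 1})
    (hholo : DifferentiableOn ℂ m {z : ℂ | |z.im| < 1})
    (hsmoothUp : ContDiff ℝ (⊤ : ℕ∞) fun x : ℝ => m (x + Complex.I))
    (hsmoothDown : ContDiff ℝ (⊤ : ℕ∞) fun x : ℝ => m (x - Complex.I))
    (heven : ∀ z : ℂ, m (-z) = m z)
    (Cm : ℕ → ℝ) (hCm : ∀ α, 0 < Cm α)
    (hsymb : ∀ (α : ℕ) (z : ℂ), |z.im| ≤ 1 →
      ‖iteratedDeriv α m z‖ ≤ Cm α * (1 + |z.re|) ^ (-1 - ε - (α : ℝ))) :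
    (∀ t s : ℝ, 0 < t → t < 1 / 2 → 0 < s → s ≠ t →
      ∃ I : ℂ, Tendsto (fun L => waveIntegral m t s L) atTop (nhds I)) ∧
    ∃ C : ℝ, 0 < C ∧
      ∀ (t s : ℝ) (I : ℂ), 0 < t → t < 1 / 2 → 0 < s → s ≠ t →
        Tendsto (fun L => waveIntegral m t s L) atTop (nhds I) →
        (1 ≤ s →
          ‖((Real.sinh s : ℂ))⁻¹ * I‖ ≤ C * Real.exp (-2 * s) * ((s - t) ^ 2)⁻¹) ∧
        (s ≤ 1 →
          ‖((Real.sinh s : ℂ))⁻¹ * I‖ ≤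
            C * (s ^ (-2 + ε) + s⁻¹ * |t - s| ^ (-1 + ε))) := by
  set KA : ℝ := 2 * (2 * Cm 0 + (Cm 0 + Cm 1) / ε) with hKAdef
  set KB : ℝ := Real.pi * (2 * Cm 1 + Cm 2) with hKBdef
  have hKApos : 0 < KA := by
    have h0 := hCm 0
    have h1 := hCm 1
    have : 0 < (Cm 0 + Cm 1) / ε := div_pos (by linarith) hε0
    rw [hKAdef]; linarith
  have hKBpos : 0 < KB := by
    have h1 := hCm 1
    have h2 := hCm 2
    exact mul_pos Real.pi_pos (by linarith)
  have construct : ∀ t s : ℝ, 0 < t → t < 1 / 2 → 0 < s → s ≠ t →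
      ∃ G1 G2 : ℂ,
        Tendsto (fun L => waveIntegral m t s L) atTop (nhds (G1 / 2 + G2 / 2)) ∧
        (‖G1‖ ≤ KA * |s + t| ^ (ε - 1) ∧ ‖G1‖ ≤ KB * Real.exp (-|s + t|) / (s + t) ^ 2) ∧
        (‖G2‖ ≤ KA * |s - t| ^ (ε - 1) ∧ ‖G2‖ ≤ KB * Real.exp (-|s - t|) / (s - t) ^ 2) := by
    intro t s ht ht2 hs hst
    have hb1 : (s + t) ≠ 0 := by positivity
    have hb2 : (s - t) ≠ 0 := sub_ne_zero.mpr hst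
    obtain ⟨G1, hT1, hA1, hB1⟩ := Stmt12.lemF hε0 hε1 hcont hholo heven hsymb hCm hb1
    obtain ⟨G2, hT2, hA2, hB2⟩ := Stmt12.lemF hε0 hε1 hcont hholo heven hsymb hCm hb2
    refine ⟨G1, G2, ?_, ⟨hA1, hB1⟩, ⟨hA2, hB2⟩⟩
    refine Tendsto.congr (fun L => (Stmt12.wave_split hholo t s L).symm) ?_
    exact (hT1.div_const 2).add (hT2.div_const 2)
  constructor
  · intro t s ht ht2 hs hst
    obtain ⟨G1, G2, hT, -, -⟩ := construct t s ht ht2 hs hst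
    exact ⟨_, hT⟩
  · refine ⟨KA + 6 * KB + 1, by linarith, ?_⟩
    intro t s I ht ht2 hs hst hTend
    obtain ⟨G1, G2, hT, ⟨hA1, hB1⟩, ⟨hA2, hB2⟩⟩ := construct t s ht ht2 hs hst
    have hI : I = G1 / 2 + G2 / 2 := tendsto_nhds_unique hTend hT
    have hsinh_pos : 0 < Real.sinh s := Real.sinh_pos_iff.mpr hs
    have hnorm : ‖((Real.sinh s : ℂ))⁻¹ * I‖ = (Real.sinh s)⁻¹ * ‖I‖ := by
      rw [norm_mul, norm_inv, Complex.norm_real, Real.norm_eq_abs, abs_of_pos hsinh_pos]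
    have h2n : ‖(2:ℂ)‖ = 2 := by norm_num
    have hInorm : ‖I‖ ≤ ‖G1‖ / 2 + ‖G2‖ / 2 := by
      calc ‖I‖ = ‖G1 / 2 + G2 / 2‖ := by rw [hI]
        _ ≤ ‖G1 / 2‖ + ‖G2 / 2‖ := norm_add_le _ _
        _ = ‖G1‖ / 2 + ‖G2‖ / 2 := by rw [norm_div, norm_div, h2n]
    constructor
    · -- large s
      intro hs1
      have hstpos : 0 < s - t := by linarith
      have habs1 : |s + t| = s + t := abs_of_pos (by linarith)
      have habs2 : |s - t| = s - t := abs_of_pos hstpos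
      rw [habs1] at hB1
      rw [habs2] at hB2
      have hG1 : ‖G1‖ ≤ KB * Real.exp (-(s - t)) / (s - t) ^ 2 := by
        refine hB1.trans ?_
        refine div_le_div₀ (by positivity) ?_ (pow_pos hstpos 2) ?_
        · exact mul_le_mul_of_nonneg_left (Real.exp_le_exp.mpr (by linarith)) hKBpos.le
        · nlinarith
      have hI2 : ‖I‖ ≤ KB * Real.exp (-(s - t)) / (s - t) ^ 2 := by
        refine hInorm.trans ?_
        linarith [hG1, hB2]
      have hexp_half : Real.exp ((1:ℝ)/2) ≤ 2 := by
        have hsq : Real.exp ((1:ℝ)/2) * Real.exp ((1:ℝ)/2) = Real.exp 1 := by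
          rw [← Real.exp_add]; norm_num
        nlinarith [Real.exp_one_lt_d9, Real.exp_pos ((1:ℝ)/2)]
      have hexp1 : Real.exp (-(s - t)) ≤ 2 * Real.exp (-s) := by
        have he : Real.exp (-(s - t)) = Real.exp (-s) * Real.exp t := by
          rw [← Real.exp_add]; ring_nf
        rw [he]
        have ht' : Real.exp t ≤ Real.exp ((1:ℝ)/2) := Real.exp_le_exp.mpr (by linarith)
        nlinarith [Real.exp_pos (-s), Real.exp_pos t]
      have hI3 : ‖I‖ ≤ KB * (2 * Real.exp (-s)) / (s - t) ^ 2 := by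
        refine hI2.trans ?_
        refine div_le_div₀ (by positivity) ?_ (pow_pos hstpos 2) le_rfl
        exact mul_le_mul_of_nonneg_left hexp1 hKBpos.le
      have hsinh_inv : (Real.sinh s)⁻¹ ≤ 3 * Real.exp (-s) := by
        have h1 : Real.exp (-s) * Real.exp s = 1 := by rw [← Real.exp_add]; simp
        have h2 : Real.exp (-s) * Real.exp (-s) = Real.exp (-(2 * s)) := by
          rw [← Real.exp_add]; ring_nf
        have h3 : Real.exp (-(2 * s)) ≤ Real.exp (-2) := Real.exp_le_exp.mpr (by linarith)
        have h4 : Real.exp (-2) * Real.exp 1 * Real.exp 1 = 1 := by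
          rw [← Real.exp_add, ← Real.exp_add]; norm_num
        have h5 : (2.7182818283 : ℝ) < Real.exp 1 := Real.exp_one_gt_d9
        have hE2 : (7:ℝ) ≤ Real.exp 1 * Real.exp 1 := by nlinarith
        have h6 : Real.exp (-2) ≤ 1 / 3 := by nlinarith [Real.exp_pos (-2:ℝ), hE2]
        have h7 : 1 ≤ 3 * Real.exp (-s) * Real.sinh s := by
          rw [Real.sinh_eq]
          nlinarith
        rw [inv_eq_one_div, div_le_iff₀ hsinh_pos]
        linarith
      have hexp2 : Real.exp (-2 * s) = Real.exp (-s) * Real.exp (-s) := by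
        rw [← Real.exp_add]; ring_nf
      calc ‖((Real.sinh s : ℂ))⁻¹ * I‖ = (Real.sinh s)⁻¹ * ‖I‖ := hnorm
        _ ≤ (3 * Real.exp (-s)) * (KB * (2 * Real.exp (-s)) / (s - t) ^ 2) := by
            refine mul_le_mul hsinh_inv hI3 (norm_nonneg _) (by positivity)
        _ = (6 * KB) * (Real.exp (-2 * s) * ((s - t) ^ 2)⁻¹) := by
            rw [hexp2]; ring
        _ ≤ (KA + 6 * KB + 1) * (Real.exp (-2 * s) * ((s - t) ^ 2)⁻¹) := by
            refine mul_le_mul_of_nonneg_right (by linarith) (by positivity)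
        _ = (KA + 6 * KB + 1) * Real.exp (-2 * s) * ((s - t) ^ 2)⁻¹ := by ring
    · -- small s
      intro hs1
      have hb2 : s - t ≠ 0 := sub_ne_zero.mpr hst
      have habs1 : |s + t| = s + t := abs_of_pos (by linarith)
      rw [habs1] at hA1
      have habs2 : |s - t| = |t - s| := abs_sub_comm s t
      rw [habs2] at hA2
      have htspos : 0 < |t - s| := by
        rw [← habs2]; exact abs_pos.mpr hb2
      have hG1 : ‖G1‖ ≤ KA * s ^ (ε - 1) := by
        refine hA1.trans (mul_le_mul_of_nonneg_left ?_ hKApos.le)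
        exact Real.rpow_le_rpow_of_nonpos hs (by linarith) (by linarith)
      have hsinv : (Real.sinh s)⁻¹ ≤ s⁻¹ :=
        inv_anti₀ hs (Real.self_lt_sinh_iff.mpr hs).le
      have hss : s⁻¹ * s ^ (ε - 1) = s ^ (ε - 2) := by
        rw [show (ε - 2 : ℝ) = (-1) + (ε - 1) by ring, Real.rpow_add hs, Real.rpow_neg_one]
      have hX : (0:ℝ) ≤ s ^ (ε - 2) := Real.rpow_nonneg hs.le _
      have hY : (0:ℝ) ≤ s⁻¹ * |t - s| ^ (ε - 1) := by positivity
      calc ‖((Real.sinh s : ℂ))⁻¹ * I‖ = (Real.sinh s)⁻¹ * ‖I‖ := hnorm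
        _ ≤ s⁻¹ * (KA * s ^ (ε - 1) + KA * |t - s| ^ (ε - 1)) := by
            refine mul_le_mul hsinv (hInorm.trans (by
              linarith [hG1, hA2, norm_nonneg G1, norm_nonneg G2]))
              (norm_nonneg _) (by positivity)
        _ = KA * (s⁻¹ * s ^ (ε - 1)) + KA * (s⁻¹ * |t - s| ^ (ε - 1)) := by ring
        _ = KA * s ^ (ε - 2) + KA * (s⁻¹ * |t - s| ^ (ε - 1)) := by rw [hss]
        _ ≤ (KA + 6 * KB + 1) * (s ^ (-2 + ε) + s⁻¹ * |t - s| ^ (-1 + ε)) := by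
            rw [show (-2 + ε : ℝ) = ε - 2 by ring, show (-1 + ε : ℝ) = ε - 1 by ring]
            nlinarith [mul_nonneg (show (0:ℝ) ≤ 6 * KB + 1 by linarith)
              (add_nonneg hX hY), hKApos]
end
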